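/- arXiv:q-bio/0611028 — 6 statements merged into one kernel-verified Lean document; each statement's English description precedes it below -/
import Mathlib

section
/- Let T : [0,p] → [0,p] be continuous, C¹ on (0,p), with DT(0) := lim_{x→0, x>0} DT(x) existing, satisfying condition (M), condition (C), Tp < p (coordinatewise) and T0 = 0. If the spectral radius ρ(DT(0)) is at most 1, then for every x ∈ [0,p] the iterates T^m x converge to 0 as m → ∞. -/
open Filter Topology
open Matrix Set ENNReal NNReal

section SmithAux


variable {n : ℕ} {p : Fin n → ℝ} {T : (Fin n → ℝ) → (Fin n → ℝ)}
  {J : (Fin n → ℝ) → Matrix (Fin n) (Fin n) ℝ}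

/-- Derivative of a coordinate of `T` along a segment. -/
lemma seg_hasDerivAt
    (hJ : ∀ x : Fin n → ℝ, (∀ i, 0 < x i ∧ x i < p i) →
      HasFDerivAt T (LinearMap.toContinuousLinearMap (Matrix.toLin' (J x))) x)
    (x y : Fin n → ℝ) (t : ℝ) (hz : ∀ i, 0 < (x + t • (y - x)) i ∧ (x + t • (y - x)) i < p i)
    (i : Fin n) :
    HasDerivAt (fun s => T (x + s • (y - x)) i) ((J (x + t • (y - x)) *ᵥ (y - x)) i) t := by
  have hpath : HasDerivAt (fun s : ℝ => x + s • (y - x)) (y - x) t := by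
    simpa using ((hasDerivAt_id t).smul_const (y - x)).const_add x
  have h1 := (hJ _ hz).comp_hasDerivAt t hpath
  have h2 := (hasDerivAt_pi.1 h1) i
  simpa [Matrix.toLin'_apply] using h2

/-- Upper bound for increments of `T` along a segment whose open part lies in the open box. -/
lemma seg_upper
    (hTcont : ContinuousOn T {x | ∀ i, 0 ≤ x i ∧ x i ≤ p i})
    (hJ : ∀ x : Fin n → ℝ, (∀ i, 0 < x i ∧ x i < p i) →
      HasFDerivAt T (LinearMap.toContinuousLinearMap (Matrix.toLin' (J x))) x)
    (x y : Fin n → ℝ)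
    (hbox : ∀ t ∈ Icc (0:ℝ) 1, ∀ i, 0 ≤ (x + t • (y - x)) i ∧ (x + t • (y - x)) i ≤ p i)
    (hint : ∀ t ∈ Ioo (0:ℝ) 1, ∀ i, 0 < (x + t • (y - x)) i ∧ (x + t • (y - x)) i < p i)
    (i : Fin n) (c : ℝ)
    (hc : ∀ t ∈ Ioo (0:ℝ) 1, (J (x + t • (y - x)) *ᵥ (y - x)) i ≤ c) :
    T y i - T x i ≤ c := by
  set f : ℝ → ℝ := fun t => c * t - T (x + t • (y - x)) i with hf
  have hcont : ContinuousOn f (Icc (0:ℝ) 1) := by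
    apply ContinuousOn.sub (Continuous.continuousOn (by continuity))
    have hpath : Continuous fun t : ℝ => x + t • (y - x) := by continuity
    exact ((continuous_apply i).comp_continuousOn
      (hTcont.comp hpath.continuousOn (fun t ht => hbox t ht)))
  have hderiv : ∀ t ∈ Ioo (0:ℝ) 1,
      HasDerivAt f (c - (J (x + t • (y - x)) *ᵥ (y - x)) i) t := by
    intro t ht
    have h := ((hasDerivAt_id t).const_mul c).sub (seg_hasDerivAt hJ x y t (hint t ht) i)
    rw [mul_one] at h
    exact h
  have hmono : MonotoneOn f (Icc (0:ℝ) 1) := by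
    apply monotoneOn_of_deriv_nonneg (convex_Icc _ _) hcont
    · intro t ht
      rw [interior_Icc] at ht
      exact ((hderiv t ht).differentiableAt).differentiableWithinAt
    · intro t ht
      rw [interior_Icc] at ht
      rw [(hderiv t ht).deriv]
      linarith [hc t ht]
  have h01 := hmono (left_mem_Icc.2 one_pos.le) (right_mem_Icc.2 one_pos.le) one_pos.le
  simp only [hf, zero_smul, add_zero, one_smul, mul_one, mul_zero] at h01
  have : x + (y - x) = y := by ring
  rw [this] at h01
  linarith

/-- Lower bound version. -/
lemma seg_lower
    (hTcont : ContinuousOn T {x | ∀ i, 0 ≤ x i ∧ x i ≤ p i})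
    (hJ : ∀ x : Fin n → ℝ, (∀ i, 0 < x i ∧ x i < p i) →
      HasFDerivAt T (LinearMap.toContinuousLinearMap (Matrix.toLin' (J x))) x)
    (x y : Fin n → ℝ)
    (hbox : ∀ t ∈ Icc (0:ℝ) 1, ∀ i, 0 ≤ (x + t • (y - x)) i ∧ (x + t • (y - x)) i ≤ p i)
    (hint : ∀ t ∈ Ioo (0:ℝ) 1, ∀ i, 0 < (x + t • (y - x)) i ∧ (x + t • (y - x)) i < p i)
    (i : Fin n) (c : ℝ)
    (hc : ∀ t ∈ Ioo (0:ℝ) 1, c ≤ (J (x + t • (y - x)) *ᵥ (y - x)) i) :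
    c ≤ T y i - T x i := by
  set f : ℝ → ℝ := fun t => T (x + t • (y - x)) i - c * t with hf
  have hcont : ContinuousOn f (Icc (0:ℝ) 1) := by
    apply ContinuousOn.sub _ (Continuous.continuousOn (by continuity))
    have hpath : Continuous fun t : ℝ => x + t • (y - x) := by continuity
    exact ((continuous_apply i).comp_continuousOn
      (hTcont.comp hpath.continuousOn (fun t ht => hbox t ht)))
  have hderiv : ∀ t ∈ Ioo (0:ℝ) 1,
      HasDerivAt f ((J (x + t • (y - x)) *ᵥ (y - x)) i - c) t := by
    intro t ht
    have h := (seg_hasDerivAt hJ x y t (hint t ht) i).sub ((hasDerivAt_id t).const_mul c)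
    rw [mul_one] at h
    exact h
  have hmono : MonotoneOn f (Icc (0:ℝ) 1) := by
    apply monotoneOn_of_deriv_nonneg (convex_Icc _ _) hcont
    · intro t ht
      rw [interior_Icc] at ht
      exact ((hderiv t ht).differentiableAt).differentiableWithinAt
    · intro t ht
      rw [interior_Icc] at ht
      rw [(hderiv t ht).deriv]
      linarith [hc t ht]
  have h01 := hmono (left_mem_Icc.2 one_pos.le) (right_mem_Icc.2 one_pos.le) one_pos.le
  simp only [hf, zero_smul, add_zero, one_smul, mul_one, mul_zero] at h01
  have : x + (y - x) = y := by ring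
  rw [this] at h01
  linarith

/-- Interior monotonicity. -/
lemma mono_int
    (hTcont : ContinuousOn T {x | ∀ i, 0 ≤ x i ∧ x i ≤ p i})
    (hJ : ∀ x : Fin n → ℝ, (∀ i, 0 < x i ∧ x i < p i) →
      HasFDerivAt T (LinearMap.toContinuousLinearMap (Matrix.toLin' (J x))) x)
    (hM : ∀ x : Fin n → ℝ, (∀ i, 0 < x i ∧ x i < p i) → ∀ i j, 0 < J x i j)
    (x y : Fin n → ℝ) (hx : ∀ i, 0 < x i ∧ x i < p i) (hy : ∀ i, 0 < y i ∧ y i < p i)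
    (hxy : ∀ i, x i ≤ y i) : ∀ i, T x i ≤ T y i := by
  have hseg : ∀ t ∈ Icc (0:ℝ) 1, ∀ i, 0 < (x + t • (y - x)) i ∧ (x + t • (y - x)) i < p i := by
    intro t ht i
    have h1 : (x + t • (y - x)) i = (1 - t) * x i + t * y i := by
      simp [Pi.add_apply, Pi.smul_apply]; ring
    rw [h1]
    obtain ⟨ht0, ht1⟩ := ht
    have hx1 := (hx i).1; have hy1 := (hy i).1
    have hx2 := (hx i).2; have hy2 := (hy i).2
    constructor
    · have hm : (0:ℝ) < min (x i) (y i) := lt_min hx1 hy1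
      have ha : (1-t) * min (x i) (y i) ≤ (1-t) * x i :=
        mul_le_mul_of_nonneg_left (min_le_left _ _) (by linarith)
      have hb : t * min (x i) (y i) ≤ t * y i :=
        mul_le_mul_of_nonneg_left (min_le_right _ _) ht0
      nlinarith
    · have hm : (0:ℝ) < min (p i - x i) (p i - y i) := lt_min (by linarith) (by linarith)
      have ha : (1-t) * min (p i - x i) (p i - y i) ≤ (1-t) * (p i - x i) :=
        mul_le_mul_of_nonneg_left (min_le_left _ _) (by linarith)
      have hb : t * min (p i - x i) (p i - y i) ≤ t * (p i - y i) :=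
        mul_le_mul_of_nonneg_left (min_le_right _ _) ht0
      nlinarith
  intro i
  have := seg_lower hTcont hJ x y
    (fun t ht j => ⟨(hseg t ht j).1.le, (hseg t ht j).2.le⟩)
    (fun t ht => hseg t ⟨ht.1.le, ht.2.le⟩) i 0 ?_
  · linarith
  · intro t ht
    have hz := hseg t ⟨ht.1.le, ht.2.le⟩
    have hJpos := hM _ hz
    unfold Matrix.mulVec dotProduct
    exact Finset.sum_nonneg fun j _ =>
      mul_nonneg (hJpos i j).le (by simpa using sub_nonneg.2 (hxy j))

/-- Monotonicity on the closed box, by approximation. -/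
lemma mono_box
    (hp : ∀ i, 0 < p i)
    (hTcont : ContinuousOn T {x | ∀ i, 0 ≤ x i ∧ x i ≤ p i})
    (hJ : ∀ x : Fin n → ℝ, (∀ i, 0 < x i ∧ x i < p i) →
      HasFDerivAt T (LinearMap.toContinuousLinearMap (Matrix.toLin' (J x))) x)
    (hM : ∀ x : Fin n → ℝ, (∀ i, 0 < x i ∧ x i < p i) → ∀ i j, 0 < J x i j)
    (x y : Fin n → ℝ) (hx : ∀ i, 0 ≤ x i ∧ x i ≤ p i) (hy : ∀ i, 0 ≤ y i ∧ y i ≤ p i)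
    (hxy : ∀ i, x i ≤ y i) : ∀ i, T x i ≤ T y i := by
  set box : Set (Fin n → ℝ) := {x | ∀ i, 0 ≤ x i ∧ x i ≤ p i} with hbox
  -- approximating sequences
  set c : Fin n → ℝ := fun i => p i / 2 with hc
  set e : ℕ → ℝ := fun k => 1 / (k + 1 : ℝ) with he
  have he0 : ∀ k, 0 < e k := fun k => by positivity
  have he1 : ∀ k, e k ≤ 1 := fun k => by
    rw [he]; rw [div_le_one (by positivity)]; simp
  set xs : ℕ → (Fin n → ℝ) := fun k => (1 - e k) • x + e k • c with hxs
  set ys : ℕ → (Fin n → ℝ) := fun k => (1 - e k) • y + e k • c with hys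
  have hint : ∀ (w : Fin n → ℝ), (∀ i, 0 ≤ w i ∧ w i ≤ p i) → ∀ k i,
      0 < ((1 - e k) • w + e k • c) i ∧ ((1 - e k) • w + e k • c) i < p i := by
    intro w hw k i
    have h1 : ((1 - e k) • w + e k • c) i = (1 - e k) * w i + e k * (p i / 2) := by
      simp [Pi.add_apply, Pi.smul_apply, hc]
    rw [h1]
    have hw1 := (hw i).1; have hw2 := (hw i).2; have := hp i
    have h2 := he0 k; have h3 := he1 k
    constructor
    · nlinarith
    · nlinarith
  have hTs : ∀ k i, T (xs k) i ≤ T (ys k) i := by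
    intro k
    refine mono_int hTcont hJ hM _ _ (hint x hx k) (hint y hy k) ?_
    intro i
    have h2 := he0 k; have h3 := he1 k
    simp only [hxs, hys, Pi.add_apply, Pi.smul_apply, smul_eq_mul]
    nlinarith [hxy i]
  -- pass to the limit
  have hetends : Tendsto e atTop (𝓝 0) := tendsto_one_div_add_atTop_nhds_zero_nat
  have hlim : ∀ (w : Fin n → ℝ), (∀ i, 0 ≤ w i ∧ w i ≤ p i) →
      Tendsto (fun k => T ((1 - e k) • w + e k • c)) atTop (𝓝 (T w)) := by
    intro w hw
    have h1 : Tendsto (fun k => (1 - e k) • w + e k • c) atTop (𝓝 w) := by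
      have := ((hetends.const_sub 1).smul_const w).add (hetends.smul_const c)
      simpa using this
    have h2 : Tendsto (fun k => (1 - e k) • w + e k • c) atTop (𝓝[box] w) := by
      apply tendsto_nhdsWithin_of_tendsto_nhds_of_eventually_within _ h1
      exact Eventually.of_forall fun k => fun i => ⟨(hint w hw k i).1.le, (hint w hw k i).2.le⟩
    exact (hTcont w hw).tendsto.comp h2
  intro i
  exact le_of_tendsto_of_tendsto'
    ((continuous_apply i).continuousAt.tendsto.comp (hlim x hx))
    ((continuous_apply i).continuousAt.tendsto.comp (hlim y hy))
    (fun k => hTs k i)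

/-- `J0` dominates `J x` entrywise for `x` in the open box. -/
lemma J0_ge {J0 : Matrix (Fin n) (Fin n) ℝ}
    (hp : ∀ i, 0 < p i)
    (hJ0 : Tendsto J (𝓝[{x | ∀ i, 0 < x i ∧ x i < p i}] 0) (𝓝 J0))
    (hC : ∀ x y : Fin n → ℝ, (∀ i, 0 < x i) → (∀ i, x i < y i) → (∀ i, y i < p i) →
      (∀ i j, J y i j ≤ J x i j) ∧ J y ≠ J x)
    (x : Fin n → ℝ) (hx : ∀ i, 0 < x i ∧ x i < p i) :
    ∀ i j, J x i j ≤ J0 i j := by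
  set S : Set (Fin n → ℝ) := {x | ∀ i, 0 < x i ∧ x i < p i} with hS
  -- the filter 𝓝[S] 0 is nontrivial
  have hmem : ∀ k : ℕ, (fun i => p i / (k + 2 : ℝ)) ∈ S := by
    intro k i
    have := hp i
    constructor
    · positivity
    · rw [div_lt_iff₀ (by positivity)]
      nlinarith [hp i, (Nat.cast_nonneg (α := ℝ) k)]
  have htend : Tendsto (fun k : ℕ => (fun i => p i / (k + 2 : ℝ))) atTop (𝓝 0) := by
    rw [tendsto_pi_nhds]
    intro i
    simp only [Pi.zero_apply]
    have : Tendsto (fun k : ℕ => (1 : ℝ) / (k + 2 : ℝ)) atTop (𝓝 0) := by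
      simp only [one_div]
      exact tendsto_inv_atTop_zero.comp
        (tendsto_atTop_add_const_right atTop 2 tendsto_natCast_atTop_atTop)
    have := this.const_mul (p i)
    simpa [div_eq_mul_inv, mul_comm] using this
  haveI hne : (𝓝[S] (0 : Fin n → ℝ)).NeBot := by
    rw [mem_closure_iff_nhdsWithin_neBot.symm]
    exact mem_closure_of_tendsto htend (Eventually.of_forall hmem)
  intro i j
  have htend2 : Tendsto (fun w => J w i j) (𝓝[S] (0 : Fin n → ℝ)) (𝓝 (J0 i j)) := by
    have : Continuous fun M : Matrix (Fin n) (Fin n) ℝ => M i j := by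
      exact (continuous_apply j).comp (continuous_apply i)
    exact (this.tendsto _).comp hJ0
  apply ge_of_tendsto htend2
  have hUnbhd : {w : Fin n → ℝ | ∀ i, w i < x i} ∈ 𝓝[S] (0 : Fin n → ℝ) := by
    apply nhdsWithin_le_nhds
    have hopen : IsOpen {w : Fin n → ℝ | ∀ i, w i < x i} := by
      have : {w : Fin n → ℝ | ∀ i, w i < x i} = ⋂ i, {w | w i < x i} := by
        ext w; simp [Set.mem_iInter]
      rw [this]
      exact isOpen_iInter_of_finite fun i =>
        isOpen_lt (continuous_apply i) continuous_const
    exact hopen.mem_nhds (by intro i; exact (hx i).1)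
  filter_upwards [hUnbhd, self_mem_nhdsWithin] with w hw hwS
  exact (hC w x (fun i => (hwS i).1) hw (fun i => (hx i).2)).1 i j


attribute [local instance] Matrix.linftyOpNormedAddCommGroup Matrix.linftyOpNormedRing
  Matrix.linftyOpNormedAlgebra

lemma spectral_big {n : ℕ} (J0 : Matrix (Fin n) (Fin n) ℝ) (hn : Nonempty (Fin n))
    (hnn : ∀ i j, 0 ≤ J0 i j) (r : Fin n → ℝ) (hr : ∀ i, 0 < r i)
    (hgrow : ∀ i, r i < (J0 *ᵥ r) i) :
    ∃ μ : ℂ, μ ∈ spectrum ℂ (J0.map Complex.ofReal) ∧ 1 < ‖μ‖ := by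
  haveI := hn
  by_contra hcon
  push_neg at hcon
  -- the minimal growth ratio
  set lam : ℝ := Finset.univ.inf' Finset.univ_nonempty (fun i => (J0 *ᵥ r) i / r i) with hlam
  have hlam1 : 1 < lam := by
    rw [hlam, Finset.lt_inf'_iff]
    intro i _
    exact (one_lt_div (hr i)).2 (hgrow i)
  have hlam0 : 0 < lam := by linarith
  have hlam_le : ∀ i, lam * r i ≤ (J0 *ᵥ r) i := by
    intro i
    have h1 : lam ≤ (J0 *ᵥ r) i / r i := Finset.inf'_le _ (Finset.mem_univ i)
    exact (le_div_iff₀ (hr i)).1 h1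
  -- iterated growth
  have hkey : ∀ m i, lam ^ m * r i ≤ (J0 ^ m *ᵥ r) i := by
    intro m
    induction m with
    | zero => intro i; simp [Matrix.one_mulVec]
    | succ m ih =>
      intro i
      have h1 : J0 ^ (m + 1) *ᵥ r = J0 *ᵥ (J0 ^ m *ᵥ r) := by
        rw [Matrix.mulVec_mulVec, ← pow_succ']
      rw [h1]
      have h2 : ∀ j, J0 i j * (lam ^ m * r j) ≤ J0 i j * (J0 ^ m *ᵥ r) j :=
        fun j => mul_le_mul_of_nonneg_left (ih j) (hnn i j)
      have h3 : (J0 *ᵥ fun j => lam ^ m * r j) i ≤ (J0 *ᵥ (J0 ^ m *ᵥ r)) i := by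
        simp only [Matrix.mulVec, dotProduct]
        exact Finset.sum_le_sum fun j _ => h2 j
      have h4 : (J0 *ᵥ fun j => lam ^ m * r j) i = lam ^ m * (J0 *ᵥ r) i := by
        simp only [Matrix.mulVec, dotProduct, Finset.mul_sum]
        exact Finset.sum_congr rfl fun j _ => by ring
      have h5 := hlam_le i
      have h6 : lam ^ (m+1) * r i = lam ^ m * (lam * r i) := by ring
      rw [h6]
      calc lam ^ m * (lam * r i) ≤ lam ^ m * (J0 *ᵥ r) i :=
            mul_le_mul_of_nonneg_left h5 (by positivity)
        _ = (J0 *ᵥ fun j => lam ^ m * r j) i := h4.symm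
        _ ≤ _ := h3
  -- complexified matrix
  set M : Matrix (Fin n) (Fin n) ℂ := J0.map Complex.ofReal with hM
  have hmappow : ∀ m : ℕ, M ^ m = (J0 ^ m).map Complex.ofReal := by
    intro m
    induction m with
    | zero => simp [hM, Matrix.map_one]
    | succ m ih =>
      rw [pow_succ, pow_succ, ih, hM]
      exact (Matrix.map_mul (f := Complex.ofRealHom)).symm
  -- norm lower bound
  set i1 : Fin n := Classical.arbitrary _ with hi1
  set rc : Fin n → ℂ := fun i => (r i : ℂ) with hrc
  have hrcnorm : 0 < ‖rc‖ := by
    have h1 : ‖rc i1‖ ≤ ‖rc‖ := norm_le_pi_norm rc i1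
    have h2 : ‖rc i1‖ = r i1 := by
      rw [hrc]; simp [Complex.norm_real, abs_of_pos (hr i1)]
    linarith [hr i1]
  have hnormM : ∀ m : ℕ, lam ^ m * r i1 / ‖rc‖ ≤ ‖M ^ m‖ := by
    intro m
    have hcoord : (M ^ m *ᵥ rc) i1 = (((J0 ^ m *ᵥ r) i1 : ℝ) : ℂ) := by
      rw [hmappow]
      simp only [Matrix.mulVec, dotProduct, Matrix.map_apply, hrc]
      push_cast
      rfl
    have h1 : lam ^ m * r i1 ≤ ‖(M ^ m *ᵥ rc) i1‖ := by
      rw [hcoord, Complex.norm_real]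
      exact le_trans (hkey m i1) (le_abs_self _)
    have h2 : ‖(M ^ m *ᵥ rc) i1‖ ≤ ‖M ^ m *ᵥ rc‖ := norm_le_pi_norm _ i1
    have h3 : ‖M ^ m *ᵥ rc‖ ≤ ‖M ^ m‖ * ‖rc‖ := Matrix.linfty_opNorm_mulVec _ _
    rw [div_le_iff₀ hrcnorm]
    linarith
  -- eventual lower bound by lam'
  set lam' : ℝ := (1 + lam) / 2 with hlam'
  have hlam'1 : 1 < lam' := by rw [hlam']; linarith
  have hlam'lam : lam' < lam := by rw [hlam']; linarith
  have hlam'0 : 0 < lam' := by linarith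
  have hev : ∀ᶠ m : ℕ in atTop, lam' ^ m ≤ ‖M ^ m‖ := by
    have hq : 1 < lam / lam' := (one_lt_div hlam'0).2 hlam'lam
    have := tendsto_pow_atTop_atTop_of_one_lt hq
    filter_upwards [this.eventually_ge_atTop (‖rc‖ / (r i1))] with m hm
    have hri : r i1 ≠ 0 := (hr i1).ne'
    have hlp : (0:ℝ) < lam' ^ m := pow_pos hlam'0 m
    have h1 : lam' ^ m * (‖rc‖ / r i1) ≤ lam ^ m := by
      rw [div_pow] at hm
      calc lam' ^ m * (‖rc‖ / r i1) ≤ lam' ^ m * (lam ^ m / lam' ^ m) :=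
            mul_le_mul_of_nonneg_left hm hlp.le
        _ = lam ^ m := by field_simp
    have h2 := hnormM m
    have h3 : lam' ^ m ≤ lam ^ m * r i1 / ‖rc‖ := by
      rw [le_div_iff₀ hrcnorm]
      have h4 : lam' ^ m * (‖rc‖ / r i1) * r i1 ≤ lam ^ m * r i1 :=
        mul_le_mul_of_nonneg_right h1 (hr i1).le
      have h5 : lam' ^ m * (‖rc‖ / r i1) * r i1 = lam' ^ m * ‖rc‖ := by
        field_simp
      linarith
    linarith
  -- Gelfand's formula
  have hgel := spectrum.pow_nnnorm_pow_one_div_tendsto_nhds_spectralRadius M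
  have hL1 : spectralRadius ℂ M ≤ 1 := by
    rw [spectralRadius]
    refine iSup₂_le fun μ hμ => ?_
    have := hcon μ hμ
    have h1 : ‖μ‖₊ ≤ 1 := by
      rw [← norm_toNNReal]
      exact Real.toNNReal_le_one.2 this
    exact_mod_cast h1
  have hL2 : (ENNReal.ofReal lam' : ℝ≥0∞) ≤ spectralRadius ℂ M := by
    refine ge_of_tendsto hgel ?_
    filter_upwards [hev, eventually_ge_atTop 1] with m hm hm1
    have hnn1 : lam'.toNNReal ^ m ≤ ‖M ^ m‖₊ := by
      rw [← norm_toNNReal, ← Real.toNNReal_pow hlam'0.le]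
      exact Real.toNNReal_mono hm
    have hcoe : ((lam'.toNNReal : ℝ≥0∞)) ^ m ≤ (‖M ^ m‖₊ : ℝ≥0∞) := by
      rw [← ENNReal.coe_pow]
      exact_mod_cast hnn1
    have := ENNReal.rpow_le_rpow hcoe (by positivity : (0:ℝ) ≤ 1 / m)
    have heq : ((lam'.toNNReal : ℝ≥0∞) ^ m) ^ (1 / m : ℝ) = (lam'.toNNReal : ℝ≥0∞) := by
      rw [← ENNReal.rpow_natCast _ m, ← ENNReal.rpow_mul, mul_one_div, div_self, ENNReal.rpow_one]
      exact_mod_cast Nat.one_le_iff_ne_zero.1 hm1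
    rw [heq] at this
    exact this
  have : (ENNReal.ofReal lam' : ℝ≥0∞) ≤ 1 := le_trans hL2 hL1
  rw [ENNReal.ofReal_le_one] at this
  linarith
set_option maxHeartbeats 3200000 in
lemma main_contradiction {J0 : Matrix (Fin n) (Fin n) ℝ}
    (hp : ∀ i, 0 < p i)
    (hTcont : ContinuousOn T {x | ∀ i, 0 ≤ x i ∧ x i ≤ p i})
    (hJ : ∀ x : Fin n → ℝ, (∀ i, 0 < x i ∧ x i < p i) →
      HasFDerivAt T (LinearMap.toContinuousLinearMap (Matrix.toLin' (J x))) x)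
    (hJ0 : Tendsto J (𝓝[{x | ∀ i, 0 < x i ∧ x i < p i}] 0) (𝓝 J0))
    (hM : ∀ x : Fin n → ℝ, (∀ i, 0 < x i ∧ x i < p i) → ∀ i j, 0 < J x i j)
    (hC : ∀ x y : Fin n → ℝ, (∀ i, 0 < x i) → (∀ i, x i < y i) → (∀ i, y i < p i) →
      (∀ i j, J y i j ≤ J x i j) ∧ J y ≠ J x)
    (hT0 : T 0 = 0)
    (hρ : ∀ μ : ℂ, μ ∈ spectrum ℂ (J0.map Complex.ofReal) → ‖μ‖ ≤ 1)
    (q : Fin n → ℝ) (hqbox : ∀ i, 0 ≤ q i ∧ q i ≤ p i) (hqltp : ∀ i, q i < p i)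
    (hfix : T q = q) (i0 : Fin n) (hqi0 : 0 < q i0) : False := by
  have hcoord : ∀ (x y : Fin n → ℝ) (t : ℝ) (i : Fin n),
      (x + t • (y - x)) i = x i + t * (y i - x i) := by
    intro x y t i; simp
  -- Step (a) : q is strictly positive
  set z : Fin n → ℝ := fun i => (q i + p i) / 2 with hz
  have hzint : ∀ i, 0 < z i ∧ z i < p i := by
    intro i
    have h1 := (hqbox i).1; have h2 := hqltp i; have h3 := hp i
    constructor <;> (rw [hz]; dsimp only) <;> linarith
  set e : ℕ → ℝ := fun k => 1 / (2 * ((k : ℝ) + 1)) with he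
  have he0 : ∀ k, 0 < e k := fun k => by rw [he]; positivity
  have heh : ∀ k, e k ≤ 1 / 2 := by
    intro k
    rw [he]
    rw [div_le_div_iff₀ (by positivity) (by norm_num)]
    nlinarith [Nat.cast_nonneg (α := ℝ) k]
  set c : Fin n → ℝ := fun i => p i / 2 with hc
  set w : ℕ → (Fin n → ℝ) := fun k => (1 - e k) • q + e k • c with hw
  have hwc : ∀ k i, w k i = (1 - e k) * q i + e k * (p i / 2) := by
    intro k i; rw [hw]; simp [hc]
  have hwint : ∀ k i, 0 < w k i ∧ w k i < p i := by
    intro k i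
    rw [hwc]
    have h1 := (hqbox i).1; have h2 := hqltp i; have h3 := hp i
    have h4 := he0 k; have h5 := heh k
    constructor
    · nlinarith [mul_nonneg (by linarith : (0:ℝ) ≤ 1 - e k) h1]
    · nlinarith [mul_le_mul_of_nonneg_left h2.le (by linarith : (0:ℝ) ≤ 1 - e k)]
  have hwz : ∀ k i, w k i < z i := by
    intro k i
    rw [hwc, hz]
    dsimp only
    have h1 := (hqbox i).1; have h2 := hqltp i; have h3 := hp i
    have h4 := he0 k; have h5 := heh k
    nlinarith [mul_le_mul_of_nonneg_left h2.le (by linarith : (0:ℝ) ≤ 1/2 - e k)]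
  -- lower bound T (w k) ≥ J z *ᵥ w k
  have hlow : ∀ k j, (J z *ᵥ w k) j ≤ T (w k) j := by
    intro k j
    have hseg := seg_lower hTcont hJ (0 : Fin n → ℝ) (w k) ?_ ?_ j ((J z *ᵥ w k) j) ?_
    · rw [hT0] at hseg
      simpa using hseg
    · intro t ht i
      rw [hcoord]
      have h1 := (hwint k i).1; have h2 := (hwint k i).2; have h3 := hp i
      constructor
      · simp only [Pi.zero_apply]
        nlinarith [ht.1, ht.2]
      · simp only [Pi.zero_apply]
        nlinarith [ht.1, ht.2, mul_le_mul_of_nonneg_left h2.le ht.1]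
    · intro t ht i
      rw [hcoord]
      have h1 := (hwint k i).1; have h2 := (hwint k i).2; have h3 := hp i
      constructor
      · simp only [Pi.zero_apply]
        nlinarith [ht.1, ht.2]
      · simp only [Pi.zero_apply]
        nlinarith [ht.1, ht.2, mul_le_mul_of_nonneg_left h2.le ht.1.le]
    · intro t ht
      -- J z ≤ J (point) entrywise
      have hptint : ∀ i, 0 < ((0 : Fin n → ℝ) + t • (w k - 0)) i ∧
          ((0 : Fin n → ℝ) + t • (w k - 0)) i < p i := by
        intro i
        rw [hcoord]
        have h1 := (hwint k i).1; have h2 := (hwint k i).2; have h3 := hp i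
        constructor
        · simp only [Pi.zero_apply]; nlinarith [ht.1, ht.2]
        · simp only [Pi.zero_apply]; nlinarith [ht.1, ht.2, mul_le_mul_of_nonneg_left h2.le ht.1.le]
      have hcmp := hC _ z (fun i => (hptint i).1) ?_ (fun i => (hzint i).2)
      · -- sum comparison
        simp only [Matrix.mulVec, dotProduct]
        refine Finset.sum_le_sum fun l _ => ?_
        have h1 : ((w k : Fin n → ℝ) - 0) l = w k l := by simp
        rw [h1]
        exact mul_le_mul_of_nonneg_right (hcmp.1 j l) (hwint k l).1.le
      · intro i
        rw [hcoord, hz]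
        simp only [Pi.zero_apply]
        have h1 := (hwint k i).1; have h2 := hwz k i
        rw [hz] at h2
        dsimp only at h2 ⊢
        nlinarith [ht.1, ht.2, mul_lt_mul_of_pos_right ht.2 h1]
  -- pass to the limit k → ∞
  have hetends : Tendsto e atTop (𝓝 0) := by
    rw [he]
    have h1 : Tendsto (fun k : ℕ => 2 * ((k:ℝ) + 1)) atTop atTop := by
      apply Tendsto.const_mul_atTop (by norm_num)
      exact tendsto_atTop_add_const_right atTop 1 tendsto_natCast_atTop_atTop
    simp only [one_div]
    exact h1.inv_tendsto_atTop
  have hwtend : Tendsto w atTop (𝓝 q) := by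
    rw [hw]
    have h1 := ((hetends.const_sub 1).smul_const q).add (hetends.smul_const c)
    simpa using h1
  have hTw : Tendsto (fun k => T (w k)) atTop (𝓝 q) := by
    have h1 : Tendsto w atTop (𝓝[{x | ∀ i, 0 ≤ x i ∧ x i ≤ p i}] q) :=
      tendsto_nhdsWithin_of_tendsto_nhds_of_eventually_within _ hwtend
        (Eventually.of_forall fun k i => ⟨(hwint k i).1.le, (hwint k i).2.le⟩)
    have h2 := (hTcont q hqbox).tendsto.comp h1
    rwa [hfix] at h2
  have hql : ∀ j, (J z *ᵥ q) j ≤ q j := by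
    intro j
    have h1 : Tendsto (fun k => (J z *ᵥ w k) j) atTop (𝓝 ((J z *ᵥ q) j)) := by
      simp only [Matrix.mulVec, dotProduct]
      apply tendsto_finset_sum
      intro l _
      exact (tendsto_const_nhds).mul (((continuous_apply l).tendsto q).comp hwtend)
    exact le_of_tendsto_of_tendsto' h1
      (((continuous_apply j).tendsto q).comp hTw) (fun k => hlow k j)
  have hqpos : ∀ j, 0 < q j := by
    intro j
    have h1 : 0 < (J z *ᵥ q) j := by
      simp only [Matrix.mulVec, dotProduct]
      have h2 : J z j i0 * q i0 ≤ ∑ l, J z j l * q l :=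
        Finset.single_le_sum (f := fun l => J z j l * q l)
          (fun l _ => mul_nonneg (hM z hzint j l).le (hqbox l).1) (Finset.mem_univ i0)
      nlinarith [mul_pos (hM z hzint j i0) hqi0]
    exact lt_of_lt_of_le h1 (hql j)
  have hqint : ∀ i, 0 < q i ∧ q i < p i := fun i => ⟨hqpos i, hqltp i⟩
  -- Step (b): J0 dominates J on the interior
  have hJle := fun x hx => J0_ge hp hJ0 hC x hx
  -- Step (c): q ≤ J0 *ᵥ q with strict inequality somewhere
  have hscale : ∀ (s : ℝ), 0 < s → s ≤ 1 → ∀ i, 0 < (s • q) i ∧ (s • q) i < p i := by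
    intro s hs0 hs1 i
    have h1 := hqpos i; have h2 := hqltp i; have h3 := hp i
    simp only [Pi.smul_apply, smul_eq_mul]
    constructor
    · positivity
    · nlinarith [mul_le_mul_of_nonneg_right hs1 h1.le]
  have hupper : ∀ i, q i ≤ (J0 *ᵥ q) i := by
    intro i
    have hseg := seg_upper hTcont hJ (0 : Fin n → ℝ) q ?_ ?_ i ((J0 *ᵥ q) i) ?_
    · rw [hT0, hfix] at hseg
      simpa using hseg
    · intro t ht j
      rw [hcoord]
      simp only [Pi.zero_apply]
      have h1 := hqpos j; have h2 := hqltp j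
      constructor
      · nlinarith [ht.1, ht.2]
      · nlinarith [ht.1, ht.2, mul_le_mul_of_nonneg_left h2.le ht.1]
    · intro t ht j
      rw [hcoord]
      simp only [Pi.zero_apply]
      have h1 := hqpos j; have h2 := hqltp j
      constructor
      · nlinarith [ht.1, ht.2]
      · nlinarith [ht.1, ht.2, mul_lt_mul_of_pos_right ht.2 h1]
    · intro t ht
      have hpt : ∀ j, 0 < ((0 : Fin n → ℝ) + t • (q - 0)) j ∧
          ((0 : Fin n → ℝ) + t • (q - 0)) j < p j := by
        intro j
        rw [hcoord]
        simp only [Pi.zero_apply]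
        have h1 := hqpos j; have h2 := hqltp j
        constructor
        · nlinarith [ht.1, ht.2]
        · nlinarith [ht.1, ht.2, mul_lt_mul_of_pos_right ht.2 h1]
      simp only [Matrix.mulVec, dotProduct]
      refine Finset.sum_le_sum fun l _ => ?_
      have h1 : ((q : Fin n → ℝ) - 0) l = q l := by simp
      rw [h1]
      exact mul_le_mul_of_nonneg_right (hJle _ hpt _ l) (hqpos l).le
  -- strict entry from concavity
  have hCq := hC ((1/4 : ℝ) • q) ((1/2 : ℝ) • q)
    (fun i => by
      have := hqpos i
      simp only [Pi.smul_apply, smul_eq_mul]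
      positivity)
    (fun i => by
      simp only [Pi.smul_apply, smul_eq_mul]
      nlinarith [hqpos i])
    (fun i => (hscale (1/2) (by norm_num) (by norm_num) i).2)
  obtain ⟨i1, j0, hstrictE⟩ : ∃ i j, J ((1/2 : ℝ) • q) i j < J ((1/4 : ℝ) • q) i j := by
    by_contra hcon
    push_neg at hcon
    refine hCq.2 (Matrix.ext fun i j => le_antisymm (hCq.1 i j) (hcon i j))
  have hhalfint := hscale (1/2) (by norm_num) (by norm_num)
  have hquarterint := hscale (1/4) (by norm_num) (by norm_num)
  set cstar : ℝ := (J ((1/2 : ℝ) • q) *ᵥ q) i1 with hcstar_def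
  have hcstar : cstar < (J0 *ᵥ q) i1 := by
    rw [hcstar_def]
    simp only [Matrix.mulVec, dotProduct]
    refine Finset.sum_lt_sum (fun l _ => mul_le_mul_of_nonneg_right
      (hJle _ hhalfint i1 l) (hqpos l).le) ⟨j0, Finset.mem_univ j0, ?_⟩
    have h1 : J ((1/2 : ℝ) • q) i1 j0 < J0 i1 j0 :=
      lt_of_lt_of_le hstrictE (hJle _ hquarterint i1 j0)
    exact mul_lt_mul_of_pos_right h1 (hqpos j0)
  -- coordinates of the mid-segment
  have hmidc : ∀ (t : ℝ) (i : Fin n),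
      (((1/2 : ℝ) • q) + t • (q - (1/2 : ℝ) • q)) i = (1 + t) / 2 * q i := by
    intro t i
    simp only [Pi.add_apply, Pi.smul_apply, Pi.sub_apply, smul_eq_mul]
    ring
  have hseg2 : T q i1 - T ((1/2 : ℝ) • q) i1 ≤ cstar / 2 := by
    refine seg_upper hTcont hJ ((1/2 : ℝ) • q) q ?_ ?_ i1 (cstar / 2) ?_
    · intro t ht i
      rw [hmidc]
      have h1 := hqpos i; have h2 := hqltp i
      constructor
      · nlinarith [ht.1, ht.2]
      · nlinarith [ht.1, ht.2, mul_le_mul_of_nonneg_right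
          (by linarith [ht.2] : (1 + t)/2 ≤ 1) h1.le]
    · intro t ht i
      rw [hmidc]
      have h1 := hqpos i; have h2 := hqltp i
      constructor
      · nlinarith [ht.1, ht.2]
      · nlinarith [ht.1, ht.2, mul_lt_mul_of_pos_right
          (by linarith [ht.2] : (1 + t)/2 < 1) h1]
    · intro t ht
      have hptint : ∀ i, 0 < (((1/2 : ℝ) • q) + t • (q - (1/2 : ℝ) • q)) i ∧
          (((1/2 : ℝ) • q) + t • (q - (1/2 : ℝ) • q)) i < p i := by
        intro i
        rw [hmidc]
        have h1 := hqpos i; have h2 := hqltp i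
        constructor
        · nlinarith [ht.1, ht.2]
        · nlinarith [ht.1, ht.2, mul_lt_mul_of_pos_right
            (by linarith [ht.2] : (1 + t)/2 < 1) h1]
      have hlt : ∀ i, ((1/2 : ℝ) • q) i <
          (((1/2 : ℝ) • q) + t • (q - (1/2 : ℝ) • q)) i := by
        intro i
        rw [hmidc]
        simp only [Pi.smul_apply, smul_eq_mul]
        nlinarith [hqpos i, ht.1, ht.2]
      have hcmp := hC ((1/2 : ℝ) • q) (((1/2 : ℝ) • q) + t • (q - (1/2 : ℝ) • q))
        (fun i => (hhalfint i).1) hlt (fun i => (hptint i).2)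
      have h1 : (J (((1/2 : ℝ) • q) + t • (q - (1/2 : ℝ) • q)) *ᵥ
          (q - (1/2 : ℝ) • q)) i1 ≤ (J ((1/2 : ℝ) • q) *ᵥ (q - (1/2 : ℝ) • q)) i1 := by
        simp only [Matrix.mulVec, dotProduct]
        refine Finset.sum_le_sum fun l _ => ?_
        refine mul_le_mul_of_nonneg_right (hcmp.1 i1 l) ?_
        simp only [Pi.sub_apply, Pi.smul_apply, smul_eq_mul]
        nlinarith [hqpos l]
      have h2 : (J ((1/2 : ℝ) • q) *ᵥ (q - (1/2 : ℝ) • q)) i1 = cstar / 2 := by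
        rw [hcstar_def]
        simp only [Matrix.mulVec, dotProduct]
        rw [Finset.sum_div]
        refine Finset.sum_congr rfl fun l _ => ?_
        simp only [Pi.sub_apply, Pi.smul_apply, smul_eq_mul]
        ring
      linarith
  have hseg3 : T ((1/2 : ℝ) • q) i1 ≤ (J0 *ᵥ q) i1 / 2 := by
    have hseg := seg_upper hTcont hJ (0 : Fin n → ℝ) ((1/2 : ℝ) • q) ?_ ?_ i1
      ((J0 *ᵥ q) i1 / 2) ?_
    · rw [hT0] at hseg
      simpa using hseg
    · intro t ht i
      rw [hcoord]
      simp only [Pi.zero_apply, Pi.smul_apply, smul_eq_mul]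
      have h1 := hqpos i; have h2 := hqltp i
      constructor
      · nlinarith [ht.1, ht.2]
      · nlinarith [ht.1, ht.2, mul_le_mul_of_nonneg_left (by nlinarith : (1:ℝ)/2 * q i ≤ q i) ht.1]
    · intro t ht i
      rw [hcoord]
      simp only [Pi.zero_apply, Pi.smul_apply, smul_eq_mul]
      have h1 := hqpos i; have h2 := hqltp i
      constructor
      · nlinarith [ht.1, ht.2]
      · nlinarith [ht.1, ht.2, mul_le_mul_of_nonneg_left (by nlinarith : (1:ℝ)/2 * q i ≤ q i) ht.1.le]
    · intro t ht
      have hpt : ∀ j, 0 < ((0 : Fin n → ℝ) + t • ((1/2 : ℝ) • q - 0)) j ∧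
          ((0 : Fin n → ℝ) + t • ((1/2 : ℝ) • q - 0)) j < p j := by
        intro j
        rw [hcoord]
        simp only [Pi.zero_apply, Pi.smul_apply, smul_eq_mul]
        have h1 := hqpos j; have h2 := hqltp j
        constructor
        · nlinarith [ht.1, ht.2]
        · nlinarith [ht.1, ht.2, mul_le_mul_of_nonneg_left (by nlinarith : (1:ℝ)/2 * q j ≤ q j) ht.1.le]
      have h1 : (J ((0 : Fin n → ℝ) + t • ((1/2 : ℝ) • q - 0)) *ᵥ ((1/2 : ℝ) • q - 0)) i1
          ≤ (J0 *ᵥ q) i1 / 2 := by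
        simp only [Matrix.mulVec, dotProduct]
        rw [Finset.sum_div]
        refine Finset.sum_le_sum fun l _ => ?_
        have h2 : ((1/2 : ℝ) • q - (0 : Fin n → ℝ)) l = q l / 2 := by
          simp only [Pi.sub_apply, Pi.smul_apply, Pi.zero_apply, smul_eq_mul]
          ring
        rw [h2]
        have h3 := hJle _ hpt i1 l
        have h4 := hqpos l
        nlinarith
      exact h1
  have hstrict : q i1 < (J0 *ᵥ q) i1 := by
    have h1 : T q i1 = q i1 := by rw [hfix]
    linarith
  -- Step (d): the vector r = J0 *ᵥ q grows strictly under J0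
  have hJ0pos : ∀ i j, 0 < J0 i j := fun i j =>
    lt_of_lt_of_le (hM z hzint i j) (hJle z hzint i j)
  set r : Fin n → ℝ := J0 *ᵥ q with hr_def
  have hrpos : ∀ i, 0 < r i := fun i => lt_of_lt_of_le (hqpos i) (hupper i)
  have hgrow : ∀ i, r i < (J0 *ᵥ r) i := by
    intro i
    have h1 : (J0 *ᵥ q) i < (J0 *ᵥ r) i := by
      simp only [Matrix.mulVec, dotProduct]
      refine Finset.sum_lt_sum (fun l _ => mul_le_mul_of_nonneg_left (hupper l)
        (hJ0pos i l).le) ⟨i1, Finset.mem_univ i1, ?_⟩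
      exact mul_lt_mul_of_pos_left hstrict (hJ0pos i i1)
    exact h1
  -- Step (e): spectral contradiction
  obtain ⟨μ, hμmem, hμ⟩ := spectral_big J0 ⟨i0⟩ (fun i j => (hJ0pos i j).le) r hrpos hgrow
  exact absurd (hρ μ hμmem) (not_le.2 hμ)


end SmithAux

set_option linter.unusedVariables false in
/-- **Smith's fixed point theorem for monotone concave operators, case ρ(DT(0)) ≤ 1.**
`T : [0,p] → [0,p]` is continuous, `C¹` on the open box `(0,p)` with Jacobian matrix `J`,
`DT(0) = J0` is the limit of `J x` as `x → 0`, `x > 0`; `T` satisfies the monotonicity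
condition (M) and the concavity condition (C), `Tp < p` and `T0 = 0`.  If all (complex)
eigenvalues of `DT(0)` have modulus at most `1` (spectral radius `≤ 1`), then every orbit
of `T` starting in `[0,p]` converges to `0`. -/
theorem smith_fixed_point_spectral_radius_le_one
    (n : ℕ) (p : Fin n → ℝ) (hp : ∀ i, 0 < p i)
    (T : (Fin n → ℝ) → (Fin n → ℝ))
    (hTmaps : ∀ x : Fin n → ℝ, (∀ i, 0 ≤ x i ∧ x i ≤ p i) → ∀ i, 0 ≤ T x i ∧ T x i ≤ p i)
    (hTcont : ContinuousOn T {x | ∀ i, 0 ≤ x i ∧ x i ≤ p i})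
    (J : (Fin n → ℝ) → Matrix (Fin n) (Fin n) ℝ)
    (hJ : ∀ x : Fin n → ℝ, (∀ i, 0 < x i ∧ x i < p i) →
      HasFDerivAt T (LinearMap.toContinuousLinearMap (Matrix.toLin' (J x))) x)
    (hJcont : ContinuousOn J {x | ∀ i, 0 < x i ∧ x i < p i})
    (J0 : Matrix (Fin n) (Fin n) ℝ)
    (hJ0 : Tendsto J (𝓝[{x | ∀ i, 0 < x i ∧ x i < p i}] 0) (𝓝 J0))
    (hM : ∀ x : Fin n → ℝ, (∀ i, 0 < x i ∧ x i < p i) → ∀ i j, 0 < J x i j)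
    (hC : ∀ x y : Fin n → ℝ, (∀ i, 0 < x i) → (∀ i, x i < y i) → (∀ i, y i < p i) →
      (∀ i j, J y i j ≤ J x i j) ∧ J y ≠ J x)
    (hTp : ∀ i, T p i < p i)
    (hT0 : T 0 = 0)
    (hρ : ∀ μ : ℂ, μ ∈ spectrum ℂ (J0.map Complex.ofReal) → ‖μ‖ ≤ 1) :
    ∀ x : Fin n → ℝ, (∀ i, 0 ≤ x i ∧ x i ≤ p i) →
      Tendsto (fun m => T^[m] x) atTop (𝓝 0) := by
  have hpbox : ∀ i, 0 ≤ p i ∧ p i ≤ p i := fun i => ⟨(hp i).le, le_rfl⟩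
  -- iterates stay in the box
  have iter_mem : ∀ (x : Fin n → ℝ), (∀ i, 0 ≤ x i ∧ x i ≤ p i) →
      ∀ m, ∀ i, 0 ≤ T^[m] x i ∧ T^[m] x i ≤ p i := by
    intro x hx m
    induction m with
    | zero => simpa using hx
    | succ m ih =>
      rw [Function.iterate_succ_apply']
      exact hTmaps _ ih
  set a : ℕ → (Fin n → ℝ) := fun m => T^[m] p with ha
  have habox : ∀ m i, 0 ≤ a m i ∧ a m i ≤ p i := fun m => iter_mem p hpbox m
  -- the orbit of p is decreasing
  have hdec : ∀ m i, a (m + 1) i ≤ a m i := by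
    intro m
    induction m with
    | zero =>
      intro i
      simpa [ha] using (hTp i).le
    | succ m ih =>
      have h1 : a (m + 2) = T (a (m + 1)) := Function.iterate_succ_apply' T (m+1) p
      have h2 : a (m + 1) = T (a m) := Function.iterate_succ_apply' T m p
      have h3 := mono_box hp hTcont hJ hM (a (m+1)) (a m) (habox (m+1)) (habox m) ih
      intro i
      calc a (m + 2) i = T (a (m+1)) i := by rw [h1]
        _ ≤ T (a m) i := h3 i
        _ = a (m + 1) i := by rw [h2]
  have hbdd : ∀ i, BddBelow (Set.range fun m => a m i) := by
    intro i
    exact ⟨0, by rintro y ⟨m, rfl⟩; exact (habox m i).1⟩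
  set q : Fin n → ℝ := fun i => ⨅ m, a m i with hq
  have hconv : ∀ i, Tendsto (fun m => a m i) atTop (𝓝 (q i)) := by
    intro i
    exact tendsto_atTop_ciInf (antitone_nat_of_succ_le fun m => hdec m i) (hbdd i)
  have hconvq : Tendsto a atTop (𝓝 q) := tendsto_pi_nhds.2 hconv
  have hqle : ∀ m i, q i ≤ a m i := fun m i => ciInf_le (hbdd i) m
  have hqbox : ∀ i, 0 ≤ q i ∧ q i ≤ p i := by
    intro i
    refine ⟨le_ciInf fun m => (habox m i).1, le_trans (hqle 0 i) (by simp [ha])⟩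
  have hqltp : ∀ i, q i < p i := by
    intro i
    have h1 := hqle 1 i
    have h2 : a 1 = T p := by simp [ha]
    rw [h2] at h1
    exact lt_of_le_of_lt h1 (hTp i)
  -- q is a fixed point
  have hfix : T q = q := by
    have h1 : Tendsto (fun m => T (a m)) atTop (𝓝 (T q)) := by
      refine (hTcont q hqbox).tendsto.comp ?_
      exact tendsto_nhdsWithin_of_tendsto_nhds_of_eventually_within _ hconvq
        (Eventually.of_forall fun m => habox m)
    have h2 : (fun m => T (a m)) = fun m => a (m + 1) :=
      funext fun m => (Function.iterate_succ_apply' T m p).symm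
    rw [h2] at h1
    have h3 : Tendsto (fun m => a (m + 1)) atTop (𝓝 q) :=
      hconvq.comp (tendsto_add_atTop_nat 1)
    exact tendsto_nhds_unique h1 h3
  -- the fixed point is 0
  have hq0 : ∀ i, q i = 0 := by
    by_contra hne
    push_neg at hne
    obtain ⟨i0, hi0⟩ := hne
    have hqi0 : 0 < q i0 := lt_of_le_of_ne (hqbox i0).1 (Ne.symm hi0)
    exact main_contradiction hp hTcont hJ hJ0 hM hC hT0 hρ q hqbox hqltp hfix i0 hqi0
  -- squeeze
  intro x hx
  have hle : ∀ m i, T^[m] x i ≤ a m i := by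
    intro m
    induction m with
    | zero => intro i; simpa [ha] using (hx i).2
    | succ m ih =>
      have h1 : T^[m+1] x = T (T^[m] x) := Function.iterate_succ_apply' T m x
      have h2 : a (m + 1) = T (a m) := Function.iterate_succ_apply' T m p
      have h3 := mono_box hp hTcont hJ hM (T^[m] x) (a m) (iter_mem x hx m) (habox m) ih
      intro i
      calc T^[m+1] x i = T (T^[m] x) i := by rw [h1]
        _ ≤ T (a m) i := h3 i
        _ = a (m + 1) i := by rw [h2]
  rw [tendsto_pi_nhds]
  intro i
  have h0 : Tendsto (fun m => a m i) atTop (𝓝 0) := by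
    have := hconv i
    rwa [hq0 i] at this
  have hbelow : ∀ m, 0 ≤ T^[m] x i := fun m => (iter_mem x hx m i).1
  simp only [Pi.zero_apply]
  exact tendsto_of_tendsto_of_tendsto_of_le_of_le tendsto_const_nhds h0
    hbelow (fun m => hle m i)
end

section
/- Let T : [0,p] → [0,p] be continuous, C¹ on (0,p), with DT(0) := lim_{x→0, x>0} DT(x) existing, satisfying condition (M), condition (C), Tp < p (coordinatewise) and T0 = 0. If the spectral radius ρ(DT(0)) is strictly greater than 1, then T has a unique nonzero fixed point q = Tq; moreover q ∈ (0,p) and for every x ∈ [0,p] with x ≠ 0, the iterates T^m x converge to q as m → ∞. -/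
open Filter Topology

open Set


/-- Scalar mean value: derivative ≥ c on (0,1) gives g 1 - g 0 ≥ c. -/
lemma smith_deriv_ge (g : ℝ → ℝ) (c : ℝ) (hg : ContinuousOn g (Icc 0 1))
    (hg' : ∀ t ∈ Ioo (0:ℝ) 1, ∃ d, HasDerivAt g d t ∧ c ≤ d) : c ≤ g 1 - g 0 := by
  set h : ℝ → ℝ := fun t => g t - c * t with hh
  have hd : ∀ t ∈ Ioo (0:ℝ) 1, ∃ d, HasDerivAt h d t ∧ 0 ≤ d := by
    intro t ht
    obtain ⟨d, hd, hcd⟩ := hg' t ht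
    exact ⟨d - c, hd.sub (by simpa using (hasDerivAt_id t).const_mul c), by linarith⟩
  have hcont : ContinuousOn h (Icc 0 1) := hg.sub ((continuous_const.mul continuous_id).continuousOn)
  have hmono : MonotoneOn h (Icc 0 1) := by
    apply monotoneOn_of_deriv_nonneg (convex_Icc 0 1) hcont
    · intro t ht
      rw [interior_Icc] at ht
      obtain ⟨d, hd, _⟩ := hd t ht
      exact hd.differentiableAt.differentiableWithinAt
    · intro t ht
      rw [interior_Icc] at ht
      obtain ⟨d, hd, hd0⟩ := hd t ht
      rw [hd.deriv]; exact hd0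
  have := hmono (by simp : (0:ℝ) ∈ Icc (0:ℝ) 1) (by simp : (1:ℝ) ∈ Icc (0:ℝ) 1) zero_le_one
  simp only [hh] at this
  linarith

lemma smith_deriv_le (g : ℝ → ℝ) (c : ℝ) (hg : ContinuousOn g (Icc 0 1))
    (hg' : ∀ t ∈ Ioo (0:ℝ) 1, ∃ d, HasDerivAt g d t ∧ d ≤ c) : g 1 - g 0 ≤ c := by
  have := smith_deriv_ge (fun t => -g t) (-c) hg.neg ?_
  · linarith
  · intro t ht
    obtain ⟨d, hd, hdc⟩ := hg' t ht
    exact ⟨-d, hd.neg, by linarith⟩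



lemma smith_mulVec_apply {n : ℕ} (M : Matrix (Fin n) (Fin n) ℝ) (x : Fin n → ℝ) (i : Fin n) :
    M.mulVec x i = ∑ j, M i j * x j := by
  simp [Matrix.mulVec, dotProduct]



section
variable {n : ℕ} {p : Fin n → ℝ} {T : (Fin n → ℝ) → (Fin n → ℝ)}
  {J : (Fin n → ℝ) → Matrix (Fin n) (Fin n) ℝ}

lemma smith_seg_mem {u v : Fin n → ℝ} (hu : ∀ i, 0 < u i ∧ u i < p i) (hv : ∀ i, 0 < v i ∧ v i < p i)
    {t : ℝ} (ht : t ∈ Icc (0:ℝ) 1) : ∀ i, 0 < (u + t • (v - u)) i ∧ (u + t • (v - u)) i < p i := by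
  intro i
  have h1 : (u + t • (v - u)) i = u i + t * (v i - u i) := by
    simp [Pi.smul_apply, smul_eq_mul]
  rw [h1]
  obtain ⟨ht0, ht1⟩ := ht
  rcases le_total (u i) (v i) with h | h
  · constructor
    · nlinarith [(hu i).1, mul_nonneg ht0 (sub_nonneg.2 h)]
    · nlinarith [(hv i).2, mul_nonneg (sub_nonneg.2 ht1) (sub_nonneg.2 h)]
  · constructor
    · nlinarith [(hv i).1, mul_nonneg (sub_nonneg.2 ht1) (sub_nonneg.2 h)]
    · nlinarith [(hu i).2, mul_nonneg ht0 (sub_nonneg.2 h)]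

lemma smith_cont_coord (hTcont : ContinuousOn T {x | ∀ i, 0 ≤ x i ∧ x i ≤ p i})
    (u v : Fin n → ℝ)
    (hmem : ∀ t ∈ Icc (0:ℝ) 1, (u + t • (v - u)) ∈ {x | ∀ i, 0 ≤ x i ∧ x i ≤ p i}) (i : Fin n) :
    ContinuousOn (fun t => T (u + t • (v - u)) i) (Icc (0:ℝ) 1) := by
  have hγ : Continuous fun t : ℝ => u + t • (v - u) :=
    continuous_const.add (continuous_id.smul continuous_const)
  exact (continuous_apply i).comp_continuousOn (hTcont.comp hγ.continuousOn hmem)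

lemma smith_hasderiv_coord
    (hJ : ∀ x : Fin n → ℝ, (∀ i, 0 < x i ∧ x i < p i) →
      HasFDerivAt T (LinearMap.toContinuousLinearMap (Matrix.toLin' (J x))) x)
    (u v : Fin n → ℝ) {t : ℝ} (hmem : ∀ i, 0 < (u + t • (v - u)) i ∧ (u + t • (v - u)) i < p i)
    (i : Fin n) :
    HasDerivAt (fun s => T (u + s • (v - u)) i) ((J (u + t • (v - u))).mulVec (v - u) i) t := by
  have hγ : HasDerivAt (fun s : ℝ => u + s • (v - u)) (v - u) t := by
    simpa using ((hasDerivAt_id t).smul_const (v - u)).const_add u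
  have hT' := (hJ _ hmem).comp_hasDerivAt t hγ
  have h2 := (ContinuousLinearMap.proj (R := ℝ) (φ := fun _ : Fin n => ℝ) i).hasFDerivAt.comp_hasDerivAt t hT'
  simpa [Function.comp_def, Matrix.toLin'_apply] using h2

end



section
variable {n : ℕ} {p : Fin n → ℝ} {T : (Fin n → ℝ) → (Fin n → ℝ)}
  {J : (Fin n → ℝ) → Matrix (Fin n) (Fin n) ℝ}

lemma smith_J_antitone
    (hJcont : ContinuousOn J {x | ∀ i, 0 < x i ∧ x i < p i})
    (hC : ∀ x y : Fin n → ℝ, (∀ i, 0 < x i) → (∀ i, x i < y i) → (∀ i, y i < p i) →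
      (∀ i j, J y i j ≤ J x i j) ∧ J y ≠ J x)
    {x y : Fin n → ℝ} (hx : ∀ i, 0 < x i ∧ x i < p i) (hy : ∀ i, 0 < y i ∧ y i < p i)
    (hxy : ∀ i, x i ≤ y i) : ∀ i j, J y i j ≤ J x i j := by
  intro i j
  have hne : (Finset.univ : Finset (Fin n)).Nonempty := ⟨i, Finset.mem_univ i⟩
  set xm : ℝ := Finset.univ.inf' hne (fun k => x k) with hxm
  have hxm0 : 0 < xm := by
    obtain ⟨k, _, hk⟩ := Finset.exists_mem_eq_inf' hne (fun k => x k)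
    rw [hxm, hk]; exact (hx k).1
  have hxmle : ∀ k, xm ≤ x k := fun k => Finset.inf'_le _ (Finset.mem_univ k)
  have key : ∀ δ ∈ Ioo (0:ℝ) xm, J y i j ≤ J (fun k => x k - δ) i j := by
    intro δ hδ
    refine ((hC (fun k => x k - δ) y ?_ ?_ (fun k => (hy k).2)).1) i j
    · intro k; have := hxmle k; linarith [hδ.2]
    · intro k; have := hxy k; linarith [hδ.1]
  have hzS : ∀ δ ∈ Ioo (0:ℝ) xm, (fun k => x k - δ) ∈ {z : Fin n → ℝ | ∀ i, 0 < z i ∧ z i < p i} := by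
    intro δ hδ k
    constructor
    · have := hxmle k; simp only []; linarith [hδ.2]
    · have := (hx k).2; simp only []; linarith [hδ.1]
  have htz : Tendsto (fun δ : ℝ => (fun k => x k - δ)) (𝓝[>] (0:ℝ))
      (𝓝[{z : Fin n → ℝ | ∀ i, 0 < z i ∧ z i < p i}] x) := by
    apply tendsto_nhdsWithin_of_tendsto_nhds_of_eventually_within
    · rw [tendsto_pi_nhds]
      intro k
      have : Tendsto (fun δ : ℝ => x k - δ) (𝓝 (0:ℝ)) (𝓝 (x k - 0)) :=
        (continuous_const.sub continuous_id).tendsto 0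
      simpa using this.mono_left nhdsWithin_le_nhds
    · filter_upwards [Ioo_mem_nhdsGT_of_mem (by simp [hxm0] : (0:ℝ) ∈ Ico (0:ℝ) xm)] with δ hδ
      exact hzS δ hδ
  have hJt : Tendsto (fun δ : ℝ => J (fun k => x k - δ) i j) (𝓝[>] (0:ℝ)) (𝓝 (J x i j)) := by
    have h1 := (hJcont.continuousWithinAt hx).tendsto.comp htz
    exact (((continuous_apply j).comp (continuous_apply i)).tendsto _).comp h1
  refine ge_of_tendsto hJt ?_
  filter_upwards [Ioo_mem_nhdsGT_of_mem (by simp [hxm0] : (0:ℝ) ∈ Ico (0:ℝ) xm)] with δ hδ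
  exact key δ hδ

lemma smith_J0_ge {J0 : Matrix (Fin n) (Fin n) ℝ}
    (hJ0 : Tendsto J (𝓝[{x | ∀ i, 0 < x i ∧ x i < p i}] 0) (𝓝 J0))
    (hC : ∀ x y : Fin n → ℝ, (∀ i, 0 < x i) → (∀ i, x i < y i) → (∀ i, y i < p i) →
      (∀ i j, J y i j ≤ J x i j) ∧ J y ≠ J x)
    {x : Fin n → ℝ} (hx : ∀ i, 0 < x i ∧ x i < p i) : ∀ i j, J x i j ≤ J0 i j := by
  intro i j
  have key : ∀ δ ∈ Ioo (0:ℝ) 1, J x i j ≤ J (δ • x) i j := by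
    intro δ hδ
    refine ((hC (δ • x) x ?_ ?_ (fun k => (hx k).2)).1) i j
    · intro k; have := (hx k).1; simp only [Pi.smul_apply, smul_eq_mul]
      exact mul_pos hδ.1 this
    · intro k; have h := (hx k).1; simp only [Pi.smul_apply, smul_eq_mul]
      nlinarith [hδ.2]
  have htz : Tendsto (fun δ : ℝ => δ • x) (𝓝[>] (0:ℝ))
      (𝓝[{z : Fin n → ℝ | ∀ i, 0 < z i ∧ z i < p i}] 0) := by
    apply tendsto_nhdsWithin_of_tendsto_nhds_of_eventually_within
    · have : Tendsto (fun δ : ℝ => δ • x) (𝓝 (0:ℝ)) (𝓝 ((0:ℝ) • x)) :=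
        (continuous_id.smul continuous_const).tendsto 0
      simpa using this.mono_left nhdsWithin_le_nhds
    · filter_upwards [Ioo_mem_nhdsGT_of_mem (by simp : (0:ℝ) ∈ Ico (0:ℝ) 1)] with δ hδ k
      constructor
      · exact mul_pos hδ.1 (hx k).1
      · have h := (hx k).1; have := (hx k).2; simp only [Pi.smul_apply, smul_eq_mul]
        nlinarith [hδ.2]
  have hJt : Tendsto (fun δ : ℝ => J (δ • x) i j) (𝓝[>] (0:ℝ)) (𝓝 (J0 i j)) := by
    have h1 := hJ0.comp htz
    exact (((continuous_apply j).comp (continuous_apply i)).tendsto _).comp h1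
  refine ge_of_tendsto hJt ?_
  filter_upwards [Ioo_mem_nhdsGT_of_mem (by simp : (0:ℝ) ∈ Ico (0:ℝ) 1)] with δ hδ
  exact key δ hδ

end


section
variable {n : ℕ} {p : Fin n → ℝ} {T : (Fin n → ℝ) → (Fin n → ℝ)}
  {J : (Fin n → ℝ) → Matrix (Fin n) (Fin n) ℝ}

lemma smith_mvt (hTcont : ContinuousOn T {x | ∀ i, 0 ≤ x i ∧ x i ≤ p i})
    (hJ : ∀ x : Fin n → ℝ, (∀ i, 0 < x i ∧ x i < p i) →
      HasFDerivAt T (LinearMap.toContinuousLinearMap (Matrix.toLin' (J x))) x)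
    (hJcont : ContinuousOn J {x | ∀ i, 0 < x i ∧ x i < p i})
    (hC : ∀ x y : Fin n → ℝ, (∀ i, 0 < x i) → (∀ i, x i < y i) → (∀ i, y i < p i) →
      (∀ i j, J y i j ≤ J x i j) ∧ J y ≠ J x)
    {u v : Fin n → ℝ} (hu : ∀ i, 0 < u i ∧ u i < p i) (hv : ∀ i, 0 < v i ∧ v i < p i)
    (huv : ∀ i, u i ≤ v i) (i : Fin n) :
    (J v).mulVec (v - u) i ≤ T v i - T u i ∧ T v i - T u i ≤ (J u).mulVec (v - u) i := by
  have hsegS : ∀ t ∈ Icc (0:ℝ) 1, ∀ k, 0 < (u + t • (v - u)) k ∧ (u + t • (v - u)) k < p k :=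
    fun t ht => smith_seg_mem hu hv ht
  have hsegB : ∀ t ∈ Icc (0:ℝ) 1, (u + t • (v - u)) ∈ {x : Fin n → ℝ | ∀ i, 0 ≤ x i ∧ x i ≤ p i} :=
    fun t ht k => ⟨le_of_lt ((hsegS t ht) k).1, le_of_lt ((hsegS t ht) k).2⟩
  have hcont := smith_cont_coord hTcont u v hsegB i
  have hγle : ∀ t ∈ Icc (0:ℝ) 1, ∀ k, (u + t • (v - u)) k ≤ v k := by
    intro t ht k
    have : (u + t • (v - u)) k = u k + t * (v k - u k) := by simp [smul_eq_mul]
    rw [this]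
    nlinarith [huv k, ht.1, ht.2, mul_nonneg (sub_nonneg.2 ht.2) (sub_nonneg.2 (huv k))]
  have hγge : ∀ t ∈ Icc (0:ℝ) 1, ∀ k, u k ≤ (u + t • (v - u)) k := by
    intro t ht k
    have : (u + t • (v - u)) k = u k + t * (v k - u k) := by simp [smul_eq_mul]
    rw [this]
    nlinarith [huv k, ht.1, mul_nonneg ht.1 (sub_nonneg.2 (huv k))]
  have hg1 : T (u + (1:ℝ) • (v - u)) i = T v i := by norm_num
  have hg0 : T (u + (0:ℝ) • (v - u)) i = T u i := by norm_num
  constructor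
  · have := smith_deriv_ge (fun t => T (u + t • (v - u)) i) ((J v).mulVec (v - u) i) hcont ?_
    · rw [hg1, hg0] at this; exact this
    · intro t ht
      have htI : t ∈ Icc (0:ℝ) 1 := ⟨le_of_lt ht.1, le_of_lt ht.2⟩
      refine ⟨_, smith_hasderiv_coord hJ u v (hsegS t htI) i, ?_⟩
      rw [smith_mulVec_apply, smith_mulVec_apply]
      apply Finset.sum_le_sum
      intro j _
      have hJle := smith_J_antitone hJcont hC (hsegS t htI) hv (hγle t htI) i j
      have : 0 ≤ v j - u j := sub_nonneg.2 (huv j)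
      have h0 : (v - u) j = v j - u j := rfl
      rw [h0]
      exact mul_le_mul_of_nonneg_right hJle this
  · have := smith_deriv_le (fun t => T (u + t • (v - u)) i) ((J u).mulVec (v - u) i) hcont ?_
    · rw [hg1, hg0] at this; exact this
    · intro t ht
      have htI : t ∈ Icc (0:ℝ) 1 := ⟨le_of_lt ht.1, le_of_lt ht.2⟩
      refine ⟨_, smith_hasderiv_coord hJ u v (hsegS t htI) i, ?_⟩
      rw [smith_mulVec_apply, smith_mulVec_apply]
      apply Finset.sum_le_sum
      intro j _
      have hJle := smith_J_antitone hJcont hC hu (hsegS t htI) (hγge t htI) i j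
      have : 0 ≤ v j - u j := sub_nonneg.2 (huv j)
      have h0 : (v - u) j = v j - u j := rfl
      rw [h0]
      exact mul_le_mul_of_nonneg_right hJle this

lemma smith_mono_S (hTcont : ContinuousOn T {x | ∀ i, 0 ≤ x i ∧ x i ≤ p i})
    (hJ : ∀ x : Fin n → ℝ, (∀ i, 0 < x i ∧ x i < p i) →
      HasFDerivAt T (LinearMap.toContinuousLinearMap (Matrix.toLin' (J x))) x)
    (hJcont : ContinuousOn J {x | ∀ i, 0 < x i ∧ x i < p i})
    (hM : ∀ x : Fin n → ℝ, (∀ i, 0 < x i ∧ x i < p i) → ∀ i j, 0 < J x i j)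
    (hC : ∀ x y : Fin n → ℝ, (∀ i, 0 < x i) → (∀ i, x i < y i) → (∀ i, y i < p i) →
      (∀ i j, J y i j ≤ J x i j) ∧ J y ≠ J x)
    {u v : Fin n → ℝ} (hu : ∀ i, 0 < u i ∧ u i < p i) (hv : ∀ i, 0 < v i ∧ v i < p i)
    (huv : ∀ i, u i ≤ v i) (i : Fin n) : T u i ≤ T v i := by
  have h := (smith_mvt hTcont hJ hJcont hC hu hv huv i).1
  have h2 : 0 ≤ (J v).mulVec (v - u) i := by
    rw [smith_mulVec_apply]
    apply Finset.sum_nonneg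
    intro j _
    exact mul_nonneg (le_of_lt (hM v hv i j)) (sub_nonneg.2 (huv j))
  linarith

lemma smith_strict_S (hTcont : ContinuousOn T {x | ∀ i, 0 ≤ x i ∧ x i ≤ p i})
    (hJ : ∀ x : Fin n → ℝ, (∀ i, 0 < x i ∧ x i < p i) →
      HasFDerivAt T (LinearMap.toContinuousLinearMap (Matrix.toLin' (J x))) x)
    (hJcont : ContinuousOn J {x | ∀ i, 0 < x i ∧ x i < p i})
    (hM : ∀ x : Fin n → ℝ, (∀ i, 0 < x i ∧ x i < p i) → ∀ i j, 0 < J x i j)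
    (hC : ∀ x y : Fin n → ℝ, (∀ i, 0 < x i) → (∀ i, x i < y i) → (∀ i, y i < p i) →
      (∀ i j, J y i j ≤ J x i j) ∧ J y ≠ J x)
    {u v : Fin n → ℝ} (hu : ∀ i, 0 < u i ∧ u i < p i) (hv : ∀ i, 0 < v i ∧ v i < p i)
    (huv : ∀ i, u i ≤ v i) (hne : u ≠ v) (i : Fin n) : T u i < T v i := by
  have h := (smith_mvt hTcont hJ hJcont hC hu hv huv i).1
  obtain ⟨j₀, hj₀⟩ : ∃ j₀, u j₀ ≠ v j₀ := by
    by_contra hcon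
    push_neg at hcon
    exact hne (funext hcon)
  have hj₀' : u j₀ < v j₀ := lt_of_le_of_ne (huv j₀) hj₀
  have h2 : 0 < (J v).mulVec (v - u) i := by
    rw [smith_mulVec_apply]
    have : 0 < J v i j₀ * (v - u) j₀ := by
      have h0 : (v - u) j₀ = v j₀ - u j₀ := rfl
      rw [h0]
      exact mul_pos (hM v hv i j₀) (by linarith)
    refine lt_of_lt_of_le this ?_
    apply Finset.single_le_sum (f := fun j => J v i j * (v - u) j) ?_ (Finset.mem_univ j₀)
    intro j _
    exact mul_nonneg (le_of_lt (hM v hv i j)) (sub_nonneg.2 (huv j))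
  linarith

lemma smith_mono_B (hp : ∀ i, 0 < p i)
    (hTcont : ContinuousOn T {x | ∀ i, 0 ≤ x i ∧ x i ≤ p i})
    (hJ : ∀ x : Fin n → ℝ, (∀ i, 0 < x i ∧ x i < p i) →
      HasFDerivAt T (LinearMap.toContinuousLinearMap (Matrix.toLin' (J x))) x)
    (hJcont : ContinuousOn J {x | ∀ i, 0 < x i ∧ x i < p i})
    (hM : ∀ x : Fin n → ℝ, (∀ i, 0 < x i ∧ x i < p i) → ∀ i j, 0 < J x i j)
    (hC : ∀ x y : Fin n → ℝ, (∀ i, 0 < x i) → (∀ i, x i < y i) → (∀ i, y i < p i) →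
      (∀ i j, J y i j ≤ J x i j) ∧ J y ≠ J x)
    {x y : Fin n → ℝ} (hx : ∀ i, 0 ≤ x i ∧ x i ≤ p i) (hy : ∀ i, 0 ≤ y i ∧ y i ≤ p i)
    (hxy : ∀ i, x i ≤ y i) (i : Fin n) : T x i ≤ T y i := by
  set m : Fin n → ℝ := (1/2 : ℝ) • p with hm
  have hmem : ∀ z : Fin n → ℝ, (∀ i, 0 ≤ z i ∧ z i ≤ p i) → ∀ t ∈ Ioo (0:ℝ) 1,
      ∀ k, 0 < (z + t • (m - z)) k ∧ (z + t • (m - z)) k < p k := by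
    intro z hz t ht k
    have h1 : (z + t • (m - z)) k = (1 - t) * z k + t * (p k / 2) := by
      simp [hm, Pi.smul_apply, smul_eq_mul]; ring
    rw [h1]
    constructor
    · nlinarith [(hz k).1, (hp k), ht.1, ht.2, mul_nonneg (sub_nonneg.2 (le_of_lt ht.2)) (hz k).1]
    · nlinarith [(hz k).2, (hp k), ht.1, ht.2,
        mul_le_mul_of_nonneg_left (hz k).2 (sub_nonneg.2 (le_of_lt ht.2))]
  have key : ∀ t ∈ Ioo (0:ℝ) 1, T (x + t • (m - x)) i ≤ T (y + t • (m - y)) i := by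
    intro t ht
    refine smith_mono_S hTcont hJ hJcont hM hC (hmem x hx t ht) (hmem y hy t ht) ?_ i
    intro k
    have hx1 : (x + t • (m - x)) k = (1 - t) * x k + t * m k := by
      simp [Pi.smul_apply, smul_eq_mul]; ring
    have hy1 : (y + t • (m - y)) k = (1 - t) * y k + t * m k := by
      simp [Pi.smul_apply, smul_eq_mul]; ring
    rw [hx1, hy1]
    have := hxy k
    nlinarith [mul_le_mul_of_nonneg_left (hxy k) (sub_nonneg.2 (le_of_lt ht.2))]
  have hpath : ∀ z : Fin n → ℝ, (∀ i, 0 ≤ z i ∧ z i ≤ p i) →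
      Tendsto (fun t : ℝ => T (z + t • (m - z)) i) (𝓝[>] (0:ℝ)) (𝓝 (T z i)) := by
    intro z hz
    have hγ : Tendsto (fun t : ℝ => z + t • (m - z)) (𝓝[>] (0:ℝ))
        (𝓝[{w : Fin n → ℝ | ∀ i, 0 ≤ w i ∧ w i ≤ p i}] z) := by
      apply tendsto_nhdsWithin_of_tendsto_nhds_of_eventually_within
      · have : Tendsto (fun t : ℝ => z + t • (m - z)) (𝓝 (0:ℝ)) (𝓝 (z + (0:ℝ) • (m - z))) :=
          (continuous_const.add (continuous_id.smul continuous_const)).tendsto 0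
        simpa using this.mono_left nhdsWithin_le_nhds
      · filter_upwards [Ioo_mem_nhdsGT_of_mem (by simp : (0:ℝ) ∈ Ico (0:ℝ) 1)] with t ht k
        exact ⟨le_of_lt (hmem z hz t ht k).1, le_of_lt (hmem z hz t ht k).2⟩
    exact (((continuous_apply i).tendsto _).comp ((hTcont.continuousWithinAt hz).tendsto.comp hγ))
  refine le_of_tendsto_of_tendsto (hpath x hx) (hpath y hy) ?_
  filter_upwards [Ioo_mem_nhdsGT_of_mem (by simp : (0:ℝ) ∈ Ico (0:ℝ) 1)] with t ht
  exact key t ht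

lemma smith_selfbound (hTcont : ContinuousOn T {x | ∀ i, 0 ≤ x i ∧ x i ≤ p i})
    (hJ : ∀ x : Fin n → ℝ, (∀ i, 0 < x i ∧ x i < p i) →
      HasFDerivAt T (LinearMap.toContinuousLinearMap (Matrix.toLin' (J x))) x)
    (hJcont : ContinuousOn J {x | ∀ i, 0 < x i ∧ x i < p i})
    (hC : ∀ x y : Fin n → ℝ, (∀ i, 0 < x i) → (∀ i, x i < y i) → (∀ i, y i < p i) →
      (∀ i j, J y i j ≤ J x i j) ∧ J y ≠ J x)
    (hT0 : T 0 = 0)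
    {v : Fin n → ℝ} (hv : ∀ i, 0 < v i ∧ v i < p i) (i : Fin n) :
    (J v).mulVec v i ≤ T v i := by
  have hδS : ∀ δ ∈ Ioo (0:ℝ) 1, ∀ k, 0 < (δ • v) k ∧ (δ • v) k < p k := by
    intro δ hδ k
    simp only [Pi.smul_apply, smul_eq_mul]
    constructor
    · exact mul_pos hδ.1 (hv k).1
    · nlinarith [(hv k).1, (hv k).2, hδ.2]
  have key : ∀ δ ∈ Ioo (0:ℝ) 1,
      (1 - δ) * (J v).mulVec v i + T (δ • v) i ≤ T v i := by
    intro δ hδ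
    have h := (smith_mvt hTcont hJ hJcont hC (hδS δ hδ) hv
      (fun k => by
        simp only [Pi.smul_apply, smul_eq_mul]
        nlinarith [(hv k).1, hδ.2]) i).1
    have h2 : (J v).mulVec (v - δ • v) i = (1 - δ) * (J v).mulVec v i := by
      have : v - δ • v = (1 - δ) • v := by
        ext k; simp [smul_eq_mul]; ring
      rw [this, Matrix.mulVec_smul]
      simp [smul_eq_mul]
    rw [h2] at h
    linarith
  have h1 : Tendsto (fun δ : ℝ => (1 - δ) * (J v).mulVec v i + T (δ • v) i) (𝓝[>] (0:ℝ))
      (𝓝 ((J v).mulVec v i)) := by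
    have hγ : Tendsto (fun δ : ℝ => δ • v) (𝓝[>] (0:ℝ))
        (𝓝[{w : Fin n → ℝ | ∀ i, 0 ≤ w i ∧ w i ≤ p i}] 0) := by
      apply tendsto_nhdsWithin_of_tendsto_nhds_of_eventually_within
      · have : Tendsto (fun δ : ℝ => δ • v) (𝓝 (0:ℝ)) (𝓝 ((0:ℝ) • v)) :=
          (continuous_id.smul continuous_const).tendsto 0
        simpa using this.mono_left nhdsWithin_le_nhds
      · filter_upwards [Ioo_mem_nhdsGT_of_mem (by simp : (0:ℝ) ∈ Ico (0:ℝ) 1)] with δ hδ k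
        exact ⟨le_of_lt (hδS δ hδ k).1, le_of_lt (hδS δ hδ k).2⟩
    have h0B : (0 : Fin n → ℝ) ∈ {w : Fin n → ℝ | ∀ i, 0 ≤ w i ∧ w i ≤ p i} := by
      intro k
      constructor
      · simp
      · simp only [Pi.zero_apply]
        have h01 := (hδS (1/2) (by norm_num) k)
        nlinarith [(h01.1), (h01.2)]
    have hTδ : Tendsto (fun δ : ℝ => T (δ • v) i) (𝓝[>] (0:ℝ)) (𝓝 (0:ℝ)) := by
      have := ((continuous_apply i).tendsto _).comp
        ((hTcont.continuousWithinAt h0B).tendsto.comp hγ)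
      simpa [hT0, Function.comp_def] using this
    have hc : Tendsto (fun δ : ℝ => (1 - δ) * (J v).mulVec v i) (𝓝[>] (0:ℝ))
        (𝓝 ((J v).mulVec v i)) := by
      have : Tendsto (fun δ : ℝ => (1 - δ) * (J v).mulVec v i) (𝓝 (0:ℝ))
          (𝓝 ((1 - 0) * (J v).mulVec v i)) :=
        (continuous_const.sub continuous_id).mul continuous_const |>.tendsto 0
      simpa using this.mono_left nhdsWithin_le_nhds
    simpa using hc.add hTδ
  refine le_of_tendsto h1 ?_
  filter_upwards [Ioo_mem_nhdsGT_of_mem (by simp : (0:ℝ) ∈ Ico (0:ℝ) 1)] with δ hδ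
  exact key δ hδ

lemma smith_Tpos (hp : ∀ i, 0 < p i)
    (hTmaps : ∀ x : Fin n → ℝ, (∀ i, 0 ≤ x i ∧ x i ≤ p i) → ∀ i, 0 ≤ T x i ∧ T x i ≤ p i)
    (hTcont : ContinuousOn T {x | ∀ i, 0 ≤ x i ∧ x i ≤ p i})
    (hJ : ∀ x : Fin n → ℝ, (∀ i, 0 < x i ∧ x i < p i) →
      HasFDerivAt T (LinearMap.toContinuousLinearMap (Matrix.toLin' (J x))) x)
    (hJcont : ContinuousOn J {x | ∀ i, 0 < x i ∧ x i < p i})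
    (hM : ∀ x : Fin n → ℝ, (∀ i, 0 < x i ∧ x i < p i) → ∀ i j, 0 < J x i j)
    (hC : ∀ x y : Fin n → ℝ, (∀ i, 0 < x i) → (∀ i, x i < y i) → (∀ i, y i < p i) →
      (∀ i j, J y i j ≤ J x i j) ∧ J y ≠ J x)
    {x : Fin n → ℝ} (hx : ∀ i, 0 ≤ x i ∧ x i ≤ p i) (hx0 : x ≠ 0) (i : Fin n) :
    0 < T x i := by
  obtain ⟨j, hj⟩ : ∃ j, 0 < x j := by
    by_contra hcon
    push_neg at hcon
    exact hx0 (funext fun k => le_antisymm (hcon k) (hx k).1)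
  have hne : (Finset.univ : Finset (Fin n)).Nonempty := ⟨j, Finset.mem_univ j⟩
  set pm : ℝ := Finset.univ.inf' hne p with hpm
  have hpm0 : 0 < pm := by
    obtain ⟨k, _, hk⟩ := Finset.exists_mem_eq_inf' hne p
    rw [hpm, hk]; exact hp k
  have hpmle : ∀ k, pm ≤ p k := fun k => Finset.inf'_le _ (Finset.mem_univ k)
  set δ : ℝ := min (pm / 2) (x j / 2) with hδdef
  have hδ0 : 0 < δ := lt_min (by linarith) (by linarith)
  set x'' : Fin n → ℝ := fun k => min (x k) (p k - δ) with hx''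
  have hx''nonneg : ∀ k, 0 ≤ x'' k := by
    intro k
    apply le_min (hx k).1
    have := hpmle k
    have hδle : δ ≤ pm / 2 := min_le_left _ _
    linarith
  have hx''le : ∀ k, x'' k ≤ x k := fun k => min_le_left _ _
  have hx''lt : ∀ k, x'' k ≤ p k - δ := fun k => min_le_right _ _
  have hx''j : 0 < x'' j := by
    apply lt_min hj
    have := hpmle j
    have hδle : δ ≤ pm / 2 := min_le_left _ _
    linarith
  have hbS : ∀ η ∈ Ioo (0:ℝ) δ, ∀ k, 0 < (x'' + (fun _ : Fin n => η)) k ∧ (x'' + (fun _ : Fin n => η)) k < p k := by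
    intro η hη k
    have h1 : (x'' + (fun _ : Fin n => η)) k = x'' k + η := rfl
    rw [h1]
    exact ⟨by linarith [hx''nonneg k, hη.1], by linarith [hx''lt k, hη.2]⟩
  have haS : ∀ η ∈ Ioo (0:ℝ) δ, ∀ k, 0 < (fun _ : Fin n => η) k ∧ (fun _ : Fin n => η) k < p k := by
    intro η hη k
    have hδle : δ ≤ pm / 2 := min_le_left _ _
    exact ⟨hη.1, by have := hpmle k; linarith [hη.2]⟩
  set bref : Fin n → ℝ := x'' + (fun _ : Fin n => δ / 2) with hbref
  have hbrefS : ∀ k, 0 < bref k ∧ bref k < p k := hbS (δ/2) ⟨by linarith, by linarith⟩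
  set c : ℝ := (J bref).mulVec x'' i with hc
  have hc0 : 0 < c := by
    rw [hc, smith_mulVec_apply]
    have hterm : 0 < J bref i j * x'' j := mul_pos (hM bref hbrefS i j) hx''j
    refine lt_of_lt_of_le hterm ?_
    apply Finset.single_le_sum (f := fun k => J bref i k * x'' k) ?_ (Finset.mem_univ j)
    intro k _
    exact mul_nonneg (le_of_lt (hM bref hbrefS i k)) (hx''nonneg k)
  have key : ∀ η ∈ Ioo (0:ℝ) (δ/2), c ≤ T (x'' + (fun _ : Fin n => η)) i := by
    intro η hη
    have hηδ : η ∈ Ioo (0:ℝ) δ := ⟨hη.1, by linarith [hη.2]⟩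
    have hmvt := (smith_mvt hTcont hJ hJcont hC (haS η hηδ) (hbS η hηδ)
      (fun k => by
        have h1 : (x'' + (fun _ : Fin n => η)) k = x'' k + η := rfl
        rw [h1]; linarith [hx''nonneg k]) i).1
    have hdiff : (x'' + (fun _ : Fin n => η)) - (fun _ : Fin n => η) = x'' := by
      ext k; simp
    rw [hdiff] at hmvt
    have hJcomp : c ≤ (J (x'' + fun _ => η)).mulVec x'' i := by
      rw [hc, smith_mulVec_apply, smith_mulVec_apply]
      apply Finset.sum_le_sum
      intro k _
      refine mul_le_mul_of_nonneg_right ?_ (hx''nonneg k)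
      refine smith_J_antitone hJcont hC (hbS η hηδ) hbrefS ?_ i k
      intro l
      have h1 : (x'' + (fun _ : Fin n => η)) l = x'' l + η := rfl
      have h2 : bref l = x'' l + δ / 2 := rfl
      rw [h1, h2]; linarith [hη.2]
    have hTa : 0 ≤ T (fun _ : Fin n => η) i :=
      (hTmaps _ (fun k => ⟨le_of_lt (haS η hηδ k).1, le_of_lt (haS η hηδ k).2⟩) i).1
    linarith
  have hx''B : ∀ k, 0 ≤ x'' k ∧ x'' k ≤ p k := by
    intro k
    exact ⟨hx''nonneg k, by linarith [hx''lt k, hδ0]⟩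
  have hlim : Tendsto (fun η : ℝ => T (x'' + (fun _ : Fin n => η)) i) (𝓝[>] (0:ℝ)) (𝓝 (T x'' i)) := by
    have hγ : Tendsto (fun η : ℝ => x'' + (fun _ : Fin n => η)) (𝓝[>] (0:ℝ))
        (𝓝[{w : Fin n → ℝ | ∀ i, 0 ≤ w i ∧ w i ≤ p i}] x'') := by
      apply tendsto_nhdsWithin_of_tendsto_nhds_of_eventually_within
      · rw [tendsto_pi_nhds]
        intro k
        have h1 : ∀ η : ℝ, (x'' + (fun _ : Fin n => η)) k = x'' k + η := fun _ => rfl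
        simp only [h1]
        have : Tendsto (fun η : ℝ => x'' k + η) (𝓝 (0:ℝ)) (𝓝 (x'' k + 0)) :=
          (continuous_const.add continuous_id).tendsto 0
        simpa using this.mono_left nhdsWithin_le_nhds
      · filter_upwards [Ioo_mem_nhdsGT_of_mem (by simp [hδ0] : (0:ℝ) ∈ Ico (0:ℝ) δ)] with η hη k
        exact ⟨le_of_lt (hbS η hη k).1, le_of_lt (hbS η hη k).2⟩
    exact ((continuous_apply i).tendsto _).comp ((hTcont.continuousWithinAt hx''B).tendsto.comp hγ)
  have hTx'' : c ≤ T x'' i := by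
    refine ge_of_tendsto hlim ?_
    filter_upwards [Ioo_mem_nhdsGT_of_mem (by simp [hδ0] : (0:ℝ) ∈ Ico (0:ℝ) (δ/2))] with η hη
    exact key η hη
  have hmono := smith_mono_B hp hTcont hJ hJcont hM hC hx''B hx hx''le i
  linarith

end



lemma smith_mulVec_apply' {n : ℕ} {R : Type*} [CommRing R] (M : Matrix (Fin n) (Fin n) R)
    (x : Fin n → R) (i : Fin n) : M.mulVec x i = ∑ j, M i j * x j := by
  simp [Matrix.mulVec, dotProduct]


lemma smith_eigen {n : ℕ} {A : Matrix (Fin n) (Fin n) ℝ} (hA : ∀ i j, 0 < A i j)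
    {μ : ℂ} (hμ : μ ∈ spectrum ℂ (A.map Complex.ofReal)) :
    ∃ w : Fin n → ℝ, (∀ i, 0 < w i) ∧ (∀ i, ‖μ‖ * w i ≤ A.mulVec w i) := by
  rw [spectrum.mem_iff] at hμ
  rw [Matrix.isUnit_iff_isUnit_det, isUnit_iff_ne_zero, not_not] at hμ
  obtain ⟨u, hu0, hu⟩ := Matrix.exists_mulVec_eq_zero_iff.mpr hμ
  have hAu : (A.map Complex.ofReal).mulVec u = μ • u := by
    have h1 : ((algebraMap ℂ (Matrix (Fin n) (Fin n) ℂ)) μ - A.map Complex.ofReal).mulVec u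
        = ((algebraMap ℂ (Matrix (Fin n) (Fin n) ℂ)) μ).mulVec u
          - (A.map Complex.ofReal).mulVec u := Matrix.sub_mulVec _ _ _
    rw [hu] at h1
    have h2 : ((algebraMap ℂ (Matrix (Fin n) (Fin n) ℂ)) μ).mulVec u = μ • u := by
      rw [Algebra.algebraMap_eq_smul_one, Matrix.smul_mulVec, Matrix.one_mulVec]
    rw [h2] at h1
    have := sub_eq_zero.mp h1.symm
    exact this.symm
  set v : Fin n → ℝ := fun k => ‖u k‖ with hv
  have hvnonneg : ∀ k, 0 ≤ v k := fun k => norm_nonneg _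
  obtain ⟨j₀, hj₀⟩ : ∃ j₀, 0 < v j₀ := by
    by_contra hcon
    push_neg at hcon
    apply hu0
    ext k
    have h0 : v k = 0 := le_antisymm (hcon k) (hvnonneg k)
    have : ‖u k‖ = 0 := h0
    simpa using norm_eq_zero.mp this
  have hkey : ∀ i, ‖μ‖ * v i ≤ A.mulVec v i := by
    intro i
    have h1 : (A.map Complex.ofReal).mulVec u i = ∑ j, (A i j : ℂ) * u j := by
      rw [smith_mulVec_apply']
      simp [Matrix.map_apply]
    have h2 : ‖μ‖ * v i = ‖μ • u i‖ := by
      simp [hv, norm_smul]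
    have h3 : μ • u i = ∑ j, (A i j : ℂ) * u j := by
      rw [← h1, hAu]; rfl
    rw [smith_mulVec_apply', h2, h3]
    refine le_trans (norm_sum_le _ _) ?_
    apply le_of_eq
    apply Finset.sum_congr rfl
    intro j _
    rw [norm_mul, Complex.norm_real, Real.norm_eq_abs, abs_of_pos (hA i j)]
  refine ⟨A.mulVec v, ?_, ?_⟩
  · intro i
    rw [smith_mulVec_apply]
    have hterm : 0 < A i j₀ * v j₀ := mul_pos (hA i j₀) hj₀
    refine lt_of_lt_of_le hterm ?_
    apply Finset.single_le_sum (f := fun k => A i k * v k) ?_ (Finset.mem_univ j₀)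
    intro k _
    exact mul_nonneg (le_of_lt (hA i k)) (hvnonneg k)
  · intro i
    rw [smith_mulVec_apply, smith_mulVec_apply]
    have h4 : ∀ j, A.mulVec v j = ∑ k, A j k * v k := fun j => smith_mulVec_apply A v j
    calc ‖μ‖ * ∑ j, A i j * v j = ∑ j, A i j * (‖μ‖ * v j) := by
          rw [Finset.mul_sum]; apply Finset.sum_congr rfl; intro j _; ring
      _ ≤ ∑ j, A i j * A.mulVec v j := by
          apply Finset.sum_le_sum
          intro j _
          exact mul_le_mul_of_nonneg_left (hkey j) (le_of_lt (hA i j))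



section
variable {n : ℕ} {p : Fin n → ℝ} {T : (Fin n → ℝ) → (Fin n → ℝ)}

lemma smith_orbit_incr
    (hTmaps : ∀ x : Fin n → ℝ, (∀ i, 0 ≤ x i ∧ x i ≤ p i) → ∀ i, 0 ≤ T x i ∧ T x i ≤ p i)
    (hTcont : ContinuousOn T {x | ∀ i, 0 ≤ x i ∧ x i ≤ p i})
    (hmono : ∀ x y : Fin n → ℝ, (∀ i, 0 ≤ x i ∧ x i ≤ p i) → (∀ i, 0 ≤ y i ∧ y i ≤ p i) →
      (∀ i, x i ≤ y i) → ∀ i, T x i ≤ T y i)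
    {a : Fin n → ℝ} (ha : ∀ i, 0 ≤ a i ∧ a i ≤ p i) (hinc : ∀ i, a i ≤ T a i) :
    ∃ q : Fin n → ℝ, (∀ i, 0 ≤ q i ∧ q i ≤ p i) ∧ T q = q ∧ (∀ i, a i ≤ q i) ∧
      Tendsto (fun m => T^[m] a) atTop (𝓝 q) := by
  have hiterB : ∀ m, ∀ i, 0 ≤ T^[m] a i ∧ T^[m] a i ≤ p i := by
    intro m
    induction m with
    | zero => simpa using ha
    | succ m ih =>
      rw [Function.iterate_succ_apply']
      exact hTmaps _ ih
  have hstep : ∀ m, ∀ i, T^[m] a i ≤ T^[m+1] a i := by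
    intro m
    induction m with
    | zero => simpa using hinc
    | succ m ih =>
      rw [Function.iterate_succ_apply', Function.iterate_succ_apply']
      exact hmono _ _ (hiterB m) (hiterB (m+1)) ih
  have hmonoc : ∀ i, Monotone fun m => T^[m] a i := by
    intro i
    apply monotone_nat_of_le_succ
    intro m
    exact hstep m i
  have hbdd : ∀ i, BddAbove (range fun m => T^[m] a i) := by
    intro i
    refine ⟨p i, ?_⟩
    rintro _ ⟨m, rfl⟩
    exact (hiterB m i).2
  set q : Fin n → ℝ := fun i => ⨆ m, T^[m] a i with hq
  have htend : Tendsto (fun m => T^[m] a) atTop (𝓝 q) := by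
    rw [tendsto_pi_nhds]
    intro i
    exact tendsto_atTop_ciSup (hmonoc i) (hbdd i)
  have hqB : ∀ i, 0 ≤ q i ∧ q i ≤ p i := by
    intro i
    constructor
    · refine le_trans (ha i).1 ?_
      exact le_ciSup (hbdd i) 0
    · exact ciSup_le fun m => (hiterB m i).2
  have haq : ∀ i, a i ≤ q i := fun i => le_ciSup (hbdd i) 0
  have hfix : T q = q := by
    have htend' : Tendsto (fun m => T^[m] a) atTop
        (𝓝[{x : Fin n → ℝ | ∀ i, 0 ≤ x i ∧ x i ≤ p i}] q) :=
      tendsto_nhdsWithin_of_tendsto_nhds_of_eventually_within _ htend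
        (Eventually.of_forall fun m => hiterB m)
    have h1 : Tendsto (fun m => T (T^[m] a)) atTop (𝓝 (T q)) :=
      (hTcont.continuousWithinAt hqB).tendsto.comp htend'
    have h2 : Tendsto (fun m => T (T^[m] a)) atTop (𝓝 q) := by
      have : (fun m => T (T^[m] a)) = fun m => T^[m+1] a := by
        funext m
        rw [Function.iterate_succ_apply']
      rw [this]
      exact (tendsto_add_atTop_iff_nat 1).mpr htend
    exact tendsto_nhds_unique h1 h2
  exact ⟨q, hqB, hfix, haq, htend⟩

lemma smith_orbit_decr
    (hTmaps : ∀ x : Fin n → ℝ, (∀ i, 0 ≤ x i ∧ x i ≤ p i) → ∀ i, 0 ≤ T x i ∧ T x i ≤ p i)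
    (hTcont : ContinuousOn T {x | ∀ i, 0 ≤ x i ∧ x i ≤ p i})
    (hmono : ∀ x y : Fin n → ℝ, (∀ i, 0 ≤ x i ∧ x i ≤ p i) → (∀ i, 0 ≤ y i ∧ y i ≤ p i) →
      (∀ i, x i ≤ y i) → ∀ i, T x i ≤ T y i)
    {a : Fin n → ℝ} (ha : ∀ i, 0 ≤ a i ∧ a i ≤ p i) (hdec : ∀ i, T a i ≤ a i) :
    ∃ q : Fin n → ℝ, (∀ i, 0 ≤ q i ∧ q i ≤ p i) ∧ T q = q ∧ (∀ i, q i ≤ a i) ∧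
      Tendsto (fun m => T^[m] a) atTop (𝓝 q) := by
  have hiterB : ∀ m, ∀ i, 0 ≤ T^[m] a i ∧ T^[m] a i ≤ p i := by
    intro m
    induction m with
    | zero => simpa using ha
    | succ m ih =>
      rw [Function.iterate_succ_apply']
      exact hTmaps _ ih
  have hstep : ∀ m, ∀ i, T^[m+1] a i ≤ T^[m] a i := by
    intro m
    induction m with
    | zero => simpa using hdec
    | succ m ih =>
      have hB1 := hiterB (m+1)
      have ih' : ∀ i, T (T^[m] a) i ≤ T^[m] a i := by
        intro i; have := ih i; rwa [Function.iterate_succ_apply'] at this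
      rw [Function.iterate_succ_apply'] at hB1
      rw [Function.iterate_succ_apply', Function.iterate_succ_apply']
      exact hmono _ _ hB1 (hiterB m) ih'
  have hmonoc : ∀ i, Antitone fun m => T^[m] a i := by
    intro i
    apply antitone_nat_of_succ_le
    intro m
    exact hstep m i
  have hbdd : ∀ i, BddBelow (range fun m => T^[m] a i) := by
    intro i
    refine ⟨0, ?_⟩
    rintro _ ⟨m, rfl⟩
    exact (hiterB m i).1
  set q : Fin n → ℝ := fun i => ⨅ m, T^[m] a i with hq
  have htend : Tendsto (fun m => T^[m] a) atTop (𝓝 q) := by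
    rw [tendsto_pi_nhds]
    intro i
    exact tendsto_atTop_ciInf (hmonoc i) (hbdd i)
  have hqB : ∀ i, 0 ≤ q i ∧ q i ≤ p i := by
    intro i
    constructor
    · exact le_ciInf fun m => (hiterB m i).1
    · refine le_trans ?_ (ha i).2
      exact ciInf_le (hbdd i) 0
  have haq : ∀ i, q i ≤ a i := fun i => ciInf_le (hbdd i) 0
  have hfix : T q = q := by
    have htend' : Tendsto (fun m => T^[m] a) atTop
        (𝓝[{x : Fin n → ℝ | ∀ i, 0 ≤ x i ∧ x i ≤ p i}] q) :=
      tendsto_nhdsWithin_of_tendsto_nhds_of_eventually_within _ htend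
        (Eventually.of_forall fun m => hiterB m)
    have h1 : Tendsto (fun m => T (T^[m] a)) atTop (𝓝 (T q)) :=
      (hTcont.continuousWithinAt hqB).tendsto.comp htend'
    have h2 : Tendsto (fun m => T (T^[m] a)) atTop (𝓝 q) := by
      have : (fun m => T (T^[m] a)) = fun m => T^[m+1] a := by
        funext m
        rw [Function.iterate_succ_apply']
      rw [this]
      exact (tendsto_add_atTop_iff_nat 1).mpr htend
    exact tendsto_nhds_unique h1 h2
  exact ⟨q, hqB, hfix, haq, htend⟩

end


section
variable {n : ℕ} {p : Fin n → ℝ} {T : (Fin n → ℝ) → (Fin n → ℝ)}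
  {J : (Fin n → ℝ) → Matrix (Fin n) (Fin n) ℝ}

lemma smith_unique_aux
    (hTcont : ContinuousOn T {x | ∀ i, 0 ≤ x i ∧ x i ≤ p i})
    (hJ : ∀ x : Fin n → ℝ, (∀ i, 0 < x i ∧ x i < p i) →
      HasFDerivAt T (LinearMap.toContinuousLinearMap (Matrix.toLin' (J x))) x)
    (hJcont : ContinuousOn J {x | ∀ i, 0 < x i ∧ x i < p i})
    (hM : ∀ x : Fin n → ℝ, (∀ i, 0 < x i ∧ x i < p i) → ∀ i j, 0 < J x i j)
    (hC : ∀ x y : Fin n → ℝ, (∀ i, 0 < x i) → (∀ i, x i < y i) → (∀ i, y i < p i) →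
      (∀ i j, J y i j ≤ J x i j) ∧ J y ≠ J x)
    (hT0 : T 0 = 0)
    {q r : Fin n → ℝ} (hq : ∀ i, 0 < q i ∧ q i < p i) (hr : ∀ i, 0 < r i ∧ r i < p i)
    (hfq : T q = q) (hfr : T r = r) : ∀ i, r i ≤ q i := by
  intro i
  have hne : (Finset.univ : Finset (Fin n)).Nonempty := ⟨i, Finset.mem_univ i⟩
  set s : ℝ := Finset.univ.inf' hne (fun k => q k / r k) with hs
  obtain ⟨istar, _, histar⟩ := Finset.exists_mem_eq_inf' hne (fun k => q k / r k)
  have hs_le : ∀ k, s ≤ q k / r k := fun k => Finset.inf'_le _ (Finset.mem_univ k)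
  have hs_pos : 0 < s := by
    rw [hs, histar]
    exact div_pos (hq istar).1 (hr istar).1
  have hsr_le_q : ∀ k, s * r k ≤ q k := by
    intro k
    have := hs_le k
    rw [le_div_iff₀ (hr k).1] at this
    exact this
  by_cases hs1 : 1 ≤ s
  · have := hsr_le_q i
    nlinarith [(hr i).1]
  · push_neg at hs1
    exfalso
    set u : Fin n → ℝ := s • r with hu
    set m : Fin n → ℝ := (s / 2) • r with hm
    have huS : ∀ k, 0 < u k ∧ u k < p k := by
      intro k
      have h1 : u k = s * r k := rfl
      rw [h1]
      exact ⟨mul_pos hs_pos (hr k).1, lt_of_le_of_lt (hsr_le_q k) (hq k).2⟩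
    have hmS : ∀ k, 0 < m k ∧ m k < p k := by
      intro k
      have h1 : m k = s / 2 * r k := rfl
      rw [h1]
      constructor
      · exact mul_pos (by linarith) (hr k).1
      · have := (huS k).2
        have h2 : u k = s * r k := rfl
        nlinarith [(hr k).1]
    have hmu : ∀ k, m k ≤ u k := by
      intro k
      have h1 : m k = s / 2 * r k := rfl
      have h2 : u k = s * r k := rfl
      rw [h1, h2]
      nlinarith [(hr k).1]
    have hmu' : ∀ k, m k < u k := by
      intro k
      have h1 : m k = s / 2 * r k := rfl
      have h2 : u k = s * r k := rfl
      rw [h1, h2]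
      nlinarith [(hr k).1]
    -- lower bound on T u
    have hlow : ∀ k, s / 2 * ((J u).mulVec r k + (J m).mulVec r k) ≤ T u k := by
      intro k
      have h1 := (smith_mvt hTcont hJ hJcont hC hmS huS hmu k).1
      have h2 : u - m = (s / 2) • r := by
        ext l
        have : u l - m l = s * r l - s / 2 * r l := rfl
        simp only [Pi.sub_apply, Pi.smul_apply, smul_eq_mul]
        have hul : u l = s * r l := rfl
        have hml : m l = s / 2 * r l := rfl
        rw [hul, hml]; ring
      rw [h2, Matrix.mulVec_smul] at h1
      have h3 := smith_selfbound hTcont hJ hJcont hC hT0 hmS k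
      have h4 : (J m).mulVec m k = s / 2 * (J m).mulVec r k := by
        have h5 : m = (s / 2) • r := rfl
        calc (J m).mulVec m k = (J m).mulVec ((s/2) • r) k := by rw [← h5]
          _ = ((s/2) • (J m).mulVec r) k := by rw [Matrix.mulVec_smul]
          _ = s / 2 * (J m).mulVec r k := rfl
      have h6 : ((s/2) • (J u).mulVec r) k = s/2 * (J u).mulVec r k := rfl
      rw [h6] at h1
      rw [h4] at h3
      linarith
    -- strict inequality between the two mulVecs at some coordinate
    obtain ⟨hJle, hJne⟩ := hC m u (fun k => (hmS k).1) hmu' (fun k => (huS k).2)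
    obtain ⟨i0, j0, hij⟩ : ∃ i0 j0, J u i0 j0 < J m i0 j0 := by
      by_contra hcon
      push_neg at hcon
      apply hJne
      ext i0 j0
      exact le_antisymm (hJle i0 j0) (hcon i0 j0)
    have hstrict : (J u).mulVec r i0 < (J m).mulVec r i0 := by
      rw [smith_mulVec_apply, smith_mulVec_apply]
      apply Finset.sum_lt_sum
      · intro j _
        exact mul_le_mul_of_nonneg_right (hJle i0 j) (le_of_lt (hr j).1)
      · exact ⟨j0, Finset.mem_univ j0, by
          exact mul_lt_mul_of_pos_right hij (hr j0).1⟩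
    -- T u ≥ s (J u) r, strict at i0
    have hTu_ge : ∀ k, s * (J u).mulVec r k ≤ T u k := by
      intro k
      have h1 := hlow k
      have h2 : (J u).mulVec r k ≤ (J m).mulVec r k := by
        rw [smith_mulVec_apply, smith_mulVec_apply]
        apply Finset.sum_le_sum
        intro j _
        exact mul_le_mul_of_nonneg_right (hJle k j) (le_of_lt (hr j).1)
      have h2' : s/2 * (J u).mulVec r k ≤ s/2 * (J m).mulVec r k :=
        mul_le_mul_of_nonneg_left h2 (by linarith)
      linarith
    have hTu_gt : s * (J u).mulVec r i0 < T u i0 := by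
      have h1 := hlow i0
      have h2' : s/2 * (J u).mulVec r i0 < s/2 * (J m).mulVec r i0 :=
        mul_lt_mul_of_pos_left hstrict (by linarith)
      linarith
    -- upper bound: r ≤ T u + (1-s) (J u) r
    have hup : ∀ k, r k ≤ T u k + (1 - s) * (J u).mulVec r k := by
      intro k
      have h1 := (smith_mvt hTcont hJ hJcont hC huS hr (fun l => by
        have h2 : u l = s * r l := rfl
        rw [h2]
        nlinarith [(hr l).1]) k).2
      have h2 : r - u = (1 - s) • r := by
        ext l
        simp only [Pi.sub_apply, Pi.smul_apply, smul_eq_mul]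
        have hul : u l = s * r l := rfl
        rw [hul]; ring
      rw [h2, Matrix.mulVec_smul] at h1
      have h3 : ((1 - s) • (J u).mulVec r) k = (1 - s) * (J u).mulVec r k := rfl
      rw [h3] at h1
      rw [hfr] at h1
      linarith
    -- conclude s r ≤ T u with strict at i0
    have hsr_le_Tu : ∀ k, s * r k ≤ T u k := by
      intro k
      have h1 := hup k
      have h2 := hTu_ge k
      have hposJ : 0 ≤ (J u).mulVec r k := by
        rw [smith_mulVec_apply]
        apply Finset.sum_nonneg
        intro j _
        exact mul_nonneg (le_of_lt (hM u huS k j)) (le_of_lt (hr j).1)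
      nlinarith [hs_pos, hs1]
    have hsr_lt_Tu : s * r i0 < T u i0 := by
      have h1 := hup i0
      nlinarith [hs_pos, hs1]
    -- u ≤ T u, u ≠ T u
    have huTu : ∀ k, u k ≤ T u k := by
      intro k
      have : u k = s * r k := rfl
      rw [this]
      exact hsr_le_Tu k
    have hune : u ≠ T u := by
      intro hcon
      have hcf : u i0 = T u i0 := congrFun hcon i0
      have h2 : u i0 = s * r i0 := rfl
      rw [h2] at hcf
      linarith
    -- T u ≤ q
    have hu_le_q : ∀ k, u k ≤ q k := by
      intro k
      have : u k = s * r k := rfl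
      rw [this]
      exact hsr_le_q k
    have hTu_le_q : ∀ k, T u k ≤ q k := by
      intro k
      have := smith_mono_S hTcont hJ hJcont hM hC huS hq hu_le_q k
      rwa [hfq] at this
    have hTuS : ∀ k, 0 < T u k ∧ T u k < p k := by
      intro k
      exact ⟨lt_of_lt_of_le (huS k).1 (huTu k), lt_of_le_of_lt (hTu_le_q k) (hq k).2⟩
    -- strict step : ∀ k, T u k < q k
    have hfinal : ∀ k, T u k < q k := by
      intro k
      have h1 := smith_strict_S hTcont hJ hJcont hM hC huS hTuS huTu hune k
      have h2 := smith_mono_S hTcont hJ hJcont hM hC hTuS hq hTu_le_q k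
      rw [hfq] at h2
      linarith
    -- contradiction at istar
    have h1 : s * r istar = q istar := by
      rw [hs, histar, div_mul_cancel₀ _ (ne_of_gt (hr istar).1)]
    have h2 := hsr_le_Tu istar
    have h3 := hfinal istar
    linarith
end


lemma smith_iterB {n : ℕ} {p : Fin n → ℝ} {T : (Fin n → ℝ) → (Fin n → ℝ)}
    (hTmaps : ∀ x : Fin n → ℝ, (∀ i, 0 ≤ x i ∧ x i ≤ p i) → ∀ i, 0 ≤ T x i ∧ T x i ≤ p i)
    {x : Fin n → ℝ} (hx : ∀ i, 0 ≤ x i ∧ x i ≤ p i) :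
    ∀ m, ∀ i, 0 ≤ T^[m] x i ∧ T^[m] x i ≤ p i := by
  intro m
  induction m with
  | zero => simpa using hx
  | succ m ih =>
    rw [Function.iterate_succ_apply']
    exact hTmaps _ ih

lemma smith_iter_le {n : ℕ} {p : Fin n → ℝ} {T : (Fin n → ℝ) → (Fin n → ℝ)}
    (hTmaps : ∀ x : Fin n → ℝ, (∀ i, 0 ≤ x i ∧ x i ≤ p i) → ∀ i, 0 ≤ T x i ∧ T x i ≤ p i)
    (hmono : ∀ x y : Fin n → ℝ, (∀ i, 0 ≤ x i ∧ x i ≤ p i) → (∀ i, 0 ≤ y i ∧ y i ≤ p i) →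
      (∀ i, x i ≤ y i) → ∀ i, T x i ≤ T y i)
    {x y : Fin n → ℝ} (hx : ∀ i, 0 ≤ x i ∧ x i ≤ p i) (hy : ∀ i, 0 ≤ y i ∧ y i ≤ p i)
    (hxy : ∀ i, x i ≤ y i) : ∀ m, ∀ i, T^[m] x i ≤ T^[m] y i := by
  intro m
  induction m with
  | zero => simpa using hxy
  | succ m ih =>
    rw [Function.iterate_succ_apply', Function.iterate_succ_apply']
    exact hmono _ _ (smith_iterB hTmaps hx m) (smith_iterB hTmaps hy m) ih

/-- **Smith's fixed point theorem for monotone concave operators, case ρ(DT(0)) > 1.**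
`T : [0,p] → [0,p]` is continuous, `C¹` on the open box `(0,p)` with Jacobian matrix `J`,
`DT(0) = J0` is the limit of `J x` as `x → 0`, `x > 0`; `T` satisfies the monotonicity
condition (M) and the concavity condition (C), `Tp < p` and `T0 = 0`.  If some (complex)
eigenvalue of `DT(0)` has modulus strictly greater than `1` (spectral radius `> 1`), then
`T` has a unique nonzero fixed point `q`, which moreover lies in the open box `(0,p)`,
and every orbit of `T` starting at a nonzero point of `[0,p]` converges to `q`. -/
theorem smith_fixed_point_spectral_radius_gt_one
    (n : ℕ) (p : Fin n → ℝ) (hp : ∀ i, 0 < p i)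
    (T : (Fin n → ℝ) → (Fin n → ℝ))
    (hTmaps : ∀ x : Fin n → ℝ, (∀ i, 0 ≤ x i ∧ x i ≤ p i) → ∀ i, 0 ≤ T x i ∧ T x i ≤ p i)
    (hTcont : ContinuousOn T {x | ∀ i, 0 ≤ x i ∧ x i ≤ p i})
    (J : (Fin n → ℝ) → Matrix (Fin n) (Fin n) ℝ)
    (hJ : ∀ x : Fin n → ℝ, (∀ i, 0 < x i ∧ x i < p i) →
      HasFDerivAt T (LinearMap.toContinuousLinearMap (Matrix.toLin' (J x))) x)
    (hJcont : ContinuousOn J {x | ∀ i, 0 < x i ∧ x i < p i})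
    (J0 : Matrix (Fin n) (Fin n) ℝ)
    (hJ0 : Tendsto J (𝓝[{x | ∀ i, 0 < x i ∧ x i < p i}] 0) (𝓝 J0))
    (hM : ∀ x : Fin n → ℝ, (∀ i, 0 < x i ∧ x i < p i) → ∀ i j, 0 < J x i j)
    (hC : ∀ x y : Fin n → ℝ, (∀ i, 0 < x i) → (∀ i, x i < y i) → (∀ i, y i < p i) →
      (∀ i j, J y i j ≤ J x i j) ∧ J y ≠ J x)
    (hTp : ∀ i, T p i < p i)
    (hT0 : T 0 = 0)
    (hρ : ∃ μ : ℂ, μ ∈ spectrum ℂ (J0.map Complex.ofReal) ∧ 1 < ‖μ‖) :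
    ∃ q : Fin n → ℝ, (∀ i, 0 ≤ q i ∧ q i ≤ p i) ∧ q ≠ 0 ∧ T q = q ∧
      (∀ i, 0 < q i ∧ q i < p i) ∧
      (∀ x : Fin n → ℝ, (∀ i, 0 ≤ x i ∧ x i ≤ p i) → x ≠ 0 →
        Tendsto (fun m => T^[m] x) atTop (𝓝 q)) ∧
      (∀ q', (∀ i, 0 ≤ q' i ∧ q' i ≤ p i) → q' ≠ 0 → T q' = q' → q' = q) := by
  classical
  rcases Nat.eq_zero_or_pos n with hn0 | hn0
  · exfalso
    obtain ⟨μ, hμ, _⟩ := hρ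
    rw [spectrum.mem_iff] at hμ
    apply hμ
    haveI : Subsingleton (Matrix (Fin n) (Fin n) ℂ) := by
      subst hn0
      exact ⟨fun M N => funext fun i => i.elim0⟩
    exact isUnit_of_subsingleton _
  haveI hnemp : Nonempty (Fin n) := ⟨⟨0, hn0⟩⟩
  have hne : (Finset.univ : Finset (Fin n)).Nonempty := ⟨Classical.arbitrary _, Finset.mem_univ _⟩
  have hmono : ∀ x y : Fin n → ℝ, (∀ i, 0 ≤ x i ∧ x i ≤ p i) → (∀ i, 0 ≤ y i ∧ y i ≤ p i) →
      (∀ i, x i ≤ y i) → ∀ i, T x i ≤ T y i :=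
    fun x y hx hy hxy i => smith_mono_B hp hTcont hJ hJcont hM hC hx hy hxy i
  -- J0 is entrywise positive
  have hmidS : ∀ i, 0 < ((1/2 : ℝ) • p) i ∧ ((1/2 : ℝ) • p) i < p i := by
    intro i
    have h1 : ((1/2 : ℝ) • p) i = p i / 2 := by
      simp [Pi.smul_apply, smul_eq_mul]; ring
    rw [h1]
    constructor <;> linarith [hp i]
  have hJ0pos : ∀ i j, 0 < J0 i j := fun i j =>
    lt_of_lt_of_le (hM _ hmidS i j) (smith_J0_ge hJ0 hC hmidS i j)
  -- eigen data
  obtain ⟨μ, hμ, hμ1⟩ := hρ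
  obtain ⟨w, hw, hww⟩ := smith_eigen hJ0pos hμ
  -- subsolution scale
  set c0 : ℝ := Finset.univ.inf' hne (fun i => p i / w i) with hc0
  have hc00 : 0 < c0 := by
    obtain ⟨k, _, hk⟩ := Finset.exists_mem_eq_inf' hne (fun i => p i / w i)
    rw [hc0, hk]
    exact div_pos (hp k) (hw k)
  have hscaleS : ∀ ε : ℝ, 0 < ε → ε < c0 → ∀ i, 0 < (ε • w) i ∧ (ε • w) i < p i := by
    intro ε hε hεc i
    have h1 : (ε • w) i = ε * w i := rfl
    rw [h1]
    refine ⟨mul_pos hε (hw i), ?_⟩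
    have h2 : ε < p i / w i := lt_of_lt_of_le hεc (Finset.inf'_le _ (Finset.mem_univ i))
    exact (lt_div_iff₀ (hw i)).mp h2
  -- J(εw) w → J0 w > w eventually
  have hpath : Tendsto (fun ε : ℝ => ε • w) (𝓝[>] (0:ℝ))
      (𝓝[{x : Fin n → ℝ | ∀ i, 0 < x i ∧ x i < p i}] 0) := by
    apply tendsto_nhdsWithin_of_tendsto_nhds_of_eventually_within
    · have : Tendsto (fun ε : ℝ => ε • w) (𝓝 (0:ℝ)) (𝓝 ((0:ℝ) • w)) :=
        (continuous_id.smul continuous_const).tendsto 0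
      simpa using this.mono_left nhdsWithin_le_nhds
    · filter_upwards [Ioo_mem_nhdsGT_of_mem (by simp [hc00] : (0:ℝ) ∈ Ico (0:ℝ) c0)] with ε hε
      exact hscaleS ε hε.1 hε.2
  have hmv_cont : ∀ i : Fin n, Continuous fun M : Matrix (Fin n) (Fin n) ℝ => M.mulVec w i := by
    intro i
    have : (fun M : Matrix (Fin n) (Fin n) ℝ => M.mulVec w i)
        = fun M => ∑ j, M i j * w j := by
      funext M
      exact smith_mulVec_apply M w i
    rw [this]
    exact continuous_finset_sum _ fun j _ =>
      ((continuous_id.matrix_elem i j).mul continuous_const)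
  have hev : ∀ᶠ ε in 𝓝[>] (0:ℝ), ∀ i, w i < (J (ε • w)).mulVec w i := by
    rw [eventually_all]
    intro i
    have htend : Tendsto (fun ε : ℝ => (J (ε • w)).mulVec w i) (𝓝[>] (0:ℝ))
        (𝓝 (J0.mulVec w i)) := ((hmv_cont i).tendsto _).comp (hJ0.comp hpath)
    have hlt : w i < J0.mulVec w i := by
      have := hww i
      nlinarith [hw i, hμ1]
    exact htend.eventually (eventually_gt_nhds hlt)
  obtain ⟨c1, hc1pos, hc1⟩ := (nhdsGT_basis (0:ℝ)).eventually_iff.mp hev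
  -- good subsolution scale: any 0 < ε ≤ εgood works
  set εg : ℝ := min c0 c1 / 2 with hεg
  have hεg0 : 0 < εg := by
    rw [hεg]
    have := lt_min hc00 hc1pos
    linarith
  have hgood : ∀ ε : ℝ, 0 < ε → ε ≤ εg →
      (∀ i, 0 < (ε • w) i ∧ (ε • w) i < p i) ∧ (∀ i, (ε • w) i ≤ T (ε • w) i) := by
    intro ε hε hεle
    have hεc0 : ε < c0 := by
      rw [hεg] at hεle
      have := min_le_left c0 c1
      linarith [lt_min hc00 hc1pos]
    have hεc1 : ε < c1 := by
      rw [hεg] at hεle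
      have := min_le_right c0 c1
      linarith [lt_min hc00 hc1pos]
    have hS := hscaleS ε hε hεc0
    refine ⟨hS, ?_⟩
    intro i
    have h1 := smith_selfbound hTcont hJ hJcont hC hT0 hS i
    have h2 : (J (ε • w)).mulVec (ε • w) i = ε * (J (ε • w)).mulVec w i := by
      rw [Matrix.mulVec_smul]
      rfl
    have h3 : w i < (J (ε • w)).mulVec w i := hc1 ⟨hε, hεc1⟩ i
    have h4 : (ε • w) i = ε * w i := rfl
    rw [h4]
    rw [h2] at h1
    nlinarith
  -- fixed point from decreasing orbit at p
  have hpB : ∀ i, 0 ≤ p i ∧ p i ≤ p i := fun i => ⟨le_of_lt (hp i), le_refl _⟩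
  obtain ⟨q, hqB, hqfix, hqlep, hqtend⟩ :=
    smith_orbit_decr hTmaps hTcont hmono hpB (fun i => le_of_lt (hTp i))
  -- increasing orbit from a := εg • w
  have hgoodg := hgood εg hεg0 (le_refl _)
  have haB : ∀ i, 0 ≤ (εg • w) i ∧ (εg • w) i ≤ p i :=
    fun i => ⟨le_of_lt (hgoodg.1 i).1, le_of_lt (hgoodg.1 i).2⟩
  obtain ⟨q1, hq1B, hq1fix, hq1ge, hq1tend⟩ :=
    smith_orbit_incr hTmaps hTcont hmono haB hgoodg.2
  have hq1pos : ∀ i, 0 < q1 i := fun i => lt_of_lt_of_le (hgoodg.1 i).1 (hq1ge i)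
  -- q1 ≤ q
  have hq1leq : ∀ i, q1 i ≤ q i := by
    intro i
    have hle := smith_iter_le hTmaps hmono haB hpB (fun i => le_of_lt (hgoodg.1 i).2)
    refine le_of_tendsto_of_tendsto
      (((continuous_apply i).tendsto _).comp hq1tend)
      (((continuous_apply i).tendsto _).comp hqtend) ?_
    filter_upwards with m
    exact hle m i
  -- q is interior
  have hqS : ∀ i, 0 < q i ∧ q i < p i := by
    intro i
    constructor
    · exact lt_of_lt_of_le (hq1pos i) (hq1leq i)
    · have h1 := hmono q p hqB hpB (fun k => (hqB k).2) i
      rw [hqfix] at h1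
      exact lt_of_le_of_lt h1 (hTp i)
  have hqne : q ≠ 0 := by
    intro hcon
    have := (hqS (Classical.arbitrary _)).1
    rw [hcon] at this
    simp at this
  -- uniqueness
  have huniq : ∀ q', (∀ i, 0 ≤ q' i ∧ q' i ≤ p i) → q' ≠ 0 → T q' = q' → q' = q := by
    intro q' hq'B hq'0 hq'fix
    have hq'S : ∀ i, 0 < q' i ∧ q' i < p i := by
      intro i
      constructor
      · have := smith_Tpos hp hTmaps hTcont hJ hJcont hM hC hq'B hq'0 i
        rwa [hq'fix] at this
      · have h1 := hmono q' p hq'B hpB (fun k => (hq'B k).2) i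
        rw [hq'fix] at h1
        exact lt_of_le_of_lt h1 (hTp i)
    have h1 := smith_unique_aux hTcont hJ hJcont hM hC hT0 hqS hq'S hqfix hq'fix
    have h2 := smith_unique_aux hTcont hJ hJcont hM hC hT0 hq'S hqS hq'fix hqfix
    funext i
    exact le_antisymm (h1 i) (h2 i)
  -- convergence of all orbits
  have hconv : ∀ x : Fin n → ℝ, (∀ i, 0 ≤ x i ∧ x i ≤ p i) → x ≠ 0 →
      Tendsto (fun m => T^[m] x) atTop (𝓝 q) := by
    intro x hxB hx0
    set y : Fin n → ℝ := T x with hy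
    have hyB : ∀ i, 0 ≤ y i ∧ y i ≤ p i := hTmaps x hxB
    have hypos : ∀ i, 0 < y i := fun i => smith_Tpos hp hTmaps hTcont hJ hJcont hM hC hxB hx0 i
    -- choose scale ε' ≤ εg with ε' w ≤ y
    set εy : ℝ := Finset.univ.inf' hne (fun i => y i / w i) with hεy
    have hεy0 : 0 < εy := by
      obtain ⟨k, _, hk⟩ := Finset.exists_mem_eq_inf' hne (fun i => y i / w i)
      rw [hεy, hk]
      exact div_pos (hypos k) (hw k)
    set ε' : ℝ := min εg εy with hε'
    have hε'0 : 0 < ε' := lt_min hεg0 hεy0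
    have hε'g : ε' ≤ εg := min_le_left _ _
    have hgood' := hgood ε' hε'0 hε'g
    have ha'B : ∀ i, 0 ≤ (ε' • w) i ∧ (ε' • w) i ≤ p i :=
      fun i => ⟨le_of_lt (hgood'.1 i).1, le_of_lt (hgood'.1 i).2⟩
    have ha'y : ∀ i, (ε' • w) i ≤ y i := by
      intro i
      have h1 : (ε' • w) i = ε' * w i := rfl
      rw [h1]
      have h2 : ε' ≤ y i / w i :=
        le_trans (min_le_right _ _) (Finset.inf'_le _ (Finset.mem_univ i))
      calc ε' * w i ≤ (y i / w i) * w i := mul_le_mul_of_nonneg_right h2 (le_of_lt (hw i))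
        _ = y i := div_mul_cancel₀ _ (ne_of_gt (hw i))
    obtain ⟨q2, hq2B, hq2fix, hq2ge, hq2tend⟩ :=
      smith_orbit_incr hTmaps hTcont hmono ha'B hgood'.2
    have hq2pos : q2 ≠ 0 := by
      intro hcon
      have h1 := hq2ge (Classical.arbitrary _)
      rw [hcon] at h1
      have h2 := (hgood'.1 (Classical.arbitrary _)).1
      simp only [Pi.zero_apply] at h1
      linarith
    have hq2eq : q2 = q := huniq q2 hq2B hq2pos hq2fix
    rw [hq2eq] at hq2tend
    -- squeeze T^[m] y between T^[m] (ε'•w) and T^[m] p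
    have hyq : Tendsto (fun m => T^[m] y) atTop (𝓝 q) := by
      rw [tendsto_pi_nhds]
      intro i
      have hlow := smith_iter_le hTmaps hmono ha'B hyB ha'y
      have hhigh := smith_iter_le hTmaps hmono hyB hpB (fun k => (hyB k).2)
      refine tendsto_of_tendsto_of_tendsto_of_le_of_le
        (((continuous_apply i).tendsto _).comp hq2tend)
        (((continuous_apply i).tendsto _).comp hqtend) ?_ ?_
      · intro m
        exact hlow m i
      · intro m
        exact hhigh m i
    have hshift : (fun m => T^[m] y) = fun m => T^[m+1] x := by
      funext m
      rw [hy, ← Function.iterate_succ_apply]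
    rw [hshift] at hyq
    exact (tendsto_add_atTop_iff_nat 1).mp hyq
  exact ⟨q, hqB, hqne, hqfix, hqS, hconv, huniq⟩
end

section
/- Let T : [0,p] → [0,q] and M : [0,q] → [0,r] be twice differentiable maps, each satisfying condition (M) (Jacobian entrywise positive at every interior point). Suppose that all second-order partial derivatives of T and of M are nonpositive on the interiors of their domains, and that for each map at least one second-order partial derivative is negative. Then the composite MT : [0,p] → [0,r] satisfies condition (M) and condition (C): D(MT)(x) > 0 entrywise for interior x, and D(MT)(y) ⪇ D(MT)(x) whenever 0 < x < y < p. -/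
open Filter Topology

/-- The continuous linear map `ℝ^n → ℝ^n` associated with a matrix (matrix-vector product). -/
noncomputable def matrixCLM (n : ℕ) (A : Matrix (Fin n) (Fin n) ℝ) :
    (Fin n → ℝ) →L[ℝ] (Fin n → ℝ) :=
  LinearMap.toContinuousLinearMap (Matrix.toLin' A)

/-- The continuous linear functional `ℝ^n → ℝ` with coefficient vector `c`
(`x ↦ ∑ k, c k * x k`); used to encode a row of partial derivatives. -/
noncomputable def rowCLM (n : ℕ) (c : Fin n → ℝ) : (Fin n → ℝ) →L[ℝ] ℝ :=
  ∑ k, c k • (ContinuousLinearMap.proj k : (Fin n → ℝ) →L[ℝ] ℝ)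

lemma matrixCLM_apply (n : ℕ) (A : Matrix (Fin n) (Fin n) ℝ) (v : Fin n → ℝ) (i : Fin n) :
    matrixCLM n A v i = ∑ k, A i k * v k := by
  simp [matrixCLM, Matrix.toLin'_apply, Matrix.mulVec, dotProduct]

lemma rowCLM_apply (n : ℕ) (c : Fin n → ℝ) (v : Fin n → ℝ) :
    rowCLM n c v = ∑ k, c k * v k := by
  simp [rowCLM, ContinuousLinearMap.sum_apply, smul_eq_mul]

section seg
variable {n : ℕ} {p : Fin n → ℝ} {f : (Fin n → ℝ) → ℝ}
  {f' : (Fin n → ℝ) → ((Fin n → ℝ) →L[ℝ] ℝ)} {x y : Fin n → ℝ}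

lemma seg_mem (hx : ∀ i, 0 < x i) (hxy : ∀ i, x i < y i) (hyp : ∀ i, y i < p i)
    {t : ℝ} (ht : t ∈ Set.Icc (0:ℝ) 1) :
    ∀ i, 0 < (x + t • (y - x)) i ∧ (x + t • (y - x)) i < p i := by
  intro i
  have h1 := ht.1; have h2 := ht.2
  have hxi := hx i; have hxyi := hxy i; have hypi := hyp i
  simp only [Pi.add_apply, Pi.smul_apply, Pi.sub_apply, smul_eq_mul]
  constructor <;> nlinarith

lemma seg_deriv (hx : ∀ i, 0 < x i) (hxy : ∀ i, x i < y i) (hyp : ∀ i, y i < p i)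
    (hd : ∀ z, (∀ i, 0 < z i ∧ z i < p i) → HasFDerivAt f (f' z) z)
    {t : ℝ} (ht : t ∈ Set.Icc (0:ℝ) 1) :
    HasDerivAt (fun s => f (x + s • (y - x))) (f' (x + t • (y - x)) (y - x)) t := by
  have hγ : HasDerivAt (fun s : ℝ => x + s • (y - x)) (y - x) t := by
    simpa using ((hasDerivAt_id t).smul_const (y - x)).const_add x
  exact (hd _ (seg_mem hx hxy hyp ht)).comp_hasDerivAt t hγ

lemma seg_le (hx : ∀ i, 0 < x i) (hxy : ∀ i, x i < y i) (hyp : ∀ i, y i < p i)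
    (hd : ∀ z, (∀ i, 0 < z i ∧ z i < p i) → HasFDerivAt f (f' z) z)
    (hsign : ∀ z, (∀ i, 0 < z i ∧ z i < p i) → f' z (y - x) ≤ 0) :
    f y ≤ f x := by
  set g : ℝ → ℝ := fun s => f (x + s • (y - x)) with hg
  have hcont : ContinuousOn g (Set.Icc 0 1) := fun t ht =>
    (seg_deriv hx hxy hyp hd ht).continuousAt.continuousWithinAt
  have hdiff : DifferentiableOn ℝ g (interior (Set.Icc (0:ℝ) 1)) := fun t ht =>
    ((seg_deriv hx hxy hyp hd (interior_subset ht)).differentiableAt).differentiableWithinAt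
  have hanti : AntitoneOn g (Set.Icc 0 1) := by
    refine antitoneOn_of_deriv_nonpos (convex_Icc 0 1) hcont hdiff ?_
    intro t ht
    rw [(seg_deriv hx hxy hyp hd (interior_subset ht)).deriv]
    exact hsign _ (seg_mem hx hxy hyp (interior_subset ht))
  have := hanti (Set.left_mem_Icc.2 one_pos.le) (Set.right_mem_Icc.2 one_pos.le) one_pos.le
  simpa [hg] using this

lemma seg_lt (hx : ∀ i, 0 < x i) (hxy : ∀ i, x i < y i) (hyp : ∀ i, y i < p i)
    (hd : ∀ z, (∀ i, 0 < z i ∧ z i < p i) → HasFDerivAt f (f' z) z)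
    (hsign : ∀ z, (∀ i, 0 < z i ∧ z i < p i) → f' z (y - x) < 0) :
    f y < f x := by
  set g : ℝ → ℝ := fun s => f (x + s • (y - x)) with hg
  have hcont : ContinuousOn g (Set.Icc 0 1) := fun t ht =>
    (seg_deriv hx hxy hyp hd ht).continuousAt.continuousWithinAt
  have hanti : StrictAntiOn g (Set.Icc 0 1) := by
    refine strictAntiOn_of_deriv_neg (convex_Icc 0 1) hcont ?_
    intro t ht
    rw [interior_Icc] at ht
    rw [(seg_deriv hx hxy hyp hd (Set.Ioo_subset_Icc_self ht)).deriv]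
    exact hsign _ (seg_mem hx hxy hyp (Set.Ioo_subset_Icc_self ht))
  have := hanti (Set.left_mem_Icc.2 one_pos.le) (Set.right_mem_Icc.2 one_pos.le) one_pos
  simpa [hg] using this

lemma seg_gt (hx : ∀ i, 0 < x i) (hxy : ∀ i, x i < y i) (hyp : ∀ i, y i < p i)
    (hd : ∀ z, (∀ i, 0 < z i ∧ z i < p i) → HasFDerivAt f (f' z) z)
    (hsign : ∀ z, (∀ i, 0 < z i ∧ z i < p i) → 0 < f' z (y - x)) :
    f x < f y := by
  have := seg_lt (f := fun z => -f z) (f' := fun z => -(f' z)) hx hxy hyp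
    (fun z hz => (hd z hz).neg) (fun z hz => by simpa using (hsign z hz))
  have h2 : -f y < -f x := this
  linarith

end seg

/-- **Composition of monotone maps with nonpositive second derivatives is monotone and
concave (Lemma on (M) and (C) for composites).**
`T : [0,p] → [0,q]` and `M : [0,q] → [0,r]` are twice differentiable, with Jacobian
matrices `JT, JM` (`∂T_i/∂x_j = JT x i j`) and second-order partial derivatives `HT, HM`
(`∂²T_i/∂x_k∂x_j = HT x i j k`).  Each satisfies (M) (entrywise positive Jacobian on the
open box), all second-order partials are nonpositive there, and at least one of them is
negative for each map.  Then the composite `M ∘ T`, whose Jacobian at `x` is the matrix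
product `JM (T x) * JT x` (chain rule), satisfies both (M) and (C). -/
theorem composite_monotone_concave
    (n : ℕ) (p q r : Fin n → ℝ)
    (hp : ∀ i, 0 < p i) (hq : ∀ i, 0 < q i) (hr : ∀ i, 0 < r i)
    (T M : (Fin n → ℝ) → (Fin n → ℝ))
    (hTmaps : ∀ x : Fin n → ℝ, (∀ i, 0 ≤ x i ∧ x i ≤ p i) → ∀ i, 0 ≤ T x i ∧ T x i ≤ q i)
    (hMmaps : ∀ x : Fin n → ℝ, (∀ i, 0 ≤ x i ∧ x i ≤ q i) → ∀ i, 0 ≤ M x i ∧ M x i ≤ r i)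
    (JT JM : (Fin n → ℝ) → Matrix (Fin n) (Fin n) ℝ)
    (HT HM : (Fin n → ℝ) → Fin n → Fin n → Fin n → ℝ)
    (hJT : ∀ x : Fin n → ℝ, (∀ i, 0 < x i ∧ x i < p i) → HasFDerivAt T (matrixCLM n (JT x)) x)
    (hJM : ∀ x : Fin n → ℝ, (∀ i, 0 < x i ∧ x i < q i) → HasFDerivAt M (matrixCLM n (JM x)) x)
    (hHT : ∀ x : Fin n → ℝ, (∀ i, 0 < x i ∧ x i < p i) → ∀ i j,
      HasFDerivAt (fun y => JT y i j) (rowCLM n (HT x i j)) x)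
    (hHM : ∀ x : Fin n → ℝ, (∀ i, 0 < x i ∧ x i < q i) → ∀ i j,
      HasFDerivAt (fun y => JM y i j) (rowCLM n (HM x i j)) x)
    (hMT : ∀ x : Fin n → ℝ, (∀ i, 0 < x i ∧ x i < p i) → ∀ i j, 0 < JT x i j)
    (hMM : ∀ x : Fin n → ℝ, (∀ i, 0 < x i ∧ x i < q i) → ∀ i j, 0 < JM x i j)
    (hnegT : ∀ x : Fin n → ℝ, (∀ i, 0 < x i ∧ x i < p i) → ∀ i j k, HT x i j k ≤ 0)
    (hnegM : ∀ x : Fin n → ℝ, (∀ i, 0 < x i ∧ x i < q i) → ∀ i j k, HM x i j k ≤ 0)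
    (hstrictT : ∃ i j k : Fin n, ∀ x : Fin n → ℝ, (∀ i', 0 < x i' ∧ x i' < p i') → HT x i j k < 0)
    (hstrictM : ∃ i j k : Fin n, ∀ x : Fin n → ℝ, (∀ i', 0 < x i' ∧ x i' < q i') → HM x i j k < 0) :
    (∀ x : Fin n → ℝ, (∀ i, 0 < x i ∧ x i < p i) → ∀ i j, 0 < (JM (T x) * JT x) i j) ∧
    (∀ x y : Fin n → ℝ, (∀ i, 0 < x i) → (∀ i, x i < y i) → (∀ i, y i < p i) →
      (∀ i j, (JM (T y) * JT y) i j ≤ (JM (T x) * JT x) i j) ∧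
      (JM (T y) * JT y) ≠ (JM (T x) * JT x)) := by
  obtain ⟨iM, jM, kM, hsM⟩ := hstrictM
  have hne : Nonempty (Fin n) := ⟨iM⟩
  -- T is strictly increasing on the open box
  have Tmono : ∀ x y : Fin n → ℝ, (∀ i, 0 < x i) → (∀ i, x i < y i) → (∀ i, y i < p i) →
      ∀ i, T x i < T y i := by
    intro x y hx hxy hyp i
    refine seg_gt (f := fun z => T z i)
      (f' := fun z => (ContinuousLinearMap.proj i).comp (matrixCLM n (JT z)))
      hx hxy hyp
      (fun z hz => (ContinuousLinearMap.proj (R := ℝ) (φ := fun _ : Fin n => ℝ)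
        i).hasFDerivAt.comp z (hJT z hz)) ?_
    intro z hz
    have he : ((ContinuousLinearMap.proj i).comp (matrixCLM n (JT z))) (y - x)
        = ∑ k, JT z i k * (y k - x k) := by
      simp [matrixCLM_apply, mul_sub, Finset.sum_sub_distrib]
    rw [he]
    exact Finset.sum_pos (fun k _ => mul_pos (hMT z hz i k) (sub_pos.2 (hxy k)))
      Finset.univ_nonempty
  -- T maps the open p-box into the open q-box
  have hTint : ∀ x : Fin n → ℝ, (∀ i, 0 < x i ∧ x i < p i) →
      ∀ i, 0 < T x i ∧ T x i < q i := by
    intro x hx i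
    set x' : Fin n → ℝ := fun i => x i / 2 with hx'def
    set y' : Fin n → ℝ := fun i => (x i + p i) / 2 with hy'def
    have hx' : ∀ i, 0 < x' i := fun i => by have := (hx i).1; simp only [hx'def]; linarith
    have hx'x : ∀ i, x' i < x i := fun i => by have := (hx i).1; simp only [hx'def]; linarith
    have hxp : ∀ i, x i < y' i := fun i => by have := (hx i).2; simp only [hy'def]; linarith
    have hy'p : ∀ i, y' i < p i := fun i => by have := (hx i).2; simp only [hy'def]; linarith
    have h1 : T x' i < T x i := Tmono x' x hx' hx'x (fun i => (hx i).2) i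
    have h2 : T x i < T y' i := Tmono x y' (fun i => (hx i).1) hxp hy'p i
    have h0 : 0 ≤ T x' i :=
      (hTmaps x' (fun i => ⟨(hx' i).le, ((hx'x i).trans (hx i).2).le⟩) i).1
    have hq' : T y' i ≤ q i :=
      (hTmaps y' (fun i => ⟨((hx i).1.trans (hxp i)).le, (hy'p i).le⟩) i).2
    exact ⟨lt_of_le_of_lt h0 h1, lt_of_lt_of_le h2 hq'⟩
  -- entries of JT are nonincreasing
  have JTle : ∀ x y : Fin n → ℝ, (∀ i, 0 < x i) → (∀ i, x i < y i) → (∀ i, y i < p i) →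
      ∀ i j, JT y i j ≤ JT x i j := by
    intro x y hx hxy hyp i j
    refine seg_le (f := fun z => JT z i j) (f' := fun z => rowCLM n (HT z i j))
      hx hxy hyp (fun z hz => hHT z hz i j) ?_
    intro z hz
    rw [rowCLM_apply]
    refine Finset.sum_nonpos (fun k _ => ?_)
    exact mul_nonpos_iff.2 (Or.inr ⟨hnegT z hz i j k, by simp [sub_nonneg, (hxy k).le]⟩)
  -- entries of JM are nonincreasing
  have JMle : ∀ a b : Fin n → ℝ, (∀ i, 0 < a i) → (∀ i, a i < b i) → (∀ i, b i < q i) →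
      ∀ i j, JM b i j ≤ JM a i j := by
    intro a b ha hab hbq i j
    refine seg_le (f := fun z => JM z i j) (f' := fun z => rowCLM n (HM z i j))
      ha hab hbq (fun z hz => hHM z hz i j) ?_
    intro z hz
    rw [rowCLM_apply]
    refine Finset.sum_nonpos (fun k _ => ?_)
    exact mul_nonpos_iff.2 (Or.inr ⟨hnegM z hz i j k, by simp [sub_nonneg, (hab k).le]⟩)
  -- the (iM, jM) entry of JM is strictly decreasing
  have JMlt : ∀ a b : Fin n → ℝ, (∀ i, 0 < a i) → (∀ i, a i < b i) → (∀ i, b i < q i) →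
      JM b iM jM < JM a iM jM := by
    intro a b ha hab hbq
    refine seg_lt (f := fun z => JM z iM jM) (f' := fun z => rowCLM n (HM z iM jM))
      ha hab hbq (fun z hz => hHM z hz iM jM) ?_
    intro z hz
    rw [rowCLM_apply]
    have : ∑ k, HM z iM jM k * (b - a) k < ∑ _k : Fin n, (0 : ℝ) := by
      refine Finset.sum_lt_sum (fun k _ => ?_) ⟨kM, Finset.mem_univ kM, ?_⟩
      · exact mul_nonpos_iff.2 (Or.inr ⟨hnegM z hz iM jM k, by simp [sub_nonneg, (hab k).le]⟩)
      · exact mul_neg_of_neg_of_pos (hsM z hz) (by simp [sub_pos, hab kM])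
    simpa using this
  refine ⟨?_, ?_⟩
  · intro x hx i j
    rw [Matrix.mul_apply]
    exact Finset.sum_pos
      (fun k _ => mul_pos (hMM _ (hTint x hx) i k) (hMT x hx k j)) Finset.univ_nonempty
  · intro x y hx hxy hyp
    have hxP : ∀ i, 0 < x i ∧ x i < p i := fun i => ⟨hx i, (hxy i).trans (hyp i)⟩
    have hyP : ∀ i, 0 < y i ∧ y i < p i := fun i => ⟨(hx i).trans (hxy i), hyp i⟩
    have hTx := hTint x hxP
    have hTy := hTint y hyP
    have hTlt : ∀ i, T x i < T y i := Tmono x y hx hxy hyp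
    have hJMle : ∀ i k, JM (T y) i k ≤ JM (T x) i k :=
      fun i k => JMle (T x) (T y) (fun i => (hTx i).1) hTlt (fun i => (hTy i).2) i k
    have hJTle : ∀ k j, JT y k j ≤ JT x k j := fun k j => JTle x y hx hxy hyp k j
    have hle : ∀ i j, (JM (T y) * JT y) i j ≤ (JM (T x) * JT x) i j := by
      intro i j
      rw [Matrix.mul_apply, Matrix.mul_apply]
      exact Finset.sum_le_sum (fun k _ => mul_le_mul (hJMle i k) (hJTle k j)
        (hMT y hyP k j).le (hMM _ hTx i k).le)
    have hlt : (JM (T y) * JT y) iM jM < (JM (T x) * JT x) iM jM := by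
      rw [Matrix.mul_apply, Matrix.mul_apply]
      refine Finset.sum_lt_sum (fun k _ => mul_le_mul (hJMle iM k) (hJTle k jM)
        (hMT y hyP k jM).le (hMM _ hTx iM k).le) ⟨jM, Finset.mem_univ jM, ?_⟩
      calc JM (T y) iM jM * JT y jM jM
          ≤ JM (T y) iM jM * JT x jM jM :=
            mul_le_mul_of_nonneg_left (hJTle jM jM) (hMM _ hTy iM jM).le
        _ < JM (T x) iM jM * JT x jM jM :=
            mul_lt_mul_of_pos_right
              (JMlt (T x) (T y) (fun i => (hTx i).1) hTlt (fun i => (hTy i).2))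
              (hMT x hxP jM jM)
    exact ⟨hle, fun h => absurd (congrFun (congrFun h iM) jM) (ne_of_lt hlt)⟩
end

section
/- If n = 2, then for every x ∈ Z^1 the iterates of the Poincaré map satisfy T^m x → 0 as m → ∞. -/
open Filter Topology Set

noncomputable section

/-- Exit direction `s_k` (as a 0-based coordinate of `Fin n`) of the `k`-th box of the
cycle `C`, for `k = 1, …, 2n` (and periodically in `k`): in the paper's 1-based notation,
`s_k = k` for `1 ≤ k ≤ n` and `s_{n+k} = k`. -/
def sIdx (n : ℕ) [NeZero n] (k : ℕ) : Fin n :=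
  ⟨(k - 1) % n, Nat.mod_lt _ (Nat.pos_of_ne_zero (NeZero.ne n))⟩

/-- The `k`-th box `a^k ∈ {0,1}^n` of the cycle `C`, for `k = 1, …, 2n` (and `a^{2n+1} = a^1`):
`a^1 = (1,…,1)`, and `a^{k+1}` is obtained from `a^k` by flipping coordinate `s_k`.
Coordinate `j : Fin n` (0-based) represents the paper's variable `j+1`. -/
def boxC (n : ℕ) (k : ℕ) (j : Fin n) : Bool :=
  if k ≤ n + 1 then decide (k ≤ (j : ℕ) + 1) else decide ((j : ℕ) + 1 < k - n)

/-- Focal point `φ(a)` of the regular domain (orthant) indexed by `a ∈ {0,1}^n`, for the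
negative feedback loop system with focal values `φm j < 0 < φp j`:
`φ_1(a) = φ_1^-` iff `a_n = 1`, and for `j ≥ 2`, `φ_j(a) = φ_j^+` iff `a_{j-1} = 1`.
(Here `j - 1 : Fin n` is the cyclic predecessor of the coordinate `j`.) -/
def focal (n : ℕ) [NeZero n] (φm φp : Fin n → ℝ) (a : Fin n → Bool) (j : Fin n) : ℝ :=
  if (j : ℕ) = 0 then (if a (j - 1) then φm j else φp j)
  else (if a (j - 1) then φp j else φm j)

/-- Focal point `φ^k = φ(a^k)` of the `k`-th box of the cycle. -/
def phiC (n : ℕ) [NeZero n] (φm φp : Fin n → ℝ) (k : ℕ) : Fin n → ℝ :=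
  focal n φm φp (boxC n k)

/-- The local transition map `T^{a^k}` of the `k`-th box of the cycle:
`(T^{a^k} x)_j = φ^k_j + (x_j − φ^k_j)·(φ^k_{s_k}/(φ^k_{s_k} − x_{s_k}))^{γ_j/γ_{s_k}}`.
It maps the wall `{x_{s_{k-1}} = 0}` into the wall `{x_{s_k} = 0}`. -/
def transMap (n : ℕ) [NeZero n] (γ φm φp : Fin n → ℝ) (k : ℕ) (x : Fin n → ℝ) :
    Fin n → ℝ := fun j =>
  phiC n φm φp k j + (x j - phiC n φm φp k j) *
    (phiC n φm φp k (sIdx n k) / (phiC n φm φp k (sIdx n k) - x (sIdx n k)))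
      ^ (γ j / γ (sIdx n k))

/-- The Poincaré map `T = T^{a^1} ∘ T^{a^{2n}} ∘ T^{a^{2n-1}} ∘ ⋯ ∘ T^{a^2}` of the cycle
(the walls `W^i ⊂ ℝ^{n-1}` being embedded in `ℝ^n` as subsets of the hyperplanes
`{x_{s_i} = 0}`, which are preserved by the corresponding transition maps). -/
def poincare (n : ℕ) [NeZero n] (γ φm φp : Fin n → ℝ) (x : Fin n → ℝ) : Fin n → ℝ :=
  (List.range (2 * n)).foldl (fun y k => transMap n γ φm φp (k + 2) y) x

/-- The zone `Z^k ⊂ ℝ^{n-1}`, embedded in `ℝ^n` as a subset of the hyperplane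
`{x_{s_k} = 0}` (instead of dropping the coordinate `s_k`): for `1 ≤ k ≤ n` it is
`∏_{j<s_k} [φ_j^-, 0] × {0} × ∏_{j>s_k} [0, φ_j^+]`, and for `n+1 ≤ k ≤ 2n` it is
`∏_{j<s_k} [0, φ_j^+] × {0} × ∏_{j>s_k} [φ_j^-, 0]` (periodically in `k`). -/
def zoneC (n : ℕ) [NeZero n] (φm φp : Fin n → ℝ) (k : ℕ) : Set (Fin n → ℝ) :=
  {x | x (sIdx n k) = 0 ∧ ∀ j : Fin n,
    ((j : ℕ) < (sIdx n k : ℕ) →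
      x j ∈ (if (k - 1) % (2 * n) < n then Set.Icc (φm j) 0 else Set.Icc 0 (φp j))) ∧
    ((sIdx n k : ℕ) < (j : ℕ) →
      x j ∈ (if (k - 1) % (2 * n) < n then Set.Icc 0 (φp j) else Set.Icc (φm j) 0))}

end

noncomputable section PoincareAux
namespace PoincareAux

def step (b c g t : ℝ) : ℝ := b * (1 - (c / (c + t)) ^ g)

lemma ratio_pos {c t : ℝ} (hc : 0 < c) (ht : 0 ≤ t) : 0 < c / (c + t) :=
  div_pos hc (by linarith)

lemma ratio_le_one {c t : ℝ} (hc : 0 < c) (ht : 0 ≤ t) : c / (c + t) ≤ 1 := by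
  rw [div_le_one (by linarith)]; linarith

lemma step_nonneg {b c g t : ℝ} (hb : 0 < b) (hc : 0 < c) (hg : 0 < g) (ht : 0 ≤ t) :
    0 ≤ step b c g t := by
  have h1 : (c / (c + t)) ^ g ≤ 1 :=
    Real.rpow_le_one (ratio_pos hc ht).le (ratio_le_one hc ht) hg.le
  unfold step; nlinarith

lemma step_pos {b c g t : ℝ} (hb : 0 < b) (hc : 0 < c) (hg : 0 < g) (ht : 0 < t) :
    0 < step b c g t := by
  have h1 : (c / (c + t)) ^ g < 1 :=
    Real.rpow_lt_one (ratio_pos hc ht.le).le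
      (by rw [div_lt_one (by linarith)]; linarith) hg
  unfold step; nlinarith

lemma step_zero (b c g : ℝ) (hc : 0 < c) : step b c g 0 = 0 := by
  unfold step
  rw [add_zero, div_self hc.ne', Real.one_rpow]; ring

lemma step_lt {b c g t : ℝ} (hb : 0 < b) (hc : 0 < c) (hg : 0 < g) (ht : 0 < t) :
    step b c g t < b * g / c * t := by
  have hct : 0 < c + t := by linarith
  have hr : 0 < c / (c + t) := ratio_pos hc ht.le
  have hlog : Real.log (c / (c + t)) < 0 :=
    Real.log_neg hr (by rw [div_lt_one hct]; linarith)
  have h1 : 1 + g * Real.log (c / (c + t)) < (c / (c + t)) ^ g := by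
    rw [Real.rpow_def_of_pos hr, mul_comm (Real.log (c / (c + t))) g]
    have := Real.add_one_lt_exp (x := g * Real.log (c / (c + t))) (by nlinarith)
    linarith
  have h2 : -(t / c) ≤ Real.log (c / (c + t)) := by
    have h3 : Real.log ((c + t) / c) ≤ (c + t) / c - 1 :=
      Real.log_le_sub_one_of_pos (by positivity)
    have h4 : Real.log ((c + t) / c) = - Real.log (c / (c + t)) := by
      rw [← Real.log_inv]; congr 1; field_simp
    have h5 : (c + t) / c - 1 = t / c := by field_simp; ring
    rw [h4, h5] at h3; linarith
  have h6 : 1 - (c / (c + t)) ^ g < g * (t / c) := by nlinarith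
  have h7 : b * (1 - (c / (c + t)) ^ g) < b * (g * (t / c)) := by nlinarith
  unfold step
  calc b * (1 - (c / (c + t)) ^ g) < b * (g * (t / c)) := h7
    _ = b * g / c * t := by field_simp

lemma step_continuousAt (b : ℝ) {c : ℝ} (g : ℝ) (hc : 0 < c) {t : ℝ} (ht : 0 ≤ t) :
    ContinuousAt (step b c g) t := by
  unfold step
  apply ContinuousAt.mul continuousAt_const
  apply ContinuousAt.sub continuousAt_const
  have h1 : ContinuousAt (fun x : ℝ => c / (c + x)) t :=
    ContinuousAt.div continuousAt_const (by fun_prop) (by positivity)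
  exact h1.rpow continuousAt_const (Or.inl (ne_of_gt (ratio_pos hc ht)))

lemma step_comp_continuousAt (b g : ℝ) {c : ℝ} (hc : 0 < c) {f : ℝ → ℝ} {t : ℝ}
    (hf : ContinuousAt f t) (hft : 0 ≤ f t) :
    ContinuousAt (fun x => step b c g (f x)) t := by
  unfold step
  apply ContinuousAt.mul continuousAt_const
  apply ContinuousAt.sub continuousAt_const
  have h1 : ContinuousAt (fun x : ℝ => c / (c + f x)) t :=
    ContinuousAt.div continuousAt_const (continuousAt_const.add hf) (by positivity)
  exact h1.rpow continuousAt_const (Or.inl (ne_of_gt (ratio_pos hc hft)))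

end PoincareAux

namespace PoincareAux

variable {γ φm φp : Fin 2 → ℝ}

lemma T2 (hγ : ∀ i, 0 < γ i) (hφ : ∀ i, φm i < 0 ∧ 0 < φp i) {t : ℝ} (ht : 0 ≤ t) :
    transMap 2 γ φm φp 2 ![0, t]
      = ![-(step (-(φm 0)) (-(φm 1)) (γ 0 / γ 1) t), 0] := by
  have h1 : φm 1 - t ≠ 0 := by have := (hφ 1).1; intro h; linarith
  have hs : sIdx 2 2 = 1 := by decide
  have hr : φm 1 / (φm 1 - t) = (-(φm 1)) / (-(φm 1) + t) := by
    rw [← neg_div_neg_eq]; ring_nf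
  funext j
  fin_cases j
  · simp only [transMap, hs, phiC, focal, boxC, sIdx, step]
    norm_num [hr]
    ring
  · simp only [transMap, hs, phiC, focal, boxC, sIdx]
    norm_num [div_self (hγ 1).ne', Real.rpow_one]
    field_simp
    ring


lemma T3 (hγ : ∀ i, 0 < γ i) (hφ : ∀ i, φm i < 0 ∧ 0 < φp i) {u : ℝ} (hu : 0 ≤ u) :
    transMap 2 γ φm φp 3 ![-u, 0]
      = ![0, -(step (-(φm 1)) (φp 0) (γ 1 / γ 0) u)] := by
  have h1 : φp 0 + u ≠ 0 := by have := (hφ 0).2; positivity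
  have hs : sIdx 2 3 = 0 := by decide
  funext j
  fin_cases j
  · simp only [transMap, hs, phiC, focal, boxC, sIdx]
    norm_num [div_self (hγ 0).ne', Real.rpow_one, sub_neg_eq_add]
    field_simp
    ring
  · simp only [transMap, hs, phiC, focal, boxC, sIdx, step]
    norm_num [sub_neg_eq_add]
    ring

lemma T4 (hγ : ∀ i, 0 < γ i) (hφ : ∀ i, φm i < 0 ∧ 0 < φp i) {v : ℝ} (hv : 0 ≤ v) :
    transMap 2 γ φm φp 4 ![0, -v]
      = ![step (φp 0) (φp 1) (γ 0 / γ 1) v, 0] := by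
  have h1 : φp 1 + v ≠ 0 := by have := (hφ 1).2; positivity
  have hs : sIdx 2 4 = 1 := by decide
  funext j
  fin_cases j
  · simp only [transMap, hs, phiC, focal, boxC, sIdx, step]
    norm_num [sub_neg_eq_add]
    ring
  · simp only [transMap, hs, phiC, focal, boxC, sIdx]
    norm_num [div_self (hγ 1).ne', Real.rpow_one, sub_neg_eq_add]
    field_simp
    ring

lemma T5 (hγ : ∀ i, 0 < γ i) (hφ : ∀ i, φm i < 0 ∧ 0 < φp i) {w : ℝ} (hw : 0 ≤ w) :
    transMap 2 γ φm φp 5 ![w, 0]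
      = ![0, step (φp 1) (-(φm 0)) (γ 1 / γ 0) w] := by
  have h1 : φm 0 - w ≠ 0 := by have := (hφ 0).1; intro h; linarith
  have hs : sIdx 2 5 = 0 := by decide
  have hr : φm 0 / (φm 0 - w) = (-(φm 0)) / (-(φm 0) + w) := by
    rw [← neg_div_neg_eq]; ring_nf
  funext j
  fin_cases j
  · simp only [transMap, hs, phiC, focal, boxC, sIdx]
    norm_num [div_self (hγ 0).ne', Real.rpow_one]
    field_simp
    ring
  · simp only [transMap, hs, phiC, focal, boxC, sIdx, step]
    norm_num [hr]
    ring


def Fmap (γ φm φp : Fin 2 → ℝ) (t : ℝ) : ℝ :=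
  step (φp 1) (-(φm 0)) (γ 1 / γ 0)
    (step (φp 0) (φp 1) (γ 0 / γ 1)
      (step (-(φm 1)) (φp 0) (γ 1 / γ 0)
        (step (-(φm 0)) (-(φm 1)) (γ 0 / γ 1) t)))

lemma poincare_eval (hγ : ∀ i, 0 < γ i) (hφ : ∀ i, φm i < 0 ∧ 0 < φp i)
    {t : ℝ} (ht : 0 ≤ t) :
    poincare 2 γ φm φp ![0, t] = ![0, Fmap γ φm φp t] := by
  have hA : 0 < -(φm 0) := by linarith [(hφ 0).1]
  have hB : 0 < -(φm 1) := by linarith [(hφ 1).1]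
  have hC := (hφ 0).2
  have hD := (hφ 1).2
  have hg1 : 0 < γ 0 / γ 1 := div_pos (hγ 0) (hγ 1)
  have hg2 : 0 < γ 1 / γ 0 := div_pos (hγ 1) (hγ 0)
  have hu : 0 ≤ step (-(φm 0)) (-(φm 1)) (γ 0 / γ 1) t := step_nonneg hA hB hg1 ht
  have hv : 0 ≤ step (-(φm 1)) (φp 0) (γ 1 / γ 0) _ := step_nonneg hB hC hg2 hu
  have hw : 0 ≤ step (φp 0) (φp 1) (γ 0 / γ 1) _ := step_nonneg hC hD hg1 hv
  have hstep : poincare 2 γ φm φp ![0, t]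
      = transMap 2 γ φm φp 5 (transMap 2 γ φm φp 4
          (transMap 2 γ φm φp 3 (transMap 2 γ φm φp 2 ![0, t]))) := by
    simp [poincare, List.range_succ]
  rw [hstep, T2 hγ hφ ht, T3 hγ hφ hu, T4 hγ hφ hv, T5 hγ hφ hw]
  rfl

lemma Fmap_nonneg (hγ : ∀ i, 0 < γ i) (hφ : ∀ i, φm i < 0 ∧ 0 < φp i)
    {t : ℝ} (ht : 0 ≤ t) : 0 ≤ Fmap γ φm φp t := by
  have hA : 0 < -(φm 0) := by linarith [(hφ 0).1]
  have hB : 0 < -(φm 1) := by linarith [(hφ 1).1]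
  have hC := (hφ 0).2
  have hD := (hφ 1).2
  have hg1 : 0 < γ 0 / γ 1 := div_pos (hγ 0) (hγ 1)
  have hg2 : 0 < γ 1 / γ 0 := div_pos (hγ 1) (hγ 0)
  exact step_nonneg hD hA hg2 (step_nonneg hC hD hg1
    (step_nonneg hB hC hg2 (step_nonneg hA hB hg1 ht)))

lemma Fmap_zero (hγ : ∀ i, 0 < γ i) (hφ : ∀ i, φm i < 0 ∧ 0 < φp i) :
    Fmap γ φm φp 0 = 0 := by
  have hA : 0 < -(φm 0) := by linarith [(hφ 0).1]
  have hB : 0 < -(φm 1) := by linarith [(hφ 1).1]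
  have hC := (hφ 0).2
  have hD := (hφ 1).2
  unfold Fmap
  rw [step_zero _ _ _ hB, step_zero _ _ _ hC, step_zero _ _ _ hD, step_zero _ _ _ hA]

lemma Fmap_lt (hγ : ∀ i, 0 < γ i) (hφ : ∀ i, φm i < 0 ∧ 0 < φp i)
    {t : ℝ} (ht : 0 < t) : Fmap γ φm φp t < t := by
  have hA : 0 < -(φm 0) := by linarith [(hφ 0).1]
  have hB : 0 < -(φm 1) := by linarith [(hφ 1).1]
  have hC := (hφ 0).2
  have hD := (hφ 1).2
  have hg1 : 0 < γ 0 / γ 1 := div_pos (hγ 0) (hγ 1)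
  have hg2 : 0 < γ 1 / γ 0 := div_pos (hγ 1) (hγ 0)
  set u := step (-(φm 0)) (-(φm 1)) (γ 0 / γ 1) t with hu_def
  set v := step (-(φm 1)) (φp 0) (γ 1 / γ 0) u with hv_def
  set w := step (φp 0) (φp 1) (γ 0 / γ 1) v with hw_def
  have hu : 0 < u := step_pos hA hB hg1 ht
  have hv : 0 < v := step_pos hB hC hg2 hu
  have hw : 0 < w := step_pos hC hD hg1 hv
  set K2 := -(φm 0) * (γ 0 / γ 1) / -(φm 1) with hK2
  set K3 := -(φm 1) * (γ 1 / γ 0) / φp 0 with hK3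
  set K4 := φp 0 * (γ 0 / γ 1) / φp 1 with hK4
  set K5 := φp 1 * (γ 1 / γ 0) / -(φm 0) with hK5
  have hK2p : 0 < K2 := by positivity
  have hK3p : 0 < K3 := by positivity
  have hK4p : 0 < K4 := by positivity
  have hK5p : 0 < K5 := by positivity
  have h2 : u < K2 * t := step_lt hA hB hg1 ht
  have h3 : v < K3 * u := step_lt hB hC hg2 hu
  have h4 : w < K4 * v := step_lt hC hD hg1 hv
  have h5 : Fmap γ φm φp t < K5 * w := step_lt hD hA hg2 hw
  have hprod : K5 * (K4 * (K3 * (K2 * t))) = t := by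
    rw [hK2, hK3, hK4, hK5]
    have h0 : φm 0 ≠ 0 := (hφ 0).1.ne
    have h1 : φm 1 ≠ 0 := (hφ 1).1.ne
    have h2' : φp 0 ≠ 0 := (hφ 0).2.ne'
    have h3' : φp 1 ≠ 0 := (hφ 1).2.ne'
    have h4' : γ 0 ≠ 0 := (hγ 0).ne'
    have h5' : γ 1 ≠ 0 := (hγ 1).ne'
    field_simp
  calc Fmap γ φm φp t < K5 * w := h5
    _ ≤ K5 * (K4 * v) := mul_le_mul_of_nonneg_left h4.le hK5p.le
    _ ≤ K5 * (K4 * (K3 * u)) := mul_le_mul_of_nonneg_left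
        (mul_le_mul_of_nonneg_left h3.le hK4p.le) hK5p.le
    _ ≤ K5 * (K4 * (K3 * (K2 * t))) := mul_le_mul_of_nonneg_left
        (mul_le_mul_of_nonneg_left (mul_le_mul_of_nonneg_left h2.le hK3p.le) hK4p.le) hK5p.le
    _ = t := hprod

lemma Fmap_contAt (hγ : ∀ i, 0 < γ i) (hφ : ∀ i, φm i < 0 ∧ 0 < φp i)
    {L : ℝ} (hL : 0 ≤ L) : ContinuousAt (Fmap γ φm φp) L := by
  have hA : 0 < -(φm 0) := by linarith [(hφ 0).1]
  have hB : 0 < -(φm 1) := by linarith [(hφ 1).1]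
  have hC := (hφ 0).2
  have hD := (hφ 1).2
  have hg1 : 0 < γ 0 / γ 1 := div_pos (hγ 0) (hγ 1)
  have hg2 : 0 < γ 1 / γ 0 := div_pos (hγ 1) (hγ 0)
  have h1 : 0 ≤ step (-(φm 0)) (-(φm 1)) (γ 0 / γ 1) L := step_nonneg hA hB hg1 hL
  have h2 : 0 ≤ step (-(φm 1)) (φp 0) (γ 1 / γ 0) _ := step_nonneg hB hC hg2 h1
  have h3 : 0 ≤ step (φp 0) (φp 1) (γ 0 / γ 1) _ := step_nonneg hC hD hg1 h2
  unfold Fmap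
  exact step_comp_continuousAt _ _ hA
    (step_comp_continuousAt _ _ hD
      (step_comp_continuousAt _ _ hC (step_continuousAt _ _ hB hL) h1) h2) h3

end PoincareAux


open PoincareAux in
/-- **In dimension `n = 2`, all orbits of the Poincaré map converge to the origin.**
For the planar negative feedback loop system (focal values `φm i < 0 < φp i`, decay rates
`γ i > 0`), every point `x` of the zone `Z^1` satisfies `T^m x → 0` as `m → ∞`, where `T`
is the Poincaré map of the cycle `C`. -/
theorem poincare_map_tendsto_zero_dim_two
    (γ φm φp : Fin 2 → ℝ) (hγ : ∀ i, 0 < γ i)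
    (hφ : ∀ i, φm i < 0 ∧ 0 < φp i)
    (x : Fin 2 → ℝ) (hx : x ∈ zoneC 2 φm φp 1) :
    Tendsto (fun m => (poincare 2 γ φm φp)^[m] x) atTop (𝓝 0) := by
  obtain ⟨hx0, hxj⟩ := hx
  have hs1 : sIdx 2 1 = 0 := by decide
  rw [hs1] at hx0
  have hx1 : x 1 ∈ Set.Icc 0 (φp 1) := by
    have h := (hxj 1).2 (by norm_num [sIdx])
    norm_num at h
    exact h
  have ht0 : 0 ≤ x 1 := hx1.1
  have hxeq : x = ![0, x 1] := by
    funext j; fin_cases j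
    · simpa using hx0
    · simp
  have seq_nonneg : ∀ m, 0 ≤ (Fmap γ φm φp)^[m] (x 1) := by
    intro m; induction m with
    | zero => exact ht0
    | succ m ih => rw [Function.iterate_succ_apply']; exact Fmap_nonneg hγ hφ ih
  have key : ∀ m, (poincare 2 γ φm φp)^[m] x = ![0, (Fmap γ φm φp)^[m] (x 1)] := by
    intro m; induction m with
    | zero => simpa using hxeq
    | succ m ih =>
      rw [Function.iterate_succ_apply', ih, poincare_eval hγ hφ (seq_nonneg m),
        Function.iterate_succ_apply' (Fmap γ φm φp) m (x 1)]
  have hanti : Antitone (fun m => (Fmap γ φm φp)^[m] (x 1)) := by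
    apply antitone_nat_of_succ_le
    intro m
    rw [Function.iterate_succ_apply']
    rcases (seq_nonneg m).lt_or_eq with h | h
    · exact (Fmap_lt hγ hφ h).le
    · rw [← h, Fmap_zero hγ hφ]
  have hbdd : BddBelow (Set.range fun m => (Fmap γ φm φp)^[m] (x 1)) :=
    ⟨0, by rintro y ⟨m, rfl⟩; exact seq_nonneg m⟩
  have htend : Tendsto (fun m => (Fmap γ φm φp)^[m] (x 1)) atTop
      (𝓝 (⨅ m, (Fmap γ φm φp)^[m] (x 1))) := tendsto_atTop_ciInf hanti hbdd
  set L := ⨅ m, (Fmap γ φm φp)^[m] (x 1) with hLdef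
  have hL0 : 0 ≤ L := le_ciInf seq_nonneg
  have htend' : Tendsto (fun m => (Fmap γ φm φp)^[m + 1] (x 1)) atTop (𝓝 L) :=
    htend.comp (tendsto_add_atTop_nat 1)
  have hFL : Tendsto (fun m => Fmap γ φm φp ((Fmap γ φm φp)^[m] (x 1))) atTop
      (𝓝 (Fmap γ φm φp L)) := (Fmap_contAt hγ hφ hL0).tendsto.comp htend
  have hfix : Fmap γ φm φp L = L :=
    tendsto_nhds_unique hFL (by simpa [Function.iterate_succ_apply'] using htend')
  have hLzero : L = 0 := by
    rcases hL0.lt_or_eq with h | h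
    · exact absurd hfix (ne_of_lt (Fmap_lt hγ hφ h))
    · exact h.symm
  rw [hLzero] at htend
  have : (fun m => (poincare 2 γ φm φp)^[m] x) = fun m => ![0, (Fmap γ φm φp)^[m] (x 1)] :=
    funext key
  rw [this]
  rw [tendsto_pi_nhds]
  intro j
  fin_cases j
  · simpa using tendsto_const_nhds
  · simpa using htend
end PoincareAux
end

section
/- The composite map T = T̃^{a^1} ∘ T̃^{a^{2n}} ∘ … ∘ T̃^{a^2} is well defined on the enlarged wall W̃^1, and its image satisfies T(W̃^1) ⊆ Z^1; that is, the zone Z^1 is attracting: after one full turn around the cycle, every trajectory starting on the first wall lands in Z^1. -/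
open Filter Topology Set

section AuxNFL

variable {n : ℕ} [NeZero n]

lemma coe_sub_one (hn : 2 ≤ n) (j : Fin n) :
    ((j - 1 : Fin n) : ℕ) = if (j : ℕ) = 0 then n - 1 else (j : ℕ) - 1 := by
  rw [Fin.sub_def]
  have h1 : ((1 : Fin n) : ℕ) = 1 := by
    simp [Fin.val_one', Nat.mod_eq_of_lt (by omega : 1 < n)]
  show (n - ((1 : Fin n) : ℕ) + (j : ℕ)) % n = _
  rw [h1]
  have hjn : (j : ℕ) < n := j.isLt
  split_ifs with h0
  · have h : n - 1 + (j : ℕ) = n - 1 := by omega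
    rw [h, Nat.mod_eq_of_lt (by omega)]
  · have h : n - 1 + (j : ℕ) = ((j : ℕ) - 1) + n := by omega
    rw [h, Nat.add_mod_right, Nat.mod_eq_of_lt (by omega : (j : ℕ) - 1 < n)]

/-- The focal point of the `k`-th box, computed explicitly: coordinate `j` is in its
"negative phase" iff `j < k ≤ n + j` or `2n + j < k`. -/
lemma phiC_eq (hn : 2 ≤ n) (φm φp : Fin n → ℝ) {k : ℕ} (hk2 : 2 ≤ k) (hk : k ≤ 2 * n + 1)
    (j : Fin n) :
    phiC n φm φp k j =
      if ((j : ℕ) < k ∧ k ≤ n + (j : ℕ)) ∨ 2 * n + (j : ℕ) < k then φm j else φp j := by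
  have hjn : (j : ℕ) < n := j.isLt
  have hsub := coe_sub_one hn j
  unfold phiC focal
  by_cases h0 : (j : ℕ) = 0
  · rw [if_pos h0]
    have hb : boxC n k (j - 1) = true ↔ (k ≤ n ∨ 2 * n < k) := by
      unfold boxC
      rw [hsub, if_pos h0]
      split_ifs with h <;> simp only [decide_eq_true_eq] <;> omega
    by_cases hneg : ((j : ℕ) < k ∧ k ≤ n + (j : ℕ)) ∨ 2 * n + (j : ℕ) < k
    · rw [if_pos hneg, if_pos (hb.mpr (by omega))]
    · rw [if_neg hneg, if_neg (by rw [hb]; omega)]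
  · rw [if_neg h0]
    have hb : boxC n k (j - 1) = true ↔
        ¬(((j : ℕ) < k ∧ k ≤ n + (j : ℕ)) ∨ 2 * n + (j : ℕ) < k) := by
      unfold boxC
      rw [hsub, if_neg h0]
      split_ifs with h <;> simp only [decide_eq_true_eq] <;> omega
    by_cases hneg : ((j : ℕ) < k ∧ k ≤ n + (j : ℕ)) ∨ 2 * n + (j : ℕ) < k
    · rw [if_pos hneg, if_neg (by rw [hb]; exact not_not_intro hneg)]
    · rw [if_neg hneg, if_pos (hb.mpr hneg)]

/-- The per-coordinate invariant interval after step `k - 1` (i.e. on the wall `W̃^{k-1}`,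
for `k = 1, …, 2n+1`). -/
def Ival (n : ℕ) (φm φp θp : Fin n → ℝ) (k : ℕ) (j : Fin n) : Set ℝ :=
  if ((j : ℕ) < k ∧ k ≤ n + (j : ℕ)) ∨ 2 * n + (j : ℕ) < k then Set.Icc (φm j) 0
  else if k ≤ (j : ℕ) then Set.Icc 0 (θp j) else Set.Icc 0 (φp j)

lemma mem_Icc_affine {φ yv α lo hi : ℝ} (hα0 : 0 ≤ α) (hα1 : α ≤ 1)
    (h1 : lo ≤ φ) (h2 : φ ≤ hi) (h3 : lo ≤ yv) (h4 : yv ≤ hi) :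
    φ + (yv - φ) * α ∈ Set.Icc lo hi := by
  constructor
  · nlinarith [mul_nonneg (sub_nonneg.2 h3) hα0,
      mul_nonneg (sub_nonneg.2 h1) (sub_nonneg.2 hα1)]
  · nlinarith [mul_nonneg (sub_nonneg.2 h4) hα0,
      mul_nonneg (sub_nonneg.2 h2) (sub_nonneg.2 hα1)]

/-- One-step preservation: the transition map of step `k` maps `Ival (k-1)` into `Ival k`,
and sets the exit coordinate `s_k` to `0`. -/
lemma step_mem (hn : 2 ≤ n) (γ φm φp θp : Fin n → ℝ) (hγ : ∀ i, 0 < γ i)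
    (hφ : ∀ i, φm i < 0 ∧ 0 < φp i) (hθp : ∀ i, φp i ≤ θp i)
    {k : ℕ} (hk2 : 2 ≤ k) (hk : k ≤ 2 * n + 1) (y : Fin n → ℝ)
    (hy : ∀ j : Fin n, y j ∈ Ival n φm φp θp (k - 1) j) :
    transMap n γ φm φp k y (sIdx n k) = 0 ∧
      ∀ j : Fin n, transMap n γ φm φp k y j ∈ Ival n φm φp θp k j := by
  set s : Fin n := sIdx n k with hs
  have hsv : (s : ℕ) = (k - 1) % n := rfl
  have hsn : (s : ℕ) < n := s.isLt
  have hsv' : (s : ℕ) = k - 1 ∨ (s : ℕ) + n = k - 1 ∨ ((s : ℕ) = 0 ∧ k = 2 * n + 1) := by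
    rcases lt_or_ge (k - 1) n with h | h
    · left; rw [hsv, Nat.mod_eq_of_lt h]
    · rcases lt_or_ge (k - 1) (2 * n) with h2 | h2
      · right; left
        rw [hsv, Nat.mod_eq_sub_mod h, Nat.mod_eq_of_lt (by omega)]
        omega
      · right; right
        have hkk : k = 2 * n + 1 := by omega
        refine ⟨?_, hkk⟩
        rw [hsv, hkk]
        have h3 : 2 * n + 1 - 1 = 2 * n := rfl
        rw [h3, Nat.mul_mod_left]
  have hphi := fun j => phiC_eq hn φm φp hk2 hk j
  set φs := phiC n φm φp k s with hφs
  have hkey : 0 < φs / (φs - y s) ∧ φs / (φs - y s) ≤ 1 ∧ φs - y s ≠ 0 := by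
    by_cases hN : ((s : ℕ) < k ∧ k ≤ n + (s : ℕ)) ∨ 2 * n + (s : ℕ) < k
    · have hφse : φs = φm s := by rw [hφs, hphi s, if_pos hN]
      have hys : 0 ≤ y s := by
        have hmem := hy s
        unfold Ival at hmem
        rw [if_neg (by omega :
          ¬(((s : ℕ) < k - 1 ∧ k - 1 ≤ n + (s : ℕ)) ∨ 2 * n + (s : ℕ) < k - 1))] at hmem
        split_ifs at hmem <;> exact hmem.1
      have h1 : φs - y s < 0 := by rw [hφse]; have := (hφ s).1; linarith
      refine ⟨div_pos_of_neg_of_neg (by rw [hφse]; exact (hφ s).1) h1, ?_, by linarith⟩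
      rw [div_le_one_iff]
      exact Or.inr (Or.inr ⟨h1, by linarith⟩)
    · have hφse : φs = φp s := by rw [hφs, hphi s, if_neg hN]
      have hys : y s ≤ 0 := by
        have hmem := hy s
        unfold Ival at hmem
        rw [if_pos (by omega :
          (((s : ℕ) < k - 1 ∧ k - 1 ≤ n + (s : ℕ)) ∨ 2 * n + (s : ℕ) < k - 1))] at hmem
        exact hmem.2
      have h1 : 0 < φs - y s := by rw [hφse]; have := (hφ s).2; linarith
      refine ⟨div_pos (by rw [hφse]; exact (hφ s).2) h1, ?_, by linarith⟩
      rw [div_le_one h1]; linarith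
  obtain ⟨hb0, hb1, hbne⟩ := hkey
  have halpha : ∀ j : Fin n, 0 < (φs / (φs - y s)) ^ (γ j / γ s) ∧
      (φs / (φs - y s)) ^ (γ j / γ s) ≤ 1 := fun j =>
    ⟨Real.rpow_pos_of_pos hb0 _,
      Real.rpow_le_one hb0.le hb1 (div_nonneg (hγ j).le (hγ s).le)⟩
  have hTs : transMap n γ φm φp k y s = 0 := by
    unfold transMap
    rw [← hs, ← hφs, div_self (hγ s).ne', Real.rpow_one]
    field_simp
    ring
  refine ⟨hTs, fun j => ?_⟩
  by_cases hjs : j = s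
  · rw [hjs, hTs]
    have h1 := (hφ s).1
    have h2 := (hφ s).2
    have h3 := hθp s
    unfold Ival
    split_ifs <;> rw [Set.mem_Icc] <;> constructor <;> linarith
  · have hjv : (j : ℕ) ≠ (s : ℕ) := fun h => hjs (Fin.ext h)
    have hjn : (j : ℕ) < n := j.isLt
    have hmem := hy j
    unfold Ival at hmem
    unfold transMap Ival
    rw [← hs, ← hφs, hphi j]
    obtain ⟨ha0, ha1⟩ := halpha j
    by_cases hNj : ((j : ℕ) < k ∧ k ≤ n + (j : ℕ)) ∨ 2 * n + (j : ℕ) < k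
    · rw [if_pos hNj, if_pos hNj]
      rw [if_pos (by omega :
        (((j : ℕ) < k - 1 ∧ k - 1 ≤ n + (j : ℕ)) ∨ 2 * n + (j : ℕ) < k - 1))] at hmem
      exact mem_Icc_affine ha0.le ha1 le_rfl (hφ j).1.le hmem.1 hmem.2
    · rw [if_neg hNj, if_neg hNj]
      rw [if_neg (by omega :
        ¬(((j : ℕ) < k - 1 ∧ k - 1 ≤ n + (j : ℕ)) ∨ 2 * n + (j : ℕ) < k - 1))] at hmem
      by_cases hkj : k ≤ (j : ℕ)
      · rw [if_pos hkj]
        rw [if_pos (by omega : k - 1 ≤ (j : ℕ))] at hmem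
        exact mem_Icc_affine ha0.le ha1 (hφ j).2.le (hθp j) hmem.1 hmem.2
      · rw [if_neg hkj]
        rw [if_neg (by omega : ¬(k - 1 ≤ (j : ℕ)))] at hmem
        exact mem_Icc_affine ha0.le ha1 (hφ j).2.le le_rfl hmem.1 hmem.2

end AuxNFL


/-- **The zone `Z^1` attracts the whole first wall after one turn around the cycle.**
Given outer state-space bounds `θm j ≤ φm j` and `φp j ≤ θp j`, the enlarged wall `W̃^1`
(embedded in `ℝ^n` as the set of points `x` with `x_{s_1} = 0`, `x_j ∈ [0, θ_j^+]` for
`j ∉ {s_1, s_{2n}}` and `x_{s_{2n}} ∈ [0, φ_n^+]`, where `s_1 = 1` and `s_{2n} = n`) is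
mapped into the zone `Z^1` by the Poincaré map `T = T̃^{a^1} ∘ T̃^{a^{2n}} ∘ ⋯ ∘ T̃^{a^2}`:
`T(W̃^1) ⊆ Z^1`. -/
theorem poincare_map_image_in_zone_one
    (n : ℕ) [NeZero n] (hn : 2 ≤ n)
    (γ φm φp θm θp : Fin n → ℝ) (hγ : ∀ i, 0 < γ i)
    (hφ : ∀ i, φm i < 0 ∧ 0 < φp i)
    (hθ : ∀ i, θm i ≤ φm i ∧ φp i ≤ θp i)
    (x : Fin n → ℝ)
    (hx0 : x (sIdx n 1) = 0)
    (hxmid : ∀ j : Fin n, j ≠ sIdx n 1 → j ≠ sIdx n n → x j ∈ Set.Icc 0 (θp j))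
    (hxlast : x (sIdx n n) ∈ Set.Icc 0 (φp (sIdx n n))) :
    poincare n γ φm φp x ∈ zoneC n φm φp 1 := by
  have hθp : ∀ i, φp i ≤ θp i := fun i => (hθ i).2
  have main : ∀ m, m ≤ 2 * n →
      ((List.range m).foldl (fun y k => transMap n γ φm φp (k + 2) y) x) (sIdx n (m + 1)) = 0 ∧
      ∀ j : Fin n, ((List.range m).foldl (fun y k => transMap n γ φm φp (k + 2) y) x) j
        ∈ Ival n φm φp θp (m + 1) j := by
    intro m
    induction m with
    | zero =>
      intro _
      simp only [List.range_zero, List.foldl_nil]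
      refine ⟨hx0, fun j => ?_⟩
      have hjn : (j : ℕ) < n := j.isLt
      unfold Ival
      by_cases h0 : (j : ℕ) = 0
      · rw [if_pos (by omega : ((j : ℕ) < 1 ∧ 1 ≤ n + (j : ℕ)) ∨ 2 * n + (j : ℕ) < 1)]
        have hj1 : j = sIdx n 1 := Fin.ext (by simp [sIdx, h0])
        rw [hj1, hx0, Set.mem_Icc]
        exact ⟨(hφ _).1.le, le_rfl⟩
      · rw [if_neg (by omega : ¬(((j : ℕ) < 1 ∧ 1 ≤ n + (j : ℕ)) ∨ 2 * n + (j : ℕ) < 1)),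
          if_pos (by omega : 1 ≤ (j : ℕ))]
        by_cases hl : (j : ℕ) = n - 1
        · have hjn' : j = sIdx n n := Fin.ext (by simp [sIdx, hl, Nat.mod_eq_of_lt (by omega : n - 1 < n)])
          rw [hjn']
          have h1 := hxlast
          rw [Set.mem_Icc] at h1 ⊢
          exact ⟨h1.1, le_trans h1.2 (hθp _)⟩
        · exact hxmid j
            (fun h => h0 (by rw [h]; simp [sIdx]))
            (fun h => hl (by rw [h]; simp [sIdx, Nat.mod_eq_of_lt (by omega : n - 1 < n)]))
    | succ m ih =>
      intro hm
      rw [List.range_succ, List.foldl_append, List.foldl_cons, List.foldl_nil]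
      obtain ⟨h1, h2⟩ := ih (by omega)
      exact step_mem hn γ φm φp θp hγ hφ hθp (by omega : 2 ≤ m + 2)
        (by omega : m + 2 ≤ 2 * n + 1) _ h2
  obtain ⟨hz, hmem⟩ := main (2 * n) le_rfl
  have hfold : poincare n γ φm φp x =
      (List.range (2 * n)).foldl (fun y k => transMap n γ φm φp (k + 2) y) x := rfl
  have hs1 : sIdx n (2 * n + 1) = sIdx n 1 := by
    apply Fin.ext
    show (2 * n + 1 - 1) % n = (1 - 1) % n
    have h3 : 2 * n + 1 - 1 = 2 * n := rfl
    rw [h3, Nat.mul_mod_left, Nat.zero_mod]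
  have hs1v : ((sIdx n 1 : Fin n) : ℕ) = 0 := by
    show (1 - 1) % n = 0
    rw [Nat.zero_mod]
  constructor
  · rw [hfold, ← hs1]
    exact hz
  · intro j
    constructor
    · intro hjlt
      rw [hs1v] at hjlt
      omega
    · intro hjgt
      rw [hs1v] at hjgt
      have hjn : (j : ℕ) < n := j.isLt
      have hm := hmem j
      unfold Ival at hm
      rw [if_neg (by omega :
        ¬(((j : ℕ) < 2 * n + 1 ∧ 2 * n + 1 ≤ n + (j : ℕ)) ∨ 2 * n + (j : ℕ) < 2 * n + 1)),
        if_neg (by omega : ¬(2 * n + 1 ≤ (j : ℕ)))] at hm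
      rw [if_pos]
      · rw [hfold]; exact hm
      · show (1 - 1) % (2 * n) < n
        rw [Nat.zero_mod]
        omega
end

section
/- Let A be a real n × n matrix such that every entry of A − Id is positive. Then the spectral radius of A is strictly greater than 1; in fact A has a real eigenvalue strictly greater than 1, equal to its spectral radius. -/
open Filter Topology

attribute [local instance] Matrix.linftyOpNormedRing Matrix.linftyOpNormedAlgebra
  Matrix.linftyOpNormedSpace

/-- The `L∞` operator norm of a matrix is unchanged by mapping entries along `Complex.ofReal`. -/
lemma pf_norm_map_ofReal {n : ℕ} (M : Matrix (Fin n) (Fin n) ℝ) :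
    ‖M.map Complex.ofReal‖ = ‖M‖ := by
  rw [Matrix.linfty_opNorm_def, Matrix.linfty_opNorm_def]
  congr 1
  apply Finset.sup_congr rfl
  intro i _
  apply Finset.sum_congr rfl
  intro j _
  simp [Matrix.map_apply, Complex.nnnorm_real]

/-- Entrywise-nonnegative matrices give monotone `mulVec`. -/
lemma pf_mulVec_mono {n : ℕ} (A : Matrix (Fin n) (Fin n) ℝ) (hApos : ∀ i j, 0 ≤ A i j)
    {u v : Fin n → ℝ} (huv : ∀ j, u j ≤ v j) (i : Fin n) :
    A.mulVec u i ≤ A.mulVec v i := by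
  simp only [Matrix.mulVec, dotProduct]
  exact Finset.sum_le_sum fun j _ => mul_le_mul_of_nonneg_left (huv j) (hApos i j)

/-- Collatz–Wielandt style lower bound: if `A *ᵥ z ≥ s • z` entrywise for a positive vector `z`
and `s > 0`, and `ρ` bounds the moduli of all complex eigenvalues of `A`, then `s ≤ ρ`. -/
lemma pf_collatz_wielandt {n : ℕ} (hn : 0 < n) (A : Matrix (Fin n) (Fin n) ℝ)
    (hApos : ∀ i j, 0 < A i j) (z : Fin n → ℝ) (hz : ∀ i, 0 < z i)
    (s : ℝ) (hs : 0 < s) (hsz : ∀ i, s * z i ≤ A.mulVec z i)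
    (ρ : ℝ) (hρ0 : 0 ≤ ρ)
    (hρ : ∀ μ : ℂ, μ ∈ spectrum ℂ (A.map Complex.ofReal) → ‖μ‖ ≤ ρ) : s ≤ ρ := by
  haveI : Nonempty (Fin n) := ⟨⟨0, hn⟩⟩
  set B := A.map Complex.ofReal with hB
  haveI : CompleteSpace (Matrix (Fin n) (Fin n) ℂ) := FiniteDimensional.complete ℂ _
  -- iterate: (A ^ k) *ᵥ z ≥ s ^ k • z
  have hiter : ∀ k : ℕ, ∀ i, s ^ k * z i ≤ (A ^ k).mulVec z i := by
    intro k
    induction k with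
    | zero =>
      intro i
      simp only [pow_zero, Matrix.one_mulVec, one_mul]
      exact le_refl _
    | succ k ih =>
      intro i
      have h1 : (A ^ (k + 1)).mulVec z = A.mulVec ((A ^ k).mulVec z) := by
        rw [pow_succ', ← Matrix.mulVec_mulVec]
      rw [h1]
      have hz' : ∀ j, s ^ k * z j ≤ (A ^ k).mulVec z j := ih
      have hmono := pf_mulVec_mono A (fun i j => (hApos i j).le) hz' i
      have h2 : A.mulVec (fun j => s ^ k * z j) i = s ^ k * A.mulVec z i := by
        simp only [Matrix.mulVec, dotProduct, Finset.mul_sum]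
        exact Finset.sum_congr rfl fun j _ => by ring
      calc s ^ (k + 1) * z i = s ^ k * (s * z i) := by ring
        _ ≤ s ^ k * A.mulVec z i :=
            mul_le_mul_of_nonneg_left (hsz i) (pow_nonneg hs.le k)
        _ = A.mulVec (fun j => s ^ k * z j) i := h2.symm
        _ ≤ A.mulVec ((A ^ k).mulVec z) i := hmono
  -- norm lower bound on powers
  set i0 : Fin n := ⟨0, hn⟩
  have hznorm : 0 < ‖z‖ := by
    have := hz i0
    have h1 : z i0 ≤ ‖z i0‖ := le_abs_self _
    have h2 : ‖z i0‖ ≤ ‖z‖ := norm_le_pi_norm z i0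
    linarith
  have hpow : ∀ k : ℕ, s ^ k * (z i0 / ‖z‖) ≤ ‖A ^ k‖ := by
    intro k
    have h1 : s ^ k * z i0 ≤ (A ^ k).mulVec z i0 := hiter k i0
    have h2 : (A ^ k).mulVec z i0 ≤ ‖(A ^ k).mulVec z‖ := by
      refine (le_abs_self _).trans ?_
      rw [← Real.norm_eq_abs]
      exact norm_le_pi_norm _ i0
    have h3 : ‖(A ^ k).mulVec z‖ ≤ ‖A ^ k‖ * ‖z‖ := Matrix.linfty_opNorm_mulVec _ _
    have h4 : s ^ k * z i0 ≤ ‖A ^ k‖ * ‖z‖ := le_trans h1 (le_trans h2 h3)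
    rw [show s ^ k * (z i0 / ‖z‖) = s ^ k * z i0 / ‖z‖ by ring, div_le_iff₀ hznorm]
    linarith
  -- Gelfand's formula
  have hgel := spectrum.pow_norm_pow_one_div_tendsto_nhds_spectralRadius B
  have hBpow : ∀ k : ℕ, ‖B ^ k‖ = ‖A ^ k‖ := by
    intro k
    have : B ^ k = (A ^ k).map Complex.ofReal := by
      rw [hB]
      have : A.map Complex.ofReal = Complex.ofRealHom.mapMatrix A := rfl
      rw [this, ← map_pow]
      rfl
    rw [this, pf_norm_map_ofReal]
  set c : ℝ := z i0 / ‖z‖ with hc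
  have hcpos : 0 < c := div_pos (hz i0) hznorm
  -- the comparison sequence tends to s
  have hcomp : Tendsto (fun k : ℕ => s * c ^ (1 / (k : ℝ))) atTop (𝓝 s) := by
    have h1 : Tendsto (fun k : ℕ => c ^ (1 / (k : ℝ))) atTop (𝓝 1) := by
      have hlog : Tendsto (fun k : ℕ => Real.log c * (1 / (k : ℝ))) atTop (𝓝 0) := by
        have := tendsto_one_div_atTop_nhds_zero_nat (𝕜 := ℝ)
        simpa using this.const_mul (Real.log c)
      have := (Real.continuous_exp.tendsto 0).comp hlog
      simp only [Real.exp_zero] at this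
      refine this.congr fun k => ?_
      rw [Function.comp_apply, ← Real.exp_log hcpos, ← Real.exp_mul, Real.exp_log hcpos]
    have := h1.const_mul s
    simpa using this
  have hineq : ∀ k : ℕ, 1 ≤ k →
      s * c ^ (1 / (k : ℝ)) ≤ ‖B ^ k‖ ^ (1 / (k : ℝ)) := by
    intro k hk
    have hk0 : 0 < (k : ℝ) := by exact_mod_cast hk
    have hbase : s ^ k * c ≤ ‖B ^ k‖ := by rw [hBpow]; exact hpow k
    have hsc : 0 ≤ s ^ k * c := le_of_lt (mul_pos (pow_pos hs k) hcpos)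
    have := Real.rpow_le_rpow hsc hbase (by positivity : (0:ℝ) ≤ 1 / (k : ℝ))
    calc s * c ^ (1 / (k : ℝ)) = (s ^ k * c) ^ (1 / (k : ℝ)) := by
          rw [Real.mul_rpow (le_of_lt (pow_pos hs k)) hcpos.le]
          congr 1
          rw [← Real.rpow_natCast s k, ← Real.rpow_mul hs.le]
          rw [mul_one_div, div_self (ne_of_gt hk0), Real.rpow_one]
      _ ≤ ‖B ^ k‖ ^ (1 / (k : ℝ)) := this
  -- spectral radius bounded by ρ
  have hrad_le : spectralRadius ℂ B ≤ ENNReal.ofReal ρ := by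
    rw [spectralRadius]
    refine iSup₂_le fun μ hμ => ?_
    have := hρ μ hμ
    rw [← enorm_eq_nnnorm, ← ofReal_norm]
    exact ENNReal.ofReal_le_ofReal this
  -- pass to the limit
  have hlim : ENNReal.ofReal s ≤ spectralRadius ℂ B := by
    have hcomp' : Tendsto (fun k : ℕ => ENNReal.ofReal (s * c ^ (1 / (k : ℝ)))) atTop
        (𝓝 (ENNReal.ofReal s)) := (ENNReal.continuous_ofReal.tendsto s).comp hcomp
    refine le_of_tendsto_of_tendsto hcomp' hgel ?_
    filter_upwards [eventually_ge_atTop 1] with k hk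
    exact ENNReal.ofReal_le_ofReal (hineq k hk)
  have := hlim.trans hrad_le
  rwa [ENNReal.ofReal_le_ofReal_iff hρ0] at this

/-- **Perron–Frobenius corollary.** If `A` is a real `n × n` matrix (`n ≥ 1`) such that every
entry of `A − Id` is positive, then `A` has a real eigenvalue `t > 1` which equals its
spectral radius: every complex eigenvalue `μ` of `A` satisfies `‖μ‖ ≤ t`.  In particular the
spectral radius of `A` is strictly greater than `1`. -/
theorem spectral_radius_gt_one_of_sub_id_pos
    (n : ℕ) (hn : 0 < n) (A : Matrix (Fin n) (Fin n) ℝ)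
    (hA : ∀ i j, 0 < (A - 1) i j) :
    ∃ t : ℝ, 1 < t ∧ t ∈ spectrum ℝ A ∧
      ∀ μ : ℂ, μ ∈ spectrum ℂ (A.map Complex.ofReal) → ‖μ‖ ≤ t := by
  haveI : Nonempty (Fin n) := ⟨⟨0, hn⟩⟩
  haveI : CompleteSpace (Matrix (Fin n) (Fin n) ℂ) := FiniteDimensional.complete ℂ _
  set B := A.map Complex.ofReal with hB
  -- A is entrywise positive, with diagonal entries > 1
  have hApos : ∀ i j, 0 < A i j := by
    intro i j
    have := hA i j
    rw [Matrix.sub_apply, Matrix.one_apply] at this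
    split_ifs at this with h <;> linarith
  have hAdiag : ∀ i, 1 < A i i := by
    intro i
    have := hA i i
    rw [Matrix.sub_apply, Matrix.one_apply_eq] at this
    linarith
  -- the complex spectrum is nonempty and finite; pick an element of maximal modulus
  have hne : (spectrum ℂ B).Nonempty := spectrum.nonempty B
  obtain ⟨μ₀, hμ₀mem, hμ₀max⟩ :=
    Set.exists_max_image (spectrum ℂ B) (fun μ => ‖μ‖) (B.finite_spectrum) hne
  set ρ : ℝ := ‖μ₀‖ with hρdef
  have hρ0 : 0 ≤ ρ := norm_nonneg _
  -- eigenvector for μ₀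
  have hμ₀' : μ₀ ∈ spectrum ℂ (Matrix.toLinAlgEquiv' B) := by
    rwa [AlgEquiv.spectrum_eq]
  have hev : Module.End.HasEigenvalue (Matrix.toLin' B) μ₀ := by
    rw [Module.End.hasEigenvalue_iff_mem_spectrum]
    exact hμ₀'
  obtain ⟨x, hx⟩ := hev.exists_hasEigenvector
  have hxeq : B.mulVec x = μ₀ • x := by
    have := hx.apply_eq_smul
    rwa [Matrix.toLin'_apply] at this
  have hxne : x ≠ 0 := hx.2
  -- the vector of moduli
  set y : Fin n → ℝ := fun i => ‖x i‖ with hy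
  have hy0 : ∀ i, 0 ≤ y i := fun i => norm_nonneg _
  obtain ⟨j1, hj1⟩ : ∃ j, 0 < y j := by
    by_contra h
    push_neg at h
    apply hxne
    funext i
    exact norm_eq_zero.mp (le_antisymm (h i) (hy0 i))
  -- key inequality : ρ • y ≤ A *ᵥ y entrywise
  have hle : ∀ i, ρ * y i ≤ A.mulVec y i := by
    intro i
    have h1 : ‖(B.mulVec x) i‖ = ρ * y i := by
      rw [hxeq]
      simp [hy, norm_smul, hρdef]
    have h2 : ‖(B.mulVec x) i‖ ≤ A.mulVec y i := by
      rw [Matrix.mulVec, dotProduct]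
      refine (norm_sum_le _ _).trans ?_
      rw [Matrix.mulVec, dotProduct]
      refine Finset.sum_le_sum fun j _ => ?_
      rw [norm_mul]
      have : ‖B i j‖ = A i j := by
        rw [hB]
        simp [Matrix.map_apply, Complex.norm_real, abs_of_pos (hApos i j)]
      rw [this]
    linarith
  -- positivity of A *ᵥ v for nonneg nonzero v
  have hmul_pos : ∀ (v : Fin n → ℝ), (∀ j, 0 ≤ v j) → (∃ j, 0 < v j) →
      ∀ i, 0 < A.mulVec v i := by
    rintro v hv ⟨j0, hj0⟩ i
    rw [Matrix.mulVec, dotProduct]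
    refine Finset.sum_pos' (fun j _ => mul_nonneg (hApos i j).le (hv j)) ?_
    exact ⟨j0, Finset.mem_univ _, mul_pos (hApos i j0) hj0⟩
  -- equality : A *ᵥ y = ρ • y
  have heq : ∀ i, A.mulVec y i = ρ * y i := by
    by_contra h
    push_neg at h
    obtain ⟨i0, hi0⟩ := h
    set w : Fin n → ℝ := fun i => A.mulVec y i - ρ * y i with hw
    have hw0 : ∀ i, 0 ≤ w i := fun i => by simp [hw]; linarith [hle i]
    have hwi0 : 0 < w i0 := by
      have := hle i0
      simp only [hw]
      rcases lt_or_eq_of_le this with h' | h'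
      · linarith
      · exact absurd h'.symm hi0
    set z : Fin n → ℝ := A.mulVec y with hz
    have hzpos : ∀ i, 0 < z i := hmul_pos y hy0 ⟨j1, hj1⟩
    have hAw : ∀ i, 0 < A.mulVec w i := hmul_pos w hw0 ⟨i0, hwi0⟩
    have hAz : ∀ i, A.mulVec z i = ρ * z i + A.mulVec w i := by
      intro i
      have : z = (fun j => ρ * y j + w j) := by
        funext j
        simp [hw, hz]
      conv_lhs => rw [this]
      have : A.mulVec (fun j => ρ * y j + w j) i
          = ρ * A.mulVec y i + A.mulVec w i := by
        simp only [Matrix.mulVec, dotProduct, Finset.mul_sum, ← Finset.sum_add_distrib]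
        exact Finset.sum_congr rfl fun j _ => by ring
      rw [this, hz]
    -- a uniform gap
    set δ : ℝ := Finset.univ.inf' (Finset.univ_nonempty) (fun i => A.mulVec w i / z i) with hδ
    have hδpos : 0 < δ := by
      rw [hδ, Finset.lt_inf'_iff]
      exact fun i _ => div_pos (hAw i) (hzpos i)
    have hδle : ∀ i, δ * z i ≤ A.mulVec w i := by
      intro i
      have : δ ≤ A.mulVec w i / z i := Finset.inf'_le _ (Finset.mem_univ i)
      calc δ * z i ≤ (A.mulVec w i / z i) * z i :=
            mul_le_mul_of_nonneg_right this (hzpos i).le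
        _ = A.mulVec w i := div_mul_cancel₀ _ (hzpos i).ne'
    have hkey : ∀ i, (ρ + δ) * z i ≤ A.mulVec z i := by
      intro i
      rw [hAz i]
      have := hδle i
      ring_nf
      nlinarith [hδle i]
    have := pf_collatz_wielandt hn A hApos z hzpos (ρ + δ)
      (by linarith) hkey ρ hρ0 (fun μ hμ => hμ₀max μ hμ)
    linarith
  -- ρ is a real eigenvalue
  have hAy : A.mulVec y = ρ • y := by
    funext i
    simp [heq i]
  have hρ_mem : ρ ∈ spectrum ℝ A := by
    have hyz : y ≠ 0 := fun h => by
      have := congrFun h j1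
      simp only [Pi.zero_apply] at this
      linarith
    have hev : Module.End.HasEigenvalue (Matrix.toLin' A) ρ := by
      apply Module.End.hasEigenvalue_of_hasEigenvector (x := y)
      refine ⟨Module.End.mem_eigenspace_iff.mpr ?_, hyz⟩
      rw [Matrix.toLin'_apply, hAy]
    have := Module.End.hasEigenvalue_iff_mem_spectrum.mp hev
    rwa [← AlgEquiv.spectrum_eq Matrix.toLinAlgEquiv' A]
  -- ρ > 1
  have hρ1 : 1 < ρ := by
    have h1 : A j1 j1 * y j1 ≤ A.mulVec y j1 := by
      rw [Matrix.mulVec, dotProduct]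
      exact Finset.single_le_sum (f := fun j => A j1 j * y j)
        (fun j _ => mul_nonneg (hApos j1 j).le (hy0 j)) (Finset.mem_univ j1)
    have h2 : 1 * y j1 < A j1 j1 * y j1 :=
      mul_lt_mul_of_pos_right (hAdiag j1) hj1
    rw [heq j1] at h1
    have : 1 * y j1 < ρ * y j1 := lt_of_lt_of_le h2 h1
    exact lt_of_mul_lt_mul_right this (hy0 j1)
  exact ⟨ρ, hρ1, hρ_mem, fun μ hμ => hμ₀max μ hμ⟩
end
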